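/- arXiv:2203.04475 — 10 statements merged into one kernel-verified Lean document; each statement's English description precedes it below -/
import Mathlib

section
/- Let γ ≥ 1 and 0 < P⁺ < P⁻. The function f : (0,∞) → ℝ defined by f(P) = P^γ + (P⁻P⁺/P)·((P⁺)^γ − (P⁻)^γ)/(P⁺ − P⁻) − ((P⁺)^{γ+1} − (P⁻)^{γ+1})/(P⁺ − P⁻) satisfies f(P⁺) = f(P⁻) = 0, f''(P) > 0 for every P > 0, and P⁺ and P⁻ are the only zeros of f in (0,∞). -/
/-!
With `C = P⁻P⁺((P⁺)^γ − (P⁻)^γ)/(P⁺ − P⁻) > 0` and `B` the constant term, `f(P) = P^γ + C/P − B`,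
so `f''(P) = γ(γ − 1)P^(γ−2) + 2C/P³ > 0`. The constants are chosen so that `f` vanishes at `P⁺`
and `P⁻`, and a strictly convex function takes no value three times.
-/

open Set

theorem StrictConvexOn.eq_or_eq_of_apply_eq {s : Set ℝ} {f : ℝ → ℝ}
    (hf : StrictConvexOn ℝ s f)
    {a b x : ℝ} (ha : a ∈ s) (hb : b ∈ s) (hx : x ∈ s) (hab : a < b)
    (hfa : f a = f x) (hfb : f b = f x) : x = a ∨ x = b := by
  have lt_max : ∀ {u v w}, u ∈ s → w ∈ s → u < v → v < w → f v < max (f u) (f w) :=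
    fun hu hw huv hvw => hf.lt_on_openSegment hu hw (huv.trans hvw).ne
      (by rw [openSegment_eq_Ioo (huv.trans hvw)]; exact ⟨huv, hvw⟩)
  by_contra! hne
  rcases lt_or_gt_of_ne hne.1 with hxa | hax
  · simpa [hfa, hfb] using lt_max hx hb hxa hab
  rcases lt_or_gt_of_ne hne.2 with hxb | hbx
  · simpa [hfa, hfb] using lt_max ha hb hax hxb
  · simpa [hfa, hfb] using lt_max ha hx hab hbx

section PowAddInv

variable {γ C : ℝ} (B : ℝ) {x : ℝ}

theorem hasDerivAt_rpow_add_mul_inv_sub (hx : 0 < x) :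
    HasDerivAt (fun P : ℝ => P ^ γ + C * P⁻¹ - B)
      (γ * x ^ (γ - 1) - C * (x ^ 2)⁻¹) x := by
  have hpow := Real.hasDerivAt_rpow_const (p := γ) (Or.inl hx.ne')
  have hinv := (hasDerivAt_inv hx.ne').const_mul C
  exact ((hpow.add hinv).sub_const B).congr_deriv (by ring)

theorem hasDerivAt_deriv_rpow_add_mul_inv_sub (hx : 0 < x) :
    HasDerivAt (deriv fun P : ℝ => P ^ γ + C * P⁻¹ - B)
      (γ * (γ - 1) * x ^ (γ - 2) + 2 * C * (x ^ 3)⁻¹) x := by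
  have hderiv : (deriv fun P : ℝ => P ^ γ + C * P⁻¹ - B)
      =ᶠ[nhds x] fun P => γ * P ^ (γ - 1) - C * (P ^ 2)⁻¹ :=
    Filter.eventuallyEq_of_mem (isOpen_Ioi.mem_nhds hx) fun y hy =>
      (hasDerivAt_rpow_add_mul_inv_sub B hy).deriv
  have hpow := (Real.hasDerivAt_rpow_const (p := γ - 1) (Or.inl hx.ne')).const_mul γ
  have hinv := ((hasDerivAt_pow 2 x).inv (pow_ne_zero 2 hx.ne')).const_mul C
  refine ((hpow.sub hinv).congr_of_eventuallyEq hderiv).congr_deriv ?_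
  rw [show γ - 2 = γ - 1 - 1 by ring]
  field_simp
  ring

theorem deriv_deriv_rpow_add_mul_inv_sub_pos (hγ : 1 ≤ γ) (hC : 0 < C) (hx : 0 < x) :
    0 < deriv (deriv fun P : ℝ => P ^ γ + C * P⁻¹ - B) x := by
  rw [(hasDerivAt_deriv_rpow_add_mul_inv_sub B hx).deriv]
  have hγ' : 0 ≤ γ - 1 := by linarith
  have := Real.rpow_pos_of_pos hx (γ - 2)
  positivity

theorem strictConvexOn_rpow_add_mul_inv_sub (hγ : 1 ≤ γ) (hC : 0 < C) :
    StrictConvexOn ℝ (Ioi 0) fun P : ℝ => P ^ γ + C * P⁻¹ - B := by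
  refine strictConvexOn_of_deriv2_pos (convex_Ioi 0) (fun y hy => ?_) fun y hy => ?_
  · exact (hasDerivAt_rpow_add_mul_inv_sub B hy).continuousAt.continuousWithinAt
  · rw [interior_Ioi] at hy
    exact deriv_deriv_rpow_add_mul_inv_sub_pos B hγ hC hy

end PowAddInv

theorem rpow_add_mul_div_sub_chord_eq_zero {γ a b P : ℝ} (ha : 0 < a) (hb : 0 < b)
    (hab : a ≠ b) (hP : P = a ∨ P = b) :
    P ^ γ + (b * a / P) * ((a ^ γ - b ^ γ) / (a - b)) - (a ^ (γ + 1) - b ^ (γ + 1)) / (a - b)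
      = 0 := by
  have hab' : a - b ≠ 0 := sub_ne_zero.mpr hab
  rw [Real.rpow_add_one ha.ne', Real.rpow_add_one hb.ne']
  rcases hP with rfl | rfl <;>
  · field_simp
    ring

/-- For `γ ≥ 1` and `0 < P⁺ < P⁻`, the function
`f(P) = P^γ + (P⁻P⁺/P)·((P⁺)^γ − (P⁻)^γ)/(P⁺ − P⁻) − ((P⁺)^{γ+1} − (P⁻)^{γ+1})/(P⁺ − P⁻)`
satisfies `f(P⁺) = f(P⁻) = 0`, `f'' > 0` on `(0,∞)`, and `P⁺`, `P⁻` are the only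
zeros of `f` in `(0,∞)`. -/
theorem statement_0 (γ Pp Pm : ℝ) (hγ : 1 ≤ γ) (hPp : 0 < Pp) (hlt : Pp < Pm)
    (f : ℝ → ℝ)
    (hf : ∀ P : ℝ, f P =
      P ^ γ + (Pm * Pp / P) * ((Pp ^ γ - Pm ^ γ) / (Pp - Pm))
        - (Pp ^ (γ + 1) - Pm ^ (γ + 1)) / (Pp - Pm)) :
    f Pp = 0 ∧ f Pm = 0 ∧
    (∀ P : ℝ, 0 < P → 0 < deriv (deriv f) P) ∧
    (∀ P : ℝ, 0 < P → f P = 0 → P = Pp ∨ P = Pm) := by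
  have hPm : 0 < Pm := hPp.trans hlt
  set C := Pm * Pp * ((Pp ^ γ - Pm ^ γ) / (Pp - Pm))
  set B := (Pp ^ (γ + 1) - Pm ^ (γ + 1)) / (Pp - Pm)
  have hC : 0 < C := by
    have hpow : Pp ^ γ < Pm ^ γ := Real.rpow_lt_rpow hPp.le hlt (by linarith)
    have := div_pos_of_neg_of_neg (sub_neg.mpr hpow) (sub_neg.mpr hlt)
    positivity
  have hf_eq : f = fun P => P ^ γ + C * P⁻¹ - B := funext fun P => by rw [hf]; ring
  have hfPp : f Pp = 0 :=
    (hf Pp).trans (rpow_add_mul_div_sub_chord_eq_zero hPp hPm hlt.ne (.inl rfl))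
  have hfPm : f Pm = 0 :=
    (hf Pm).trans (rpow_add_mul_div_sub_chord_eq_zero hPp hPm hlt.ne (.inr rfl))
  refine ⟨hfPp, hfPm, fun P hP => ?_, fun P hP hfP => ?_⟩
  · rw [hf_eq]; exact deriv_deriv_rpow_add_mul_inv_sub_pos B hγ hC hP
  · have hconv := strictConvexOn_rpow_add_mul_inv_sub B hγ hC
    rw [← hf_eq] at hconv
    exact hconv.eq_or_eq_of_apply_eq hPp hPm hP hlt (hfPp.trans hfP.symm) (hfPm.trans hfP.symm)
end

section
/- Let γ ≥ 1 and 0 < P⁺ < P⁻. The equation f'(P) = 0 has a unique root in (0,∞), given explicitly by P₀ = (P⁻P⁺·((P⁺)^γ − (P⁻)^γ)/(γ(P⁺ − P⁻)))^{1/(γ+1)}. Moreover, if P⁻ > 0 is fixed and P⁺ = P⁻ − ε, then there exist ε₀ > 0 and C > 0 such that for all ε ∈ (0, ε₀) one has |P₀ − (P⁻ − ε/2)| ≤ Cε². -/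
/-!
Since `f'(P) = γ P^(γ-1) - P⁻P⁺A / P²` with `A = ((P⁺)^γ - (P⁻)^γ)/(P⁺ - P⁻) > 0`, the critical
points are the positive solutions of `P^(γ+1) = P⁻P⁺A/γ`, and there is exactly one.

For the asymptotics put `b = P⁻ - ε/2` and `h = ε/2`, so that `P⁻ = b + h`, `P⁺ = b - h` and
`P₀^(γ+1) = (b² - h²) · ((b+h)^γ - (b-h)^γ) / (2γh)`. The central difference quotient of `x^γ`
equals `γ b^(γ-1) + O(h²)`, hence `P₀^(γ+1) = b^(γ+1) + O(ε²)`, and the inequality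
`c^(p-1) |a - c| ≤ |a^p - c^p|` (for `p ≥ 1`) turns this into `|P₀ - b| = O(ε²)`.
-/

open Real Set

-- `P₀ ^ (γ + 1)`, with `Pm = P⁻`, `Pp = P⁺` and `P₀` the critical point of `f`.
noncomputable def criticalPointPow (γ Pm Pp : ℝ) : ℝ :=
  Pm * Pp * ((Pp ^ γ - Pm ^ γ) / (γ * (Pp - Pm)))

lemma criticalPointPow_pos {γ Pm Pp : ℝ} (hγ : 0 < γ) (hPp : 0 < Pp) (hlt : Pp < Pm) :
    0 < criticalPointPow γ Pm Pp := by
  have hpow : Pp ^ γ < Pm ^ γ := rpow_lt_rpow hPp.le hlt hγ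
  exact mul_pos (mul_pos (hPp.trans hlt) hPp)
    (div_pos_of_neg_of_neg (by linarith) (mul_neg_of_pos_of_neg hγ (by linarith)))

lemma hasDerivAt_rpow_add_div_mul_sub (γ c A B : ℝ) {P : ℝ} (hP : 0 < P) :
    HasDerivAt (fun P => P ^ γ + c / P * A - B) (γ * P ^ (γ - 1) - c * A / P ^ 2) P := by
  have hinv : HasDerivAt (fun P => c / P * A) (c * -(P ^ 2)⁻¹ * A) P := by
    simpa only [div_eq_mul_inv] using ((hasDerivAt_inv hP.ne').const_mul c).mul_const A
  exact (((hasDerivAt_rpow_const (Or.inl hP.ne')).add hinv).sub_const B).congr_deriv (by ring)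

lemma rpow_sub_one_sub_div_sq_eq_zero_iff {γ c P : ℝ} (hγ : γ ≠ 0) (hP : 0 < P) :
    γ * P ^ (γ - 1) - c / P ^ 2 = 0 ↔ P ^ (γ + 1) = c / γ := by
  have hsplit : P ^ (γ + 1) = P ^ (γ - 1) * P ^ 2 := by
    rw [← rpow_two, ← rpow_add hP]; ring_nf
  rw [hsplit, sub_eq_zero, eq_div_iff (by positivity), eq_div_iff hγ]
  constructor <;> intro h <;> linarith

lemma deriv_eq_zero_iff_eq_criticalPoint {γ Pm Pp : ℝ} (hγ : 0 < γ) (hPp : 0 < Pp)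
    (hlt : Pp < Pm) {f : ℝ → ℝ} (hf : ∀ P : ℝ, f P =
      P ^ γ + (Pm * Pp / P) * ((Pp ^ γ - Pm ^ γ) / (Pp - Pm))
        - (Pp ^ (γ + 1) - Pm ^ (γ + 1)) / (Pp - Pm)) {P : ℝ} (hP : 0 < P) :
    deriv f P = 0 ↔ P = criticalPointPow γ Pm Pp ^ (1 / (γ + 1)) := by
  have hK : Pm * Pp * ((Pp ^ γ - Pm ^ γ) / (Pp - Pm)) / γ = criticalPointPow γ Pm Pp := by
    rw [criticalPointPow, mul_comm γ, ← div_div, mul_div_assoc]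
  rw [funext hf, (hasDerivAt_rpow_add_div_mul_sub _ _ _ _ hP).deriv,
    rpow_sub_one_sub_div_sq_eq_zero_iff hγ.ne' hP, hK, eq_comm (a := P), one_div,
    rpow_inv_eq (criticalPointPow_pos hγ hPp hlt).le hP.le (by positivity), eq_comm]

lemma abs_le_mul_pow_succ_of_abs_deriv_le {g g' : ℝ → ℝ} {C a : ℝ} {n : ℕ} (hC : 0 ≤ C)
    (hg0 : g 0 = 0) (hg : ∀ x ∈ Icc 0 a, HasDerivAt g (g' x) x)
    (hbound : ∀ x ∈ Icc 0 a, |g' x| ≤ C * x ^ n) :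
    ∀ x ∈ Icc 0 a, |g x| ≤ C * x ^ (n + 1) := by
  intro x hx
  have hsub : Icc 0 x ⊆ Icc 0 a := Icc_subset_Icc_right hx.2
  have h := norm_image_sub_le_of_norm_deriv_le_segment' (C := C * x ^ n)
    (fun y hy => (hg y (hsub hy)).hasDerivWithinAt)
    (fun y hy => (hbound y (hsub (Ico_subset_Icc_self hy))).trans
      (by gcongr; exacts [hy.1, hy.2.le])) x (right_mem_Icc.2 hx.1)
  simpa [hg0, pow_succ, mul_assoc] using h

lemma abs_central_difference_le {G G' G'' : ℝ → ℝ} {L b h : ℝ} (hL : 0 ≤ L)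
    (hG : ∀ x ∈ Icc (b - h) (b + h), HasDerivAt G (G' x) x)
    (hG' : ∀ x ∈ Icc (b - h) (b + h), HasDerivAt G' (G'' x) x)
    (hG'' : ∀ x ∈ Icc (b - h) (b + h), |G'' x - G'' b| ≤ L * |x - b|) (hh : 0 ≤ h) :
    |G (b + h) - G (b - h) - 2 * h * G' b| ≤ 2 * L * h ^ 3 := by
  have mem : ∀ t ∈ Icc 0 h, b + t ∈ Icc (b - h) (b + h) ∧ b - t ∈ Icc (b - h) (b + h) :=
    fun t ht => ⟨⟨by linarith [ht.1], by linarith [ht.2]⟩,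
      ⟨by linarith [ht.2], by linarith [ht.1]⟩⟩
  have hψ : ∀ t ∈ Icc 0 h, |G' (b + t) + G' (b - t) - 2 * G' b| ≤ 2 * L * t ^ (1 + 1) := by
    refine abs_le_mul_pow_succ_of_abs_deriv_le (g' := fun t => G'' (b + t) - G'' (b - t))
      (by positivity) (by simp [two_mul]) (fun t ht => ?_) (fun t ht => ?_)
    · exact ((((hG' _ (mem t ht).1).comp_const_add b t).add
        ((hG' _ (mem t ht).2).comp_const_sub b t)).sub_const (2 * G' b)).congr_deriv (by ring)
    · have h1 := hG'' _ (mem t ht).1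
      have h2 := hG'' _ (mem t ht).2
      rw [add_sub_cancel_left, abs_of_nonneg ht.1] at h1
      rw [sub_sub_cancel_left, abs_neg, abs_of_nonneg ht.1] at h2
      calc |G'' (b + t) - G'' (b - t)| ≤ |G'' (b + t) - G'' b| + |G'' (b - t) - G'' b| := by
            simpa only [abs_sub_comm (G'' b)] using abs_sub_le (G'' (b + t)) (G'' b) (G'' (b - t))
        _ ≤ 2 * L * t ^ 1 := by linarith
  have hφ := abs_le_mul_pow_succ_of_abs_deriv_le
    (g := fun t => G (b + t) - G (b - t) - 2 * t * G' b) (by positivity) (by simp)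
    (fun t ht => ?_) hψ h (right_mem_Icc.2 hh)
  · simpa using hφ
  · exact ((((hG _ (mem t ht).1).comp_const_add b t).sub
      ((hG _ (mem t ht).2).comp_const_sub b t)).sub
      ((hasDerivAt_id t).const_mul 2 |>.mul_const (G' b))).congr_deriv (by ring)

lemma exists_abs_rpow_central_difference_le (p : ℝ) {l u : ℝ} (hl : 0 < l) :
    ∃ L ≥ (0 : ℝ), ∀ b h, 0 ≤ h → l ≤ b - h → b + h ≤ u →
      |(b + h) ^ p - (b - h) ^ p - 2 * h * (p * b ^ (p - 1))| ≤ L * h ^ 3 := by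
  have hsmooth : ContDiffOn ℝ 1 (fun x : ℝ => p * (p - 1) * x ^ (p - 2)) (Icc l u) :=
    fun x hx => (contDiffAt_const.mul
      (contDiffAt_rpow_const_of_ne (hl.trans_le hx.1).ne')).contDiffWithinAt
  obtain ⟨K, hK⟩ := hsmooth.exists_lipschitzOnWith one_ne_zero (convex_Icc l u) isCompact_Icc
  refine ⟨2 * K, by positivity, fun b h hh hlb hbu => ?_⟩
  have sub : Icc (b - h) (b + h) ⊆ Icc l u := Icc_subset_Icc hlb hbu
  have hb : b ∈ Icc l u := sub ⟨by linarith, by linarith⟩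
  refine abs_central_difference_le (L := K) (G := fun x => x ^ p)
    (G' := fun x => p * x ^ (p - 1)) (G'' := fun x => p * (p - 1) * x ^ (p - 2))
    (by positivity) (fun x hx => ?_) (fun x hx => ?_) (fun x hx => ?_) hh
  · exact hasDerivAt_rpow_const (Or.inl (hl.trans_le (sub hx).1).ne')
  · refine ((hasDerivAt_rpow_const (Or.inl (hl.trans_le (sub hx).1).ne')).const_mul p).congr_deriv
      ?_
    ring_nf
  · simpa only [Real.dist_eq] using hK.dist_le_mul x (sub hx) b hb

lemma exists_abs_criticalPointPow_sub_le {γ Pm : ℝ} (hγ : 1 ≤ γ) (hPm : 0 < Pm) :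
    ∃ M, ∀ ε, 0 < ε → ε ≤ Pm / 2 →
      |criticalPointPow γ Pm (Pm - ε) - (Pm - ε / 2) ^ (γ + 1)| ≤ M * ε ^ 2 := by
  obtain ⟨L, hL0, hL⟩ := exists_abs_rpow_central_difference_le γ (half_pos hPm) (u := Pm)
  refine ⟨Pm ^ 2 * L / (8 * γ) + Pm ^ (γ - 1) / 4, fun ε hε hεPm => ?_⟩
  set b := Pm - ε / 2 with hb
  have hb0 : 0 < b := by linarith
  have hE := hL b (ε / 2) (by positivity) (by linarith) (by linarith)
  rw [show b + ε / 2 = Pm by ring, show b - ε / 2 = Pm - ε by ring,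
    show 2 * (ε / 2) = ε by ring] at hE
  set E := Pm ^ γ - (Pm - ε) ^ γ - ε * (γ * b ^ (γ - 1)) with hEdef
  have hsplit : b ^ (γ + 1) = b ^ 2 * b ^ (γ - 1) := by
    rw [← rpow_two, ← rpow_add hb0]; ring_nf
  have hγ0 : 0 < γ := by linarith
  have hid : criticalPointPow γ Pm (Pm - ε) - b ^ (γ + 1) =
      Pm * (Pm - ε) * E / (γ * ε) - ε ^ 2 / 4 * b ^ (γ - 1) := by
    have hε0 : ε ≠ 0 := hε.ne'
    rw [criticalPointPow, hsplit, hEdef, hb, show Pm - ε - Pm = -ε by ring]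
    field_simp
    ring
  have hbpow : b ^ (γ - 1) ≤ Pm ^ (γ - 1) := rpow_le_rpow hb0.le (by linarith) (by linarith)
  have h1 : |Pm * (Pm - ε) * E / (γ * ε)| ≤ Pm ^ 2 * L / (8 * γ) * ε ^ 2 := by
    rw [abs_div, abs_mul, abs_of_pos (by positivity : 0 < γ * ε), div_le_iff₀ (by positivity)]
    calc |Pm * (Pm - ε)| * |E| ≤ Pm ^ 2 * (L * (ε / 2) ^ 3) := by
          gcongr
          rw [abs_of_pos (by nlinarith)]; nlinarith
      _ = Pm ^ 2 * L / (8 * γ) * ε ^ 2 * (γ * ε) := by field_simp; ring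
  have h2 : |ε ^ 2 / 4 * b ^ (γ - 1)| ≤ Pm ^ (γ - 1) / 4 * ε ^ 2 := by
    rw [abs_of_nonneg (by positivity)]; nlinarith
  calc _ = |Pm * (Pm - ε) * E / (γ * ε) - ε ^ 2 / 4 * b ^ (γ - 1)| := by rw [hid]
    _ ≤ _ := abs_sub _ _
    _ ≤ _ := by linarith

lemma rpow_sub_one_mul_abs_sub_le_abs_rpow_sub {a c p : ℝ} (ha : 0 ≤ a) (hc : 0 ≤ c)
    (hp : 1 ≤ p) : c ^ (p - 1) * |a - c| ≤ |a ^ p - c ^ p| := by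
  have hsplit : ∀ x : ℝ, 0 ≤ x → x ^ p = x * x ^ (p - 1) := fun x hx => by
    rw [← rpow_one_add' hx (by linarith), add_sub_cancel]
  rw [hsplit a ha, hsplit c hc]
  rcases le_total a c with hac | hca
  · have := mul_le_mul_of_nonneg_left (rpow_le_rpow ha hac (by linarith : 0 ≤ p - 1)) ha
    have := mul_le_mul_of_nonneg_right hac (rpow_nonneg hc (p - 1))
    rw [abs_of_nonpos (by linarith), abs_of_nonpos (by linarith)]
    linarith
  · have := mul_le_mul_of_nonneg_left (rpow_le_rpow hc hca (by linarith : 0 ≤ p - 1)) ha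
    have := mul_le_mul_of_nonneg_right hca (rpow_nonneg hc (p - 1))
    rw [abs_of_nonneg (by linarith), abs_of_nonneg (by linarith)]
    linarith

lemma exists_abs_criticalPoint_sub_le {γ Pm : ℝ} (hγ : 1 ≤ γ) (hPm : 0 < Pm) :
    ∃ C > (0 : ℝ), ∀ ε, 0 < ε → ε < Pm / 2 →
      |criticalPointPow γ Pm (Pm - ε) ^ (1 / (γ + 1)) - (Pm - ε / 2)| ≤ C * ε ^ 2 := by
  obtain ⟨M, hM⟩ := exists_abs_criticalPointPow_sub_le hγ hPm
  refine ⟨(|M| + 1) / (Pm / 2) ^ γ, by positivity, fun ε hε hεPm => ?_⟩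
  have hK := criticalPointPow_pos (γ := γ) (by linarith) (by linarith) (by linarith : Pm - ε < Pm)
  have hb : Pm / 2 ≤ Pm - ε / 2 := by linarith
  have hcmp := rpow_sub_one_mul_abs_sub_le_abs_rpow_sub (rpow_nonneg hK.le (1 / (γ + 1)))
    (by linarith : 0 ≤ Pm - ε / 2) (by linarith : 1 ≤ γ + 1)
  rw [one_div, rpow_inv_rpow hK.le (by linarith), add_sub_cancel_right, ← one_div] at hcmp
  rw [div_mul_eq_mul_div, le_div_iff₀' (by positivity)]
  calc (Pm / 2) ^ γ * |_| ≤ (Pm - ε / 2) ^ γ * |_| := by gcongr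
    _ ≤ M * ε ^ 2 := hcmp.trans (hM ε hε hεPm.le)
    _ ≤ (|M| + 1) * ε ^ 2 := by gcongr; linarith [le_abs_self M]

/-- `f'(P) = 0` has a unique root in `(0,∞)`, given explicitly by
`P₀ = (P⁻P⁺·((P⁺)^γ − (P⁻)^γ)/(γ(P⁺ − P⁻)))^{1/(γ+1)}`; moreover, for `P⁺ = P⁻ − ε`,
`|P₀ − (P⁻ − ε/2)| ≤ Cε²` for all sufficiently small `ε > 0`. -/
theorem statement_1 (γ Pm : ℝ) (hγ : 1 ≤ γ) (hPm : 0 < Pm) :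
    (∀ Pp : ℝ, 0 < Pp → Pp < Pm → ∀ f : ℝ → ℝ,
      (∀ P : ℝ, f P =
        P ^ γ + (Pm * Pp / P) * ((Pp ^ γ - Pm ^ γ) / (Pp - Pm))
          - (Pp ^ (γ + 1) - Pm ^ (γ + 1)) / (Pp - Pm)) →
      (0 < (Pm * Pp * ((Pp ^ γ - Pm ^ γ) / (γ * (Pp - Pm)))) ^ (1 / (γ + 1)) ∧
        deriv f ((Pm * Pp * ((Pp ^ γ - Pm ^ γ) / (γ * (Pp - Pm)))) ^ (1 / (γ + 1))) = 0 ∧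
        ∀ P : ℝ, 0 < P → deriv f P = 0 →
          P = (Pm * Pp * ((Pp ^ γ - Pm ^ γ) / (γ * (Pp - Pm)))) ^ (1 / (γ + 1)))) ∧
    (∃ ε₀ > (0:ℝ), ∃ C > (0:ℝ), ∀ ε : ℝ, 0 < ε → ε < ε₀ →
      |(Pm * (Pm - ε) * (((Pm - ε) ^ γ - Pm ^ γ) / (γ * ((Pm - ε) - Pm)))) ^ (1 / (γ + 1))
        - (Pm - ε / 2)| ≤ C * ε ^ 2) := by
  have hγ0 : 0 < γ := by linarith
  refine ⟨fun Pp hPp hlt f hf => ?_, Pm / 2, half_pos hPm, exists_abs_criticalPoint_sub_le hγ hPm⟩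
  have hP₀ : 0 < criticalPointPow γ Pm Pp ^ (1 / (γ + 1)) :=
    rpow_pos_of_pos (criticalPointPow_pos hγ0 hPp hlt) _
  exact ⟨hP₀, (deriv_eq_zero_iff_eq_criticalPoint hγ0 hPp hlt hf hP₀).2 rfl,
    fun P hP => (deriv_eq_zero_iff_eq_criticalPoint hγ0 hPp hlt hf hP).1⟩
end

section
/- Let γ ≥ 1, P⁻ > 0, and for 0 < ε < P⁻ set P⁺ = P⁻ − ε and let P₀ = P₀(ε) = (P⁻P⁺·((P⁺)^γ − (P⁻)^γ)/(γ(P⁺ − P⁻)))^{1/(γ+1)} be the unique positive critical point of f. Then there exist ε₀ > 0 and C > 0 such that for all ε ∈ (0, ε₀): |f(P₀(ε)) + (γ(γ+1)/8)(P⁻)^{γ−2}ε²| ≤ Cε³ and |f''(P₀(ε)) − γ(γ+1)(P⁻)^{γ−2}| ≤ Cε. -/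
/-!
Writing `P⁺ = (1 - t) P⁻` with `t = ε / P⁻`, homogeneity turns `P₀^(γ+1)` into `(P⁻)^(γ+1) Q(t)`,
`f(P₀)` into `(P⁻)^γ ((γ+1) Q^(γ/(γ+1)) - D(t))` with `D(t) = (1 - (1 - t)^(γ+1)) / t`, and
`f''(P₀)` into `γ(γ+1) (P⁻)^(γ-2) Q^((γ-2)/(γ+1))`, because at the critical point the coefficient
of `1/P` equals `γ P₀^(γ+1)`. Binomial expansions of `(1 - t)^γ` and `(1 - t)^(γ+1)` to order
`t³` give `Q = 1 - (γ+1)t/2 + (γ²-1)t²/6 + O(t³)`; expanding `Q^(γ/(γ+1))` to second order in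
`Q - 1`, the constant and linear terms of `(γ+1) Q^(γ/(γ+1))` and `D` agree and the quadratic
ones differ by `-γ(γ+1)t²/8`. The binomial remainder estimates `O(uⁿ)` follow by induction on
`n` from the mean value theorem, differentiating `(1 + u)^β` lowers both `β` and `n`.
-/

open Asymptotics Filter Topology Set Polynomial Nat

theorem isBigO_sub_pow_succ_of_hasDerivAt {E : Type*} [NormedAddCommGroup E] [NormedSpace ℝ E]
    {f f' : ℝ → E} {x₀ : ℝ} {n : ℕ} (hf : ∀ᶠ x in 𝓝 x₀, HasDerivAt f (f' x) x)
    (hf' : f' =O[𝓝 x₀] fun x => (x - x₀) ^ n) :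
    (fun x => f x - f x₀) =O[𝓝 x₀] fun x => (x - x₀) ^ (n + 1) := by
  obtain ⟨c, hc, hcf'⟩ := hf'.exists_pos
  obtain ⟨r, hr, hball⟩ := Metric.eventually_nhds_iff_ball.mp (hf.and hcf'.bound)
  refine .of_bound c (Metric.eventually_nhds_iff_ball.mpr ⟨r, hr, fun x hx => ?_⟩)
  have hseg : segment ℝ x₀ x ⊆ Metric.ball x₀ r :=
    (convex_ball x₀ r).segment_subset (Metric.mem_ball_self hr) hx
  have hmvt := (convex_segment x₀ x).norm_image_sub_le_of_norm_hasDerivWithin_le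
    (fun y hy => (hball y (hseg hy)).1.hasDerivWithinAt) (fun y hy => ?_)
    (left_mem_segment ℝ x₀ x) (right_mem_segment ℝ x₀ x) (C := c * ‖x - x₀‖ ^ n)
  · simpa [norm_pow, pow_succ, mul_assoc] using hmvt
  · calc ‖f' y‖ ≤ c * ‖y - x₀‖ ^ n := by simpa using (hball y (hseg hy)).2
      _ ≤ c * ‖x - x₀‖ ^ n := by gcongr; exact norm_sub_le_of_mem_segment hy

noncomputable def binomialTaylor (β : ℝ) (n : ℕ) (u : ℝ) : ℝ :=
  ∑ k ∈ Finset.range n, (descPochhammer ℝ k).eval β / k ! * u ^ k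

theorem binomialTaylor_succ_zero (β : ℝ) (n : ℕ) : binomialTaylor β (n + 1) 0 = 1 := by
  simp [binomialTaylor, Finset.sum_range_succ']

theorem hasDerivAt_binomialTaylor_succ (β : ℝ) (n : ℕ) (u : ℝ) :
    HasDerivAt (binomialTaylor β (n + 1)) (β * binomialTaylor (β - 1) n u) u := by
  have hterm (k : ℕ) :
      HasDerivAt (fun u => (descPochhammer ℝ (k + 1)).eval β / (k + 1)! * u ^ (k + 1))
      (β * ((descPochhammer ℝ k).eval (β - 1) / k ! * u ^ k)) u := by
    refine ((hasDerivAt_pow (k + 1) u).const_mul _).congr_deriv ?_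
    rw [descPochhammer_succ_left, eval_mul, eval_comp]
    push_cast [factorial_succ]
    field_simp
    simp only [eval_X, eval_sub, eval_one]
    ring
  unfold binomialTaylor
  simp only [Finset.sum_range_succ' _ n, pow_zero, Finset.mul_sum]
  exact (HasDerivAt.fun_sum fun k _ => hterm k).add_const _

theorem one_add_rpow_sub_binomialTaylor_isBigO (β : ℝ) (n : ℕ) :
    (fun u => (1 + u) ^ β - binomialTaylor β n u) =O[𝓝 0] fun u => u ^ n := by
  induction n generalizing β with
  | zero =>
    simpa [binomialTaylor] using
      ((continuousAt_const.add continuousAt_id).rpow_const (p := β) (x := (0 : ℝ))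
        (Or.inl (by norm_num))).tendsto.isBigO_one ℝ
  | succ n ih =>
    have hderiv : ∀ᶠ u in 𝓝 (0 : ℝ), HasDerivAt (fun u => (1 + u) ^ β - binomialTaylor β (n + 1) u)
        (β * ((1 + u) ^ (β - 1) - binomialTaylor (β - 1) n u)) u := by
      filter_upwards [Ioi_mem_nhds (show (-1 : ℝ) < 0 by norm_num)] with u hu
      have hpow := ((hasDerivAt_id u).const_add 1).rpow_const (p := β)
        (Or.inl (by simp only [id]; linarith [hu.out]))
      exact (hpow.sub (hasDerivAt_binomialTaylor_succ β n u)).congr_deriv (by simp; ring)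
    simpa [binomialTaylor_succ_zero] using isBigO_sub_pow_succ_of_hasDerivAt hderiv
      (by simpa using (ih (β - 1)).const_mul_left β)

theorem isBigO_div_self_of_pow_succ {f : ℝ → ℝ} {n : ℕ} (h : f =O[𝓝 0] fun t => t ^ (n + 1)) :
    (fun t => f t / t) =O[𝓝[≠] 0] fun t => t ^ n := by
  refine ((h.mono nhdsWithin_le_nhds).mul (isBigO_refl (fun t => t⁻¹) _)).congr' ?_ ?_
  · exact .of_forall fun t => (div_eq_mul_inv _ _).symm
  · filter_upwards [self_mem_nhdsWithin] with t ht
    rw [pow_succ, mul_inv_cancel_right₀ ht]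

theorem one_sub_one_sub_rpow_div_sub_quadratic_isBigO (β : ℝ) :
    (fun t => (1 - (1 - t) ^ β) / t - (β - β * (β - 1) / 2 * t + β * (β - 1) * (β - 2) / 6 * t ^ 2))
      =O[𝓝[≠] 0] fun t => t ^ 3 := by
  have h : (fun t => (1 - t) ^ β - binomialTaylor β 4 (-t)) =O[𝓝 0] fun t => t ^ (3 + 1) := by
    refine ((one_add_rpow_sub_binomialTaylor_isBigO β 4).comp_tendsto
      (by simpa using (continuous_neg (G := ℝ)).tendsto 0)).congr
        (fun t => by simp [sub_eq_add_neg]) (fun t => by simp [Even.neg_pow (by decide : Even 4)])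
  refine (isBigO_div_self_of_pow_succ h).neg_left.congr' ?_ (.rfl)
  filter_upwards [self_mem_nhdsWithin] with t (ht : t ≠ 0)
  simp [binomialTaylor, Finset.sum_range_succ, descPochhammer_succ_right]
  field_simp
  ring

theorem pow_isBigO_pow_nhdsNE_zero {m n : ℕ} (h : n ≤ m) :
    (fun t : ℝ => t ^ m) =O[𝓝[≠] 0] fun t => t ^ n := by
  rcases h.eq_or_lt with rfl | h
  · exact isBigO_refl _ _
  · exact (isLittleO_pow_pow h).isBigO.mono nhdsWithin_le_nhds

/-- `(P₀ / P⁻)^(γ+1)` when `P⁺ = (1 - t) P⁻`. -/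
noncomputable def critPointPow (γ t : ℝ) : ℝ := (1 - t) * ((1 - (1 - t) ^ γ) / (γ * t))

theorem critPointPow_sub_one_sub_quadratic_isBigO {γ : ℝ} (hγ : γ ≠ 0) :
    (fun t => critPointPow γ t - 1 - (-((γ + 1) / 2) * t + (γ ^ 2 - 1) / 6 * t ^ 2))
      =O[𝓝[≠] 0] fun t => t ^ 3 := by
  have hbdd : (fun t : ℝ => (1 - t) / γ) =O[𝓝[≠] 0] fun _ => (1 : ℝ) :=
    ((continuous_const.sub continuous_id).div_const γ).continuousAt.tendsto.isBigO_one ℝ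
      |>.mono nhdsWithin_le_nhds
  refine ((hbdd.mul (one_sub_one_sub_rpow_div_sub_quadratic_isBigO γ)).sub
    (isBigO_const_mul_self ((γ - 1) * (γ - 2) / 6) _ _)).congr (fun t => ?_) (fun t => one_mul _)
  simp only [critPointPow]
  field_simp
  ring

theorem critPointPow_sub_one_sub_linear_isBigO {γ : ℝ} (hγ : γ ≠ 0) :
    (fun t => critPointPow γ t - 1 + (γ + 1) / 2 * t) =O[𝓝[≠] 0] fun t => t ^ 2 :=
  (((critPointPow_sub_one_sub_quadratic_isBigO hγ).trans
    (pow_isBigO_pow_nhdsNE_zero (by norm_num))).add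
    (isBigO_const_mul_self ((γ ^ 2 - 1) / 6) _ _)).congr (fun t => by ring) (fun _ => rfl)

theorem critPointPow_sub_one_isBigO {γ : ℝ} (hγ : γ ≠ 0) :
    (fun t => critPointPow γ t - 1) =O[𝓝[≠] 0] fun t => t := by
  have h := ((critPointPow_sub_one_sub_linear_isBigO hγ).trans
    (pow_isBigO_pow_nhdsNE_zero (by norm_num))).sub
    (isBigO_const_mul_self ((γ + 1) / 2) (fun t : ℝ => t ^ 1) _)
  simpa using h

theorem tendsto_critPointPow {γ : ℝ} (hγ : γ ≠ 0) : Tendsto (critPointPow γ) (𝓝[≠] 0) (𝓝 1) := by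
  have h := (critPointPow_sub_one_isBigO hγ).trans_tendsto
    (tendsto_nhdsWithin_of_tendsto_nhds tendsto_id)
  simpa using h.add_const 1

theorem critPointPow_rpow_sub_one_isBigO {γ : ℝ} (hγ : γ ≠ 0) (β : ℝ) :
    (fun t => critPointPow γ t ^ β - 1) =O[𝓝[≠] 0] fun t => t := by
  have hw : Tendsto (fun t => critPointPow γ t - 1) (𝓝[≠] 0) (𝓝 0) := by
    simpa using (tendsto_critPointPow hγ).sub_const 1
  have h := (one_add_rpow_sub_binomialTaylor_isBigO β 1).comp_tendsto hw
  refine (h.trans ?_).congr (fun t => ?_) (fun _ => rfl)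
  · simpa [Function.comp_def] using critPointPow_sub_one_isBigO hγ
  · simp [binomialTaylor]

theorem critical_value_expansion {γ : ℝ} (hγ₀ : γ ≠ 0) (hγ₁ : γ + 1 ≠ 0) :
    (fun t => (γ + 1) * critPointPow γ t ^ (γ / (γ + 1)) - (1 - (1 - t) ^ (γ + 1)) / t
      + γ * (γ + 1) / 8 * t ^ 2) =O[𝓝[≠] 0] fun t => t ^ 3 := by
  have hw : Tendsto (fun t => critPointPow γ t - 1) (𝓝[≠] 0) (𝓝 0) := by
    simpa using (tendsto_critPointPow hγ₀).sub_const 1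
  have hpow : (fun t => critPointPow γ t ^ (γ / (γ + 1))
      - binomialTaylor (γ / (γ + 1)) 3 (critPointPow γ t - 1)) =O[𝓝[≠] 0] fun t => t ^ 3 :=
    ((one_add_rpow_sub_binomialTaylor_isBigO (γ / (γ + 1)) 3).comp_tendsto hw).trans
      ((critPointPow_sub_one_isBigO hγ₀).pow 3) |>.congr_left fun t => by simp
  have hsq : (fun t => (critPointPow γ t - 1 + (γ + 1) / 2 * t)
      * (critPointPow γ t - 1 - (γ + 1) / 2 * t)) =O[𝓝[≠] 0] fun t => t ^ 2 * t :=
    (critPointPow_sub_one_sub_linear_isBigO hγ₀).mul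
      ((critPointPow_sub_one_isBigO hγ₀).sub (isBigO_const_mul_self ((γ + 1) / 2) _ _))
  refine ((((hpow.const_mul_left (γ + 1)).add
    ((critPointPow_sub_one_sub_quadratic_isBigO hγ₀).const_mul_left γ)).sub
    (hsq.const_mul_left (γ / (2 * (γ + 1))) |>.congr_right fun t => by ring)).sub
    (one_sub_one_sub_rpow_div_sub_quadratic_isBigO (γ + 1))).congr_left fun t => ?_
  -- an identity in `t`, `w = critPointPow γ t - 1` and the two rpow terms
  simp [binomialTaylor, Finset.sum_range_succ, descPochhammer_succ_right]
  field_simp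
  ring

theorem deriv_deriv_rpow_add_div_sub {γ K B x : ℝ} (hx : 0 < x) :
    deriv (deriv fun P => P ^ γ + K / P - B) x = γ * (γ - 1) * x ^ (γ - 2) + 2 * K / x ^ 3 := by
  have hderiv : deriv (fun P => P ^ γ + K / P - B) =ᶠ[𝓝 x]
      fun P => γ * P ^ (γ - 1) - K / P ^ 2 := by
    filter_upwards [Ioi_mem_nhds hx] with P (hP : 0 < P)
    refine (((Real.hasDerivAt_rpow_const (Or.inl hP.ne')).add
      ((hasDerivAt_inv hP.ne').const_mul K)).sub_const B).deriv.trans ?_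
    ring
  have h2 := ((Real.hasDerivAt_rpow_const (p := γ - 1) (Or.inl hx.ne')).const_mul γ).fun_sub
    ((hasDerivAt_const x K).fun_div (hasDerivAt_pow 2 x) (by positivity))
  rw [hderiv.deriv_eq, h2.deriv, show γ - 1 - 1 = γ - 2 by ring]
  field_simp
  ring

theorem critical_value_and_curvature {γ K B x : ℝ} (hx : 0 < x) (hK : K = γ * x ^ (γ + 1)) :
    x ^ γ + K / x - B = (γ + 1) * x ^ γ - B ∧
    deriv (deriv fun P => P ^ γ + K / P - B) x = γ * (γ + 1) * x ^ (γ - 2) := by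
  have h3 : x ^ (γ + 1) = x ^ (γ - 2) * x ^ 3 := by
    rw [← Real.rpow_natCast, ← Real.rpow_add hx]; norm_num; ring_nf
  constructor
  · rw [hK, Real.rpow_add_one hx.ne']
    field_simp
    ring
  · rw [deriv_deriv_rpow_add_div_sub hx, hK, h3]
    field_simp
    ring

theorem mul_rpow_one_div_rpow {a q p : ℝ} (ha : 0 ≤ a) (hq : 0 ≤ q) (hp : p ≠ 0) (s : ℝ) :
    ((a ^ p * q) ^ (1 / p)) ^ s = a ^ s * q ^ (s / p) := by
  rw [Real.mul_rpow (by positivity) hq, Real.mul_rpow (by positivity) (by positivity),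
    ← Real.rpow_mul ha, mul_one_div_cancel hp, Real.rpow_one, ← Real.rpow_mul hq,
    one_div_mul_eq_div]

theorem rpow_divided_difference_scale {γ a t : ℝ} (ha : 0 < a) (ht₀ : t ≠ 0) (ht₁ : t ≤ 1) :
    ((a - a * t) ^ γ - a ^ γ) / ((a - a * t) - a) = a ^ (γ - 1) * ((1 - (1 - t) ^ γ) / t) := by
  rw [show a - a * t = a * (1 - t) by ring, Real.mul_rpow ha.le (by linarith),
    Real.rpow_sub_one ha.ne', show a * (1 - t) - a = -(a * t) by ring]
  field_simp
  ring

theorem mul_mul_rpow_div_eq_critPointPow {γ Pm t : ℝ} (hPm : 0 < Pm) (ht₀ : t ≠ 0) (ht₁ : t ≤ 1) :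
    Pm * (Pm - Pm * t) * (((Pm - Pm * t) ^ γ - Pm ^ γ) / (γ * ((Pm - Pm * t) - Pm)))
      = Pm ^ (γ + 1) * critPointPow γ t := by
  rw [div_mul_eq_div_div_swap, rpow_divided_difference_scale hPm ht₀ ht₁, critPointPow,
    Real.rpow_sub_one hPm.ne', Real.rpow_add_one hPm.ne']
  field_simp

theorem critPointPow_value_and_curvature {γ Pm t : ℝ} (hγ₀ : γ ≠ 0) (hγ₁ : γ + 1 ≠ 0) (hPm : 0 < Pm)
    (ht₀ : t ≠ 0) (ht₁ : t ≤ 1) (hQ : 0 < critPointPow γ t) {f : ℝ → ℝ}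
    (hf : ∀ P : ℝ, f P =
      P ^ γ + (Pm * (Pm - Pm * t) / P) * (((Pm - Pm * t) ^ γ - Pm ^ γ) / ((Pm - Pm * t) - Pm))
        - ((Pm - Pm * t) ^ (γ + 1) - Pm ^ (γ + 1)) / ((Pm - Pm * t) - Pm)) :
    f ((Pm ^ (γ + 1) * critPointPow γ t) ^ (1 / (γ + 1)))
        = Pm ^ γ * ((γ + 1) * critPointPow γ t ^ (γ / (γ + 1)) - (1 - (1 - t) ^ (γ + 1)) / t) ∧
      deriv (deriv f) ((Pm ^ (γ + 1) * critPointPow γ t) ^ (1 / (γ + 1)))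
        = γ * (γ + 1) * Pm ^ (γ - 2) * critPointPow γ t ^ ((γ - 2) / (γ + 1)) := by
  set P₀ := (Pm ^ (γ + 1) * critPointPow γ t) ^ (1 / (γ + 1))
  have hP₀ := mul_rpow_one_div_rpow hPm.le hQ.le hγ₁
  have hP₀pos : 0 < P₀ := Real.rpow_pos_of_pos (by positivity) _
  have hK : Pm * (Pm - Pm * t) * (((Pm - Pm * t) ^ γ - Pm ^ γ) / ((Pm - Pm * t) - Pm))
      = γ * P₀ ^ (γ + 1) := by
    rw [hP₀, div_self hγ₁, Real.rpow_one, rpow_divided_difference_scale hPm ht₀ ht₁, critPointPow,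
      Real.rpow_sub_one hPm.ne', Real.rpow_add_one hPm.ne']
    field_simp
  set B := Pm ^ γ * ((1 - (1 - t) ^ (γ + 1)) / t)
  have hf' : f = fun P => P ^ γ + γ * P₀ ^ (γ + 1) / P - B := by
    funext P
    rw [hf, div_mul_eq_mul_div, hK, rpow_divided_difference_scale hPm ht₀ ht₁, add_sub_cancel_right]
  obtain ⟨hvalue, hcurv⟩ := critical_value_and_curvature (γ := γ) (B := B) hP₀pos rfl
  rw [hf']
  dsimp only
  exact ⟨by rw [hvalue, hP₀]; ring, by rw [hcurv, hP₀]; ring⟩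

theorem exists_critPointPow_bounds {γ : ℝ} (hγ₀ : γ ≠ 0) (hγ₁ : γ + 1 ≠ 0) :
    ∃ δ ∈ Ioc (0 : ℝ) 1, ∃ C > (0 : ℝ), ∀ t ∈ Ioo 0 δ, 0 < critPointPow γ t ∧
      |(γ + 1) * critPointPow γ t ^ (γ / (γ + 1)) - (1 - (1 - t) ^ (γ + 1)) / t
        + γ * (γ + 1) / 8 * t ^ 2| ≤ C * t ^ 3 ∧
      |critPointPow γ t ^ ((γ - 2) / (γ + 1)) - 1| ≤ C * t := by
  obtain ⟨c₁, hc₁, h₁⟩ := (critical_value_expansion hγ₀ hγ₁).exists_pos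
  obtain ⟨c₂, hc₂, h₂⟩ := (critPointPow_rpow_sub_one_isBigO hγ₀ ((γ - 2) / (γ + 1))).exists_pos
  have hpos : ∀ᶠ t in 𝓝[≠] 0, 0 < critPointPow γ t :=
    (tendsto_critPointPow hγ₀).eventually (lt_mem_nhds one_pos)
  obtain ⟨δ, hδ, hδall⟩ := (nhdsGT_basis (0 : ℝ)).eventually_iff.mp
    (nhdsWithin_mono 0 (fun t (ht : 0 < t) => ht.ne') (hpos.and (h₁.bound.and h₂.bound)))
  refine ⟨min δ 1, ⟨by positivity, min_le_right _ _⟩, c₁ + c₂, by positivity, fun t ht => ?_⟩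
  obtain ⟨hQ, hbound₁, hbound₂⟩ := hδall ⟨ht.1, ht.2.trans_le (min_le_left _ _)⟩
  simp only [Real.norm_eq_abs, abs_pow, abs_of_pos ht.1] at hbound₁ hbound₂
  exact ⟨hQ, hbound₁.trans (mul_le_mul_of_nonneg_right (by linarith) (pow_pos ht.1 3).le),
    hbound₂.trans (mul_le_mul_of_nonneg_right (by linarith) ht.1.le)⟩

/-- expansions `f(P₀(ε)) = −(γ(γ+1)/8)(P⁻)^{γ−2}ε² + O(ε³)` and
`f''(P₀(ε)) = γ(γ+1)(P⁻)^{γ−2} + O(ε)` at the unique positive critical point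
`P₀(ε)` of `f`, for `P⁺ = P⁻ − ε`. -/
theorem statement_2 (γ Pm : ℝ) (hγ : 1 ≤ γ) (hPm : 0 < Pm) :
    ∃ ε₀ > (0:ℝ), ∃ C > (0:ℝ), ∀ ε : ℝ, 0 < ε → ε < ε₀ →
      ∀ f : ℝ → ℝ,
        (∀ P : ℝ, f P =
          P ^ γ + (Pm * (Pm - ε) / P) * (((Pm - ε) ^ γ - Pm ^ γ) / ((Pm - ε) - Pm))
            - ((Pm - ε) ^ (γ + 1) - Pm ^ (γ + 1)) / ((Pm - ε) - Pm)) →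
        |f ((Pm * (Pm - ε) * (((Pm - ε) ^ γ - Pm ^ γ) / (γ * ((Pm - ε) - Pm)))) ^ (1 / (γ + 1)))
            + (γ * (γ + 1) / 8) * Pm ^ (γ - 2) * ε ^ 2| ≤ C * ε ^ 3 ∧
        |deriv (deriv f)
            ((Pm * (Pm - ε) * (((Pm - ε) ^ γ - Pm ^ γ) / (γ * ((Pm - ε) - Pm)))) ^ (1 / (γ + 1)))
            - γ * (γ + 1) * Pm ^ (γ - 2)| ≤ C * ε := by
  have hγ₀ : 0 < γ := by linarith
  obtain ⟨δ, ⟨hδ, hδ₁⟩, C, hC, hbound⟩ := exists_critPointPow_bounds hγ₀.ne' (by linarith)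
  refine ⟨Pm * δ, by positivity, (1 + γ * (γ + 1)) * (C * Pm ^ γ / Pm ^ 3), by positivity, ?_⟩
  intro ε hε hεδ f hf
  obtain ⟨t, rfl⟩ : ∃ t, ε = Pm * t := ⟨ε / Pm, by field_simp⟩
  have ht : t ∈ Ioo 0 δ := ⟨pos_of_mul_pos_right hε hPm.le, lt_of_mul_lt_mul_left hεδ hPm.le⟩
  obtain ⟨hQ, hvalue, hcurv⟩ := hbound t ht
  obtain ⟨hf₀, hf₂⟩ := critPointPow_value_and_curvature hγ₀.ne' (by linarith) hPm ht.1.ne'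
    (ht.2.le.trans hδ₁) hQ hf
  rw [mul_mul_rpow_div_eq_critPointPow hPm ht.1.ne' (ht.2.le.trans hδ₁), hf₀, hf₂,
    Real.rpow_sub hPm, Real.rpow_two]
  have hPmγ : 0 < Pm ^ γ := Real.rpow_pos_of_pos hPm γ
  constructor
  · calc _ = |Pm ^ γ * ((γ + 1) * critPointPow γ t ^ (γ / (γ + 1)) - (1 - (1 - t) ^ (γ + 1)) / t
            + γ * (γ + 1) / 8 * t ^ 2)| := by congr 1; field_simp
      _ ≤ Pm ^ γ * (C * t ^ 3) := by rw [abs_mul, abs_of_pos hPmγ]; gcongr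
      _ = C * Pm ^ γ / Pm ^ 3 * (Pm * t) ^ 3 := by field_simp
      _ ≤ _ := by
          gcongr
          exact le_mul_of_one_le_left (by positivity) (le_add_of_nonneg_right (by positivity))
  · calc _ = |γ * (γ + 1) * (Pm ^ γ / Pm ^ 2) * (critPointPow γ t ^ ((γ - 2) / (γ + 1)) - 1)| := by
          congr 1; ring
      _ ≤ γ * (γ + 1) * (Pm ^ γ / Pm ^ 2) * (C * t) := by
          rw [abs_mul, abs_of_pos (by positivity)]; gcongr
      _ = γ * (γ + 1) * (C * Pm ^ γ / Pm ^ 3) * (Pm * t) := by field_simp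
      _ ≤ _ := by gcongr; linarith
end

section
/- Let γ ≥ 1, μ > 0, k > 0, s < 0 and P⁻ > 0. There exist ε₀ > 0 and C > 0 such that for every shock amplitude ε ∈ (0, ε₀), setting P⁺ = P⁻ + ε, there exists a twice continuously differentiable function P : ℝ → ℝ with values in [P⁻, P⁺] satisfying the profile equation P''(y) = (2/k²)f(P(y)) − (2sμ/k²)P'(y) + P'(y)²/P(y) for all y ∈ ℝ, such that P(y) → P⁻ as y → −∞, P(y) → P⁺ as y → +∞, P'(y) > 0 for all y ∈ ℝ (the profile is monotone increasing), and moreover |P'(y)| ≤ Cε² and |P''(y)| ≤ Cε|P'(y)| for all y ∈ ℝ. -/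
/-!
With `P = e^u` the profile equation becomes `u'' = a u' + g(u)`, where `a = -2sμ/k² > 0` and
`g(u) = (2/k²) e^{-u} f(e^u)` vanishes at `l = log P⁻` and `r = log P⁺`, is negative in between
(`p^(γ+1)` lies below its chord) and satisfies `|g'| ≤ Mε` on `[l, r]` (Rolle). The heteroclinic is
an orbit `u' = φ(u)` of a phase curve solving `φ φ' = a φ + g`. For small `ε` friction dominates
and `φ ≈ -g/a`; the exact curve is `φ = (-g/a)(1 + w ∘ Ψ)`, where `Ψ' = a²/(-g)` stretches `(l, r)`
onto `ℝ` and `w` is the bounded solution of `w' = w + N(σ, w)`, found by the contraction principle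
with `|w| ≤ ρ = 2Mε/a²`. Hence `a φ` lies within a factor `1 ± ρ` of `-g = O(ε²)`, which gives
`P' = e^u φ(u) = O(ε²)` and `|P''| = e^u |a φ + g + φ²| = O(ε) P'`.
-/

open Set Filter Topology MeasureTheory Real NNReal
open scoped BoundedContinuousFunction

section Orbit

variable {l r c : ℝ} {F q : ℝ → ℝ}

theorem tendsto_nhdsGT_atBot_of_div_sub_le_deriv {m : ℝ} (hlm : l < m) (hc : 0 < c)
    (hF : ∀ x ∈ Ioo l m, HasDerivAt F (q x) x) (hq : ∀ x ∈ Ioo l m, c / (x - l) ≤ q x) :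
    Tendsto F (𝓝[>] l) atBot := by
  have hlog : ∀ x ∈ Ioo l m, HasDerivAt (fun x => c * log (x - l)) (c / (x - l)) x := fun x hx => by
    simpa [div_eq_mul_one_div c] using
      (((hasDerivAt_id x).sub_const l).log (sub_pos.2 hx.1).ne').const_mul c
  have hmono : MonotoneOn (fun x => F x - c * log (x - l)) (Ioo l m) := by
    refine monotoneOn_of_hasDerivWithinAt_nonneg (f' := fun x => q x - c / (x - l)) (convex_Ioo l m)
      (fun x hx => ((hF x hx).sub (hlog x hx)).continuousAt.continuousWithinAt)
      (fun x hx => ?_) (fun x hx => ?_) <;> rw [interior_Ioo] at hx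
    · exact ((hF x hx).sub (hlog x hx)).hasDerivWithinAt
    · exact sub_nonneg.2 (hq x hx)
  obtain ⟨x₀, hx₀⟩ : (Ioo l m).Nonempty := nonempty_Ioo.2 hlm
  have hbound : ∀ x ∈ Ioo l x₀, F x ≤ c * log (x - l) + (F x₀ - c * log (x₀ - l)) := by
    intro x hx
    have := hmono ⟨hx.1, hx.2.trans hx₀.2⟩ hx₀ hx.2.le
    simp only at this
    linarith
  have hsub : Tendsto (fun x => x - l) (𝓝[>] l) (𝓝[>] 0) :=
    tendsto_nhdsWithin_of_tendsto_nhds_of_eventually_within _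
      (by simpa using ((continuous_sub_right l).tendsto l).mono_left nhdsWithin_le_nhds)
      (eventually_nhdsWithin_of_forall fun x hx => sub_pos.2 (mem_Ioi.1 hx))
  refine tendsto_atBot_mono' _ ?_
    (((tendsto_log_nhdsGT_zero.comp hsub).const_mul_atBot hc).atBot_add
      (tendsto_const_nhds (x := F x₀ - c * log (x₀ - l))))
  filter_upwards [Ioo_mem_nhdsGT hx₀.1] with x hx using hbound x hx

theorem tendsto_nhdsLT_atTop_of_div_sub_le_deriv {m : ℝ} (hmr : m < r) (hc : 0 < c)
    (hF : ∀ x ∈ Ioo m r, HasDerivAt F (q x) x) (hq : ∀ x ∈ Ioo m r, c / (r - x) ≤ q x) :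
    Tendsto F (𝓝[<] r) atTop := by
  have hneg : Tendsto (fun x => -x) (𝓝[<] r) (𝓝[>] (-r)) :=
    tendsto_nhdsWithin_of_tendsto_nhds_of_eventually_within _
      (continuous_neg.tendsto r |>.mono_left nhdsWithin_le_nhds)
      (eventually_nhdsWithin_of_forall fun x hx => neg_lt_neg (mem_Iio.1 hx))
  have hreflect : Tendsto (fun x => -F (-x)) (𝓝[>] (-r)) atBot := by
    refine tendsto_nhdsGT_atBot_of_div_sub_le_deriv (m := -m) (q := fun x => q (-x))
      (neg_lt_neg hmr) hc (fun x hx => ?_) (fun x hx => ?_)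
    · have hx' : -x ∈ Ioo m r := ⟨lt_neg.1 hx.2, neg_lt.1 hx.1⟩
      exact ((hF (-x) hx').comp x (hasDerivAt_id' x).neg).neg.congr_deriv (by ring)
    · simpa [sub_eq_add_neg, add_comm] using hq (-x) ⟨lt_neg.1 hx.2, neg_lt.1 hx.1⟩
  simpa [Function.comp_def] using tendsto_neg_atBot_atTop.comp (hreflect.comp hneg)

theorem exists_hasDerivAt_inverse_of_surjOn_Ioo (hlr : l < r)
    (hF : ∀ x ∈ Ioo l r, HasDerivAt F (q x) x) (hq : ∀ x ∈ Ioo l r, 0 < q x)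
    (hsurj : SurjOn F (Ioo l r) univ) :
    ∃ X : ℝ → ℝ, (∀ x ∈ Ioo l r, X (F x) = x) ∧ (∀ t, X t ∈ Ioo l r) ∧
      (∀ t, HasDerivAt X (q (X t))⁻¹ t) ∧ Tendsto X atBot (𝓝 l) ∧ Tendsto X atTop (𝓝 r) := by
  have hFmono : StrictMonoOn F (Ioo l r) :=
    strictMonoOn_of_hasDerivWithinAt_pos (convex_Ioo l r)
      (fun x hx => (hF x hx).continuousAt.continuousWithinAt)
      (fun x hx => (hF x (by rwa [interior_Ioo] at hx)).hasDerivWithinAt)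
      (fun x hx => hq x (by rwa [interior_Ioo] at hx))
  set X := Function.invFunOn F (Ioo l r)
  have hXmem : ∀ t, X t ∈ Ioo l r := fun t => Function.invFunOn_mem (hsurj (mem_univ t))
  have hFX : ∀ t, F (X t) = t := fun t => Function.invFunOn_eq (hsurj (mem_univ t))
  have hXmono : Monotone X := fun t₁ t₂ h =>
    (hFmono.le_iff_le (hXmem t₁) (hXmem t₂)).1 (by simpa only [hFX] using h)
  have hrange : range X = Ioo l r :=
    (range_subset_iff.2 hXmem).antisymm fun x hx => ⟨F x, hFmono.injOn.leftInvOn_invFunOn hx⟩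
  have hXcont : Continuous X := continuous_iff_continuousAt.2 fun t =>
    continuousAt_of_monotoneOn_of_image_mem_nhds (hXmono.monotoneOn univ) univ_mem
      (by rw [image_univ, hrange]; exact Ioo_mem_nhds (hXmem t).1 (hXmem t).2)
  refine ⟨X, fun x hx => hFmono.injOn.leftInvOn_invFunOn hx, hXmem, fun t => ?_,
    tendsto_atBot_isGLB hXmono (hrange ▸ isGLB_Ioo hlr),
    tendsto_atTop_isLUB hXmono (hrange ▸ isLUB_Ioo hlr)⟩
  exact HasDerivAt.of_local_left_inverse hXcont.continuousAt (hF _ (hXmem t))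
    (hq _ (hXmem t)).ne' (Eventually.of_forall hFX)

/-- `Y = ∫ q` is the travel time of `x' = 1 / q x`; the bounds on `q` make it diverge at both
ends, so the orbit `X = Y⁻¹` is defined for all times. -/
theorem exists_orbit_Ioo (hlr : l < r) (hc : 0 < c) (hq : ContinuousOn q (Ioo l r))
    (hql : ∀ x ∈ Ioo l r, c / (x - l) ≤ q x) (hqr : ∀ x ∈ Ioo l r, c / (r - x) ≤ q x) :
    ∃ Y X : ℝ → ℝ, (∀ x ∈ Ioo l r, HasDerivAt Y (q x) x) ∧ (∀ x ∈ Ioo l r, X (Y x) = x) ∧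
      (∀ t, X t ∈ Ioo l r) ∧ (∀ t, HasDerivAt X (q (X t))⁻¹ t) ∧
      Tendsto X atBot (𝓝 l) ∧ Tendsto X atTop (𝓝 r) := by
  obtain ⟨x₀, hx₀⟩ : (Ioo l r).Nonempty := nonempty_Ioo.2 hlr
  set Y : ℝ → ℝ := fun x => ∫ t in x₀..x, q t
  have hY : ∀ x ∈ Ioo l r, HasDerivAt Y (q x) x := fun x hx =>
    intervalIntegral.integral_hasDerivAt_right
      ((hq.mono (ordConnected_Ioo.uIcc_subset hx₀ hx)).intervalIntegrable)
      (hq.stronglyMeasurableAtFilter isOpen_Ioo x hx) (hq.continuousAt (Ioo_mem_nhds hx.1 hx.2))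
  have hqpos : ∀ x ∈ Ioo l r, 0 < q x := fun x hx =>
    (div_pos hc (sub_pos.2 hx.1)).trans_le (hql x hx)
  have hbot := tendsto_nhdsGT_atBot_of_div_sub_le_deriv hlr hc hY hql
  have htop := tendsto_nhdsLT_atTop_of_div_sub_le_deriv hlr hc hY hqr
  have hYcont : ContinuousOn Y (Ioo l r) := fun x hx => (hY x hx).continuousAt.continuousWithinAt
  have hsurj : SurjOn Y (Ioo l r) univ :=
    hYcont.surjOn_of_tendsto (nonempty_Ioo.2 hlr) ((tendsto_comp_coe_Ioo_atBot hlr).2 hbot)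
      ((tendsto_comp_coe_Ioo_atTop hlr).2 htop)
  obtain ⟨X, hXY, hXmem, hX, hXl, hXr⟩ :=
    exists_hasDerivAt_inverse_of_surjOn_Ioo hlr hY hqpos hsurj
  exact ⟨Y, X, hY, hXY, hXmem, hX, hXl, hXr⟩

end Orbit

section BoundedSolution

/-- Variation of constants from `+∞`: the bounded solution of `z' = z + f`. -/
noncomputable def boundedSolution (f : ℝ → ℝ) (σ : ℝ) : ℝ :=
  -(exp σ * ∫ t in Ioi σ, exp (-t) * f t)

variable {f g : ℝ → ℝ} {B : ℝ}

theorem norm_exp_neg_mul_le (hB : ∀ t, |f t| ≤ B) (t : ℝ) : ‖exp (-t) * f t‖ ≤ exp (-t) * B := by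
  rw [norm_mul, norm_of_nonneg (exp_pos _).le, norm_eq_abs]
  exact mul_le_mul_of_nonneg_left (hB t) (exp_pos _).le

theorem integrableOn_exp_neg_mul_Ioi (hf : Continuous f) (hB : ∀ t, |f t| ≤ B) (σ : ℝ) :
    IntegrableOn (fun t => exp (-t) * f t) (Ioi σ) :=
  ((integrableOn_exp_neg_Ioi σ).mul_const B).mono'
    (by fun_prop : Continuous fun t => exp (-t) * f t).aestronglyMeasurable
    (Eventually.of_forall (norm_exp_neg_mul_le hB))

theorem abs_boundedSolution_le (hB : ∀ t, |f t| ≤ B) (σ : ℝ) : |boundedSolution f σ| ≤ B := by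
  have hint : |∫ t in Ioi σ, exp (-t) * f t| ≤ exp (-σ) * B := by
    rw [← norm_eq_abs, ← integral_exp_neg_Ioi, ← integral_mul_const]
    exact norm_integral_le_of_norm_le ((integrableOn_exp_neg_Ioi σ).mul_const B)
      (Eventually.of_forall (norm_exp_neg_mul_le hB))
  calc |boundedSolution f σ| = exp σ * |∫ t in Ioi σ, exp (-t) * f t| := by
        rw [boundedSolution, abs_neg, abs_mul, abs_of_pos (exp_pos σ)]
    _ ≤ exp σ * (exp (-σ) * B) := mul_le_mul_of_nonneg_left hint (exp_pos σ).le
    _ = B := by rw [← mul_assoc, ← exp_add, add_neg_cancel, exp_zero, one_mul]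

theorem boundedSolution_sub (hf : Continuous f) (hfB : ∀ t, |f t| ≤ B)
    (hg : Continuous g) (hgB : ∀ t, |g t| ≤ B) (σ : ℝ) :
    boundedSolution f σ - boundedSolution g σ = boundedSolution (f - g) σ := by
  simp only [boundedSolution, Pi.sub_apply, mul_sub]
  rw [integral_sub (integrableOn_exp_neg_mul_Ioi hf hfB σ) (integrableOn_exp_neg_mul_Ioi hg hgB σ)]
  ring

theorem hasDerivAt_boundedSolution (hf : Continuous f) (hB : ∀ t, |f t| ≤ B) (σ : ℝ) :
    HasDerivAt (boundedSolution f) (boundedSolution f σ + f σ) σ := by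
  have hcont : Continuous fun t => exp (-t) * f t := by fun_prop
  have hsplit : boundedSolution f = fun σ =>
      -(exp σ * ((∫ t in Ioi 0, exp (-t) * f t) - ∫ t in (0 : ℝ)..σ, exp (-t) * f t)) := by
    ext σ
    rw [boundedSolution, ← intervalIntegral.integral_Ioi_sub_Ioi'
      (integrableOn_exp_neg_mul_Ioi hf hB 0) (integrableOn_exp_neg_mul_Ioi hf hB σ), sub_sub_cancel]
  have hprim := intervalIntegral.integral_hasDerivAt_right (hcont.intervalIntegrable 0 σ)
    (hcont.stronglyMeasurableAtFilter _ _) hcont.continuousAt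
  rw [hsplit]
  refine ((hasDerivAt_exp σ).mul (hprim.const_sub _)).neg.congr_deriv ?_
  rw [mul_neg, ← mul_assoc, ← exp_add, add_neg_cancel, exp_zero, one_mul]
  ring

theorem exists_bounded_solution {N : ℝ → ℝ → ℝ} {K : ℝ≥0} (hK : K < 1)
    (hN : Continuous (Function.uncurry N)) (hNB : ∀ σ x, |N σ x| ≤ B)
    (hNK : ∀ σ x y, |N σ x - N σ y| ≤ K * |x - y|) :
    ∃ w : ℝ → ℝ, (∀ σ, |w σ| ≤ B) ∧ ∀ σ, HasDerivAt w (w σ + N σ (w σ)) σ := by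
  have hcont : ∀ w : ℝ →ᵇ ℝ, Continuous fun t => N t (w t) := fun w =>
    hN.comp (continuous_id.prodMk w.continuous)
  let T : (ℝ →ᵇ ℝ) → (ℝ →ᵇ ℝ) := fun w =>
    .ofNormedAddCommGroup (boundedSolution fun t => N t (w t))
      (continuous_iff_continuousAt.2 fun σ =>
        (hasDerivAt_boundedSolution (hcont w) (hNB · _) σ).continuousAt) B
      (fun σ => abs_boundedSolution_le (hNB · _) σ)
  have hT : ContractingWith K T := by
    refine ⟨hK, LipschitzWith.of_dist_le_mul fun w₁ w₂ =>
      (BoundedContinuousFunction.dist_le (by positivity)).2 fun σ => ?_⟩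
    rw [dist_eq_norm, norm_eq_abs]
    change |boundedSolution _ σ - boundedSolution _ σ| ≤ _
    rw [boundedSolution_sub (hcont w₁) (hNB · _) (hcont w₂) (hNB · _)]
    refine abs_boundedSolution_le (fun t => ?_) σ
    exact (hNK t _ _).trans (mul_le_mul_of_nonneg_left
      (by simpa [dist_eq_norm] using
        BoundedContinuousFunction.dist_coe_le_dist (f := w₁) (g := w₂) t) K.2)
  set w := ContractingWith.fixedPoint T hT
  have hw : (w : ℝ → ℝ) = boundedSolution fun t => N t (w t) :=
    congrArg DFunLike.coe (ContractingWith.fixedPoint_isFixedPt hT).symm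
  refine ⟨w, fun σ => hw ▸ abs_boundedSolution_le (hNB · _) σ, fun σ => ?_⟩
  have hder := hasDerivAt_boundedSolution (hcont w) (hNB · _) σ
  rwa [← hw] at hder

end BoundedSolution

section Correction

/-- Writing `φ = (-g / a) (1 + w ∘ Ψ)` with `Ψ' = a² / (-g)`, the phase-curve equation
`φ φ' = a φ + g` becomes `w' = w + correctionField (g' / a²) w` in the variable `Ψ`. -/
noncomputable def correctionField (h x : ℝ) : ℝ := -x ^ 2 / (1 + x) + h * (1 + x)

variable {ρ h x y : ℝ}

theorem abs_correctionField_le (hρ : ρ ≤ 1 / 5) (hh : |h| ≤ ρ / 2) (hx : |x| ≤ ρ) :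
    |correctionField h x| ≤ ρ := by
  unfold correctionField
  obtain ⟨hx₁, hx₂⟩ := abs_le.1 hx
  have hpos : 4 / 5 ≤ 1 + x := by linarith
  have hquad : |-x ^ 2 / (1 + x)| ≤ ρ / 4 := by
    rw [abs_div, abs_neg, abs_of_nonneg (sq_nonneg x), abs_of_pos (show 0 < 1 + x by linarith),
      div_le_iff₀ (by linarith)]
    nlinarith [sq_abs x, abs_nonneg x]
  have hlin : |h * (1 + x)| ≤ ρ / 2 * (6 / 5) := by
    rw [abs_mul, abs_of_pos (show 0 < 1 + x by linarith)]
    exact mul_le_mul hh (by linarith) (by linarith) ((abs_nonneg h).trans hh)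
  linarith [abs_add_le (-x ^ 2 / (1 + x)) (h * (1 + x))]

theorem abs_correctionField_sub_le (hρ : ρ ≤ 1 / 5) (hh : |h| ≤ ρ / 2) (hx : |x| ≤ ρ)
    (hy : |y| ≤ ρ) : |correctionField h x - correctionField h y| ≤ 4 / 5 * |x - y| := by
  obtain ⟨hx₁, hx₂⟩ := abs_le.1 hx
  obtain ⟨hy₁, hy₂⟩ := abs_le.1 hy
  have hxy : 16 / 25 ≤ (1 + x) * (1 + y) := by nlinarith
  have hnum : |x + y + x * y| ≤ 11 / 25 := by
    rw [abs_le]; constructor <;> nlinarith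
  have hquad : |-x ^ 2 / (1 + x) - -y ^ 2 / (1 + y)| ≤ 11 / 16 * |x - y| := by
    rw [div_sub_div _ _ (by linarith) (by linarith), abs_div,
      abs_of_pos (show 0 < (1 + x) * (1 + y) by linarith), div_le_iff₀ (by linarith),
      show -x ^ 2 * (1 + y) - (1 + x) * -y ^ 2 = -((x - y) * (x + y + x * y)) by ring,
      abs_neg, abs_mul]
    nlinarith [abs_nonneg (x - y), abs_nonneg (x + y + x * y)]
  have hlin : |h * (1 + x) - h * (1 + y)| ≤ 1 / 10 * |x - y| := by
    rw [← mul_sub, add_sub_add_left_eq_sub, abs_mul]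
    exact mul_le_mul_of_nonneg_right (by linarith) (abs_nonneg _)
  calc _ = |(-x ^ 2 / (1 + x) - -y ^ 2 / (1 + y)) + (h * (1 + x) - h * (1 + y))| := by
        rw [correctionField, correctionField]; ring_nf
    _ ≤ 11 / 16 * |x - y| + 1 / 10 * |x - y| := (abs_add_le _ _).trans (add_le_add hquad hlin)
    _ ≤ 4 / 5 * |x - y| := by nlinarith [abs_nonneg (x - y)]

theorem exists_bounded_correction {h : ℝ → ℝ} (hc : Continuous h) (hρ : ρ ≤ 1 / 5)
    (hh : ∀ σ, |h σ| ≤ ρ / 2) :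
    ∃ w : ℝ → ℝ, (∀ σ, |w σ| ≤ ρ) ∧ ∀ σ, HasDerivAt w (w σ + correctionField (h σ) (w σ)) σ := by
  have hρ₀ : -ρ ≤ ρ := by linarith [(abs_nonneg (h 0)).trans (hh 0)]
  -- clamped to `[-ρ, ρ]`, the field is globally bounded and contracting
  set P : ℝ → ℝ := fun x => projIcc (-ρ) ρ hρ₀ x
  have hP : ∀ x, |P x| ≤ ρ := fun x => abs_le.2 (projIcc (-ρ) ρ hρ₀ x).2
  have hPc : Continuous P := continuous_subtype_val.comp continuous_projIcc
  obtain ⟨w, hwρ, hw⟩ := exists_bounded_solution (K := 4 / 5) (B := ρ)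
    (N := fun σ x => correctionField (h σ) (P x)) (by rw [← NNReal.coe_lt_coe]; norm_num)
    (((hPc.comp continuous_snd).pow 2).neg.div (continuous_const.add (hPc.comp continuous_snd))
      (fun p => (show 0 < 1 + P p.2 by linarith [(abs_le.1 (hP p.2)).1]).ne') |>.add
      ((hc.comp continuous_fst).mul (continuous_const.add (hPc.comp continuous_snd))))
    (fun σ x => abs_correctionField_le hρ (hh σ) (hP x))
    (fun σ x y => (abs_correctionField_sub_le hρ (hh σ) (hP x) (hP y)).trans <| by
      push_cast
      exact mul_le_mul_of_nonneg_left (abs_projIcc_sub_projIcc hρ₀) (by norm_num))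
  refine ⟨w, hwρ, fun σ => ?_⟩
  simpa only [P, projIcc_of_mem hρ₀ (abs_le.1 (hwρ σ))] using hw σ

end Correction

section MeanValue

theorem abs_le_mul_abs_sub_of_abs_deriv_le {g dg : ℝ → ℝ} {l r L x₀ x : ℝ}
    (hg : ∀ x, HasDerivAt g (dg x) x) (hdg : ∀ x ∈ Icc l r, |dg x| ≤ L) (hx₀ : x₀ ∈ Icc l r)
    (h₀ : g x₀ = 0) (hx : x ∈ Icc l r) : |g x| ≤ L * |x - x₀| := by
  simpa [h₀] using (convex_Icc l r).norm_image_sub_le_of_norm_hasDerivWithin_le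
    (fun y _ => (hg y).hasDerivWithinAt) hdg hx₀ hx

theorem abs_le_of_abs_deriv_le_of_eq_zero {g dg : ℝ → ℝ} {l r L : ℝ} (hlr : l ≤ r)
    (hg : ∀ x, HasDerivAt g (dg x) x)
    (hdgL : ∀ x ∈ Icc l r, |dg x| ≤ L) (hgl : g l = 0) (hgr : g r = 0) {x : ℝ} (hx : x ∈ Icc l r) :
    |g x| ≤ L * (x - l) ∧ |g x| ≤ L * (r - x) := by
  have h₁ := abs_le_mul_abs_sub_of_abs_deriv_le hg hdgL (left_mem_Icc.2 hlr) hgl hx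
  have h₂ := abs_le_mul_abs_sub_of_abs_deriv_le hg hdgL (right_mem_Icc.2 hlr) hgr hx
  rw [abs_of_nonneg (sub_nonneg.2 hx.1)] at h₁
  rw [abs_sub_comm, abs_of_nonneg (sub_nonneg.2 hx.2)] at h₂
  exact ⟨h₁, h₂⟩

theorem abs_deriv_le_of_eq_zero_of_eq_zero {G G' G'' : ℝ → ℝ} {l r M x : ℝ} (hlr : l < r)
    (hG : ∀ x, HasDerivAt G (G' x) x) (hG' : ∀ x, HasDerivAt G' (G'' x) x) (hl : G l = 0)
    (hr : G r = 0) (hM : ∀ x ∈ Icc l r, |G'' x| ≤ M) (hx : x ∈ Icc l r) : |G' x| ≤ M * (r - l) := by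
  obtain ⟨ξ, hξ, hξ₀⟩ := exists_hasDerivAt_eq_zero hlr
    (fun x _ => (hG x).continuousAt.continuousWithinAt) (hl.trans hr.symm) fun x _ => hG x
  have hM₀ : 0 ≤ M := (abs_nonneg _).trans (hM l (left_mem_Icc.2 hlr.le))
  calc |G' x| ≤ M * |x - ξ| :=
        abs_le_mul_abs_sub_of_abs_deriv_le hG' hM (Ioo_subset_Icc_self hξ) hξ₀ hx
    _ ≤ M * (r - l) := mul_le_mul_of_nonneg_left
        (abs_sub_le_iff.2 ⟨by linarith [hx.2, hξ.1], by linarith [hx.1, hξ.2]⟩) hM₀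

end MeanValue

section PhaseCurve

variable {a l r L : ℝ} {g dg : ℝ → ℝ}

theorem exists_phase_curve (ha : 0 < a) (hlr : l < r) (hg : ∀ x, HasDerivAt g (dg x) x)
    (hdg : Continuous dg) (hgl : g l = 0) (hgr : g r = 0) (hneg : ∀ x ∈ Ioo l r, g x < 0)
    (hdgL : ∀ x ∈ Icc l r, |dg x| ≤ L) (hsmall : 10 * L ≤ a ^ 2) :
    ∃ φ : ℝ → ℝ, (∀ x ∈ Ioo l r, HasDerivAt φ (a + g x / φ x) x) ∧
      ∀ x ∈ Ioo l r, |a * φ x + g x| ≤ 2 * L / a ^ 2 * -g x := by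
  have hgle : ∀ x ∈ Ioo l r, -g x ≤ L * (x - l) ∧ -g x ≤ L * (r - x) := fun x hx =>
    have h := abs_le_of_abs_deriv_le_of_eq_zero hlr.le hg hdgL hgl hgr (Ioo_subset_Icc_self hx)
    ⟨(neg_le_abs _).trans h.1, (neg_le_abs _).trans h.2⟩
  obtain ⟨x₀, hx₀⟩ : (Ioo l r).Nonempty := nonempty_Ioo.2 hlr
  have hL : 0 < L := pos_of_mul_pos_left ((neg_pos.2 (hneg x₀ hx₀)).trans_le (hgle x₀ hx₀).1)
    (sub_pos.2 hx₀.1).le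
  have hgc : Continuous g := continuous_iff_continuousAt.2 fun x => (hg x).continuousAt
  have hq : ∀ x ∈ Ioo l r, a ^ 2 / L / (x - l) ≤ a ^ 2 / -g x ∧
      a ^ 2 / L / (r - x) ≤ a ^ 2 / -g x := fun x hx => by
    rw [div_div, div_div]
    exact ⟨div_le_div_of_nonneg_left (by positivity) (neg_pos.2 (hneg x hx)) (hgle x hx).1,
      div_le_div_of_nonneg_left (by positivity) (neg_pos.2 (hneg x hx)) (hgle x hx).2⟩
  obtain ⟨Ψ, Θ, hΨ, hΘΨ, hΘmem, hΘ, -, -⟩ := exists_orbit_Ioo (q := fun x => a ^ 2 / -g x) hlr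
    (by positivity : 0 < a ^ 2 / L)
    (continuousOn_const.div hgc.neg.continuousOn fun x hx => (neg_pos.2 (hneg x hx)).ne')
    (fun x hx => (hq x hx).1) (fun x hx => (hq x hx).2)
  set ρ := 2 * L / a ^ 2
  have hρ : ρ ≤ 1 / 5 := by rw [div_le_iff₀ (by positivity)]; linarith
  set h : ℝ → ℝ := fun σ => dg (Θ σ) / a ^ 2
  have hh : ∀ σ, |h σ| ≤ ρ / 2 := fun σ => by
    rw [abs_div, abs_of_pos (by positivity : 0 < a ^ 2), div_le_iff₀ (by positivity)]
    calc |dg (Θ σ)| ≤ L := hdgL _ (Ioo_subset_Icc_self (hΘmem σ))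
      _ = ρ / 2 * a ^ 2 := by simp only [ρ]; field_simp
  obtain ⟨w, hwρ, hw⟩ := exists_bounded_correction
    ((hdg.comp (continuous_iff_continuousAt.2 fun σ => (hΘ σ).continuousAt)).div_const _) hρ hh
  have hw₁ : ∀ σ, 0 < 1 + w σ := fun σ => by linarith [(abs_le.1 (hwρ σ)).1]
  refine ⟨fun x => -g x / a * (1 + w (Ψ x)), fun x hx => ?_, fun x hx => ?_⟩
  · refine (((hg x).neg.div_const a).mul (((hw (Ψ x)).comp x (hΨ x hx)).const_add 1)).congr_deriv ?_
    have hgx := (hneg x hx).ne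
    have hwx := (hw₁ (Ψ x)).ne'
    simp only [correctionField, Function.comp_apply, Pi.neg_apply, hΘΨ x hx]
    field_simp
    ring
  · have hgx := hneg x hx
    calc |a * (-g x / a * (1 + w (Ψ x))) + g x| = -g x * |w (Ψ x)| := by
          rw [show a * (-g x / a * (1 + w (Ψ x))) + g x = -g x * w (Ψ x) by field_simp; ring,
            abs_mul, abs_of_pos (neg_pos.2 hgx)]
      _ ≤ -g x * ρ := mul_le_mul_of_nonneg_left (hwρ _) (neg_pos.2 hgx).le
      _ = ρ * -g x := mul_comm _ _

theorem exists_heteroclinic (ha : 0 < a) (hlr : l < r) (hg : ∀ x, HasDerivAt g (dg x) x)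
    (hdg : Continuous dg) (hgl : g l = 0) (hgr : g r = 0) (hneg : ∀ x ∈ Ioo l r, g x < 0)
    (hdgL : ∀ x ∈ Icc l r, |dg x| ≤ L) (hsmall : 10 * L ≤ a ^ 2) :
    ∃ u v : ℝ → ℝ, (∀ y, u y ∈ Ioo l r) ∧ Tendsto u atBot (𝓝 l) ∧ Tendsto u atTop (𝓝 r) ∧
      (∀ y, HasDerivAt u (v y) y) ∧ (∀ y, HasDerivAt v (a * v y + g (u y)) y) ∧
      (∀ y, 0 < v y ∧ v y ≤ 6 * L / (5 * a) * (r - l)) ∧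
      ∀ y, |a * v y + g (u y)| ≤ 5 * L / (2 * a) * v y := by
  obtain ⟨φ, hφ, hband⟩ := exists_phase_curve ha hlr hg hdg hgl hgr hneg hdgL hsmall
  have hρ : 2 * L / a ^ 2 ≤ 1 / 5 := by rw [div_le_iff₀ (by positivity)]; linarith
  have hL : 0 ≤ L := (abs_nonneg _).trans (hdgL l (left_mem_Icc.2 hlr.le))
  set K := 6 * L / (5 * a) with hK
  have hφle : ∀ x ∈ Ioo l r, 0 < φ x ∧ φ x ≤ K * (x - l) ∧ φ x ≤ K * (r - x) ∧
      |a * φ x + g x| ≤ 5 * L / (2 * a) * φ x := fun x hx => by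
    have hgx := neg_pos.2 (hneg x hx)
    obtain ⟨hgl', hgr'⟩ :=
      abs_le_of_abs_deriv_le_of_eq_zero hlr.le hg hdgL hgl hgr (Ioo_subset_Icc_self hx)
    obtain ⟨h₁, h₂⟩ := abs_le.1 (hband x hx)
    have hρg := mul_le_mul_of_nonneg_right hρ hgx.le
    have hlow : -g x ≤ 5 / 4 * (a * φ x) := by linarith
    have hup : a * φ x ≤ 6 / 5 * -g x := by linarith
    have hφK : ∀ d, -g x ≤ L * d → φ x ≤ K * d := fun d hd => by
      rw [hK, div_mul_eq_mul_div, le_div_iff₀ (by positivity)]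
      linarith
    refine ⟨pos_of_mul_pos_right (by linarith) ha.le, hφK _ ((neg_le_abs _).trans hgl'),
      hφK _ ((neg_le_abs _).trans hgr'), ?_⟩
    calc |a * φ x + g x| ≤ 2 * L / a ^ 2 * (5 / 4 * (a * φ x)) :=
          (hband x hx).trans (mul_le_mul_of_nonneg_left hlow (by positivity))
      _ = 5 * L / (2 * a) * φ x := by field_simp; ring
  obtain ⟨x₀, hx₀⟩ : (Ioo l r).Nonempty := nonempty_Ioo.2 hlr
  have hK₀ : 0 < K := pos_of_mul_pos_left ((hφle x₀ hx₀).1.trans_le (hφle x₀ hx₀).2.1)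
    (sub_pos.2 hx₀.1).le
  have hq : ∀ x ∈ Ioo l r, K⁻¹ / (x - l) ≤ (φ x)⁻¹ ∧ K⁻¹ / (r - x) ≤ (φ x)⁻¹ := fun x hx => by
    rw [div_eq_mul_inv, ← mul_inv, div_eq_mul_inv, ← mul_inv]
    exact ⟨inv_anti₀ (hφle x hx).1 (by linarith [(hφle x hx).2.1]),
      inv_anti₀ (hφle x hx).1 (by linarith [(hφle x hx).2.2])⟩
  obtain ⟨-, X, -, -, hXmem, hX, hXl, hXr⟩ := exists_orbit_Ioo (q := fun x => (φ x)⁻¹) hlr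
    (inv_pos.2 hK₀) (fun x hx => ((hφ x hx).continuousAt.continuousWithinAt).inv₀ (hφle x hx).1.ne')
    (fun x hx => (hq x hx).1) (fun x hx => (hq x hx).2)
  simp only [inv_inv] at hX
  refine ⟨X, fun y => φ (X y), hXmem, hXl, hXr, hX, fun y => ?_,
    fun y => ⟨(hφle _ (hXmem y)).1, (hφle _ (hXmem y)).2.1.trans (mul_le_mul_of_nonneg_left
      (by linarith [(hXmem y).2]) hK₀.le)⟩, fun y => (hφle _ (hXmem y)).2.2.2⟩
  refine ((hφ _ (hXmem y)).comp y (hX y)).congr_deriv ?_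
  field_simp [(hφle _ (hXmem y)).1.ne']

end PhaseCurve

section LogForce

variable {γ k c₁ c₂ : ℝ}

/-- The force of the profile equation in the variable `u = log P`: `(2 / k²) e^{-u} f(e^u)`, where
`c₁ = P⁻ P⁺ slope(·^γ)` and `c₂ = slope(·^(γ+1))` are the coefficients of `f`. -/
noncomputable def logForce (γ k c₁ c₂ u : ℝ) : ℝ :=
  2 / k ^ 2 * (exp ((γ - 1) * u) + c₁ * exp (-2 * u) - c₂ * exp (-u))

noncomputable def logForceDeriv (γ k c₁ c₂ u : ℝ) : ℝ :=
  2 / k ^ 2 * ((γ - 1) * exp ((γ - 1) * u) - 2 * c₁ * exp (-2 * u) + c₂ * exp (-u))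

theorem hasDerivAt_logForce (u : ℝ) :
    HasDerivAt (logForce γ k c₁ c₂) (logForceDeriv γ k c₁ c₂ u) u := by
  have hlin := fun c : ℝ => (hasDerivAt_id' u).const_mul c
  refine ((((hlin (γ - 1)).exp.add ((hlin (-2)).exp.const_mul c₁)).sub
    ((hasDerivAt_id' u).neg.exp.const_mul c₂)).const_mul (2 / k ^ 2)).congr_deriv ?_
  simp only [logForceDeriv, Pi.neg_apply]
  ring

theorem hasDerivAt_logForceDeriv (u : ℝ) :
    HasDerivAt (logForceDeriv γ k c₁ c₂)
      (2 / k ^ 2 * ((γ - 1) ^ 2 * exp ((γ - 1) * u) + 4 * c₁ * exp (-2 * u) - c₂ * exp (-u)))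
      u := by
  have hlin := fun c : ℝ => (hasDerivAt_id' u).const_mul c
  refine (((((hlin (γ - 1)).exp.const_mul (γ - 1)).sub ((hlin (-2)).exp.const_mul (2 * c₁))).add
    ((hasDerivAt_id' u).neg.exp.const_mul c₂)).const_mul (2 / k ^ 2)).congr_deriv ?_
  simp only [Pi.neg_apply]
  ring

theorem logForce_eq (u : ℝ) :
    logForce γ k c₁ c₂ u = 2 / k ^ 2 * (exp u ^ (γ + 1) + c₁ - c₂ * exp u) / exp u ^ 2 := by
  have hsq : exp u ^ 2 = exp (2 * u) := by rw [sq, ← exp_add, two_mul]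
  have e₁ : exp ((γ - 1) * u) = exp (u * (γ + 1)) / exp (2 * u) := by
    rw [← exp_sub]; ring_nf
  have e₂ : exp (-2 * u) = 1 / exp (2 * u) := by rw [one_div, ← exp_neg]; ring_nf
  have e₃ : exp (-u) = exp u / exp (2 * u) := by rw [← exp_sub]; ring_nf
  rw [logForce, e₁, e₂, e₃, Real.exp_mul, hsq]
  field_simp

theorem exp_mul_logForce (u : ℝ) :
    exp u * logForce γ k c₁ c₂ u = 2 / k ^ 2 * (exp u ^ γ + c₁ / exp u - c₂) := by
  rw [logForce_eq, rpow_add_one (exp_pos u).ne']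
  field_simp

end LogForce

section Chord

variable {γ p₁ p₂ : ℝ}

theorem rpow_add_one_add_sub_slope_mul_eq_zero (hp₁ : 0 < p₁) (hp₂ : 0 < p₂) (hne : p₁ ≠ p₂) :
    p₁ ^ (γ + 1) + p₁ * p₂ * slope (· ^ γ) p₁ p₂ - slope (· ^ (γ + 1)) p₁ p₂ * p₁ = 0 ∧
      p₂ ^ (γ + 1) + p₁ * p₂ * slope (· ^ γ) p₁ p₂ - slope (· ^ (γ + 1)) p₁ p₂ * p₂ = 0 := by
  have hsub : p₂ - p₁ ≠ 0 := sub_ne_zero.2 hne.symm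
  simp only [slope_def_field, rpow_add_one hp₁.ne', rpow_add_one hp₂.ne']
  constructor <;> field_simp <;> ring

/-- `p ↦ p ^ (γ + 1)` lies strictly below its chord over `[p₁, p₂]`. -/
theorem rpow_add_one_add_sub_slope_mul_neg (hγ : 0 < γ) (hp₁ : 0 < p₁) {p : ℝ} (h₁ : p₁ < p)
    (h₂ : p < p₂) :
    p ^ (γ + 1) + p₁ * p₂ * slope (· ^ γ) p₁ p₂ - slope (· ^ (γ + 1)) p₁ p₂ * p < 0 := by
  obtain ⟨z₁, z₂⟩ := rpow_add_one_add_sub_slope_mul_eq_zero (γ := γ) hp₁ (hp₁.trans (h₁.trans h₂))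
    (h₁.trans h₂).ne
  have hconv := (strictConvexOn_rpow (by linarith : 1 < γ + 1)).secant_strict_mono_aux1
    (mem_Ici.2 hp₁.le) (mem_Ici.2 (hp₁.trans (h₁.trans h₂)).le) h₁ h₂
  refine neg_of_mul_neg_right (a := p₂ - p₁) ?_ (sub_pos.2 (h₁.trans h₂)).le
  linear_combination hconv + (p₂ - p) * z₁ + (p - p₁) * z₂

theorem slope_rpow_nonneg (hγ : 0 ≤ γ) (hp₁ : 0 ≤ p₁) (h : p₁ < p₂) :
    (0 : ℝ) ≤ slope (· ^ γ) p₁ p₂ := by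
  rw [slope_def_field]
  exact div_nonneg (sub_nonneg.2 (rpow_le_rpow hp₁ h.le hγ)) (sub_nonneg.2 h.le)

theorem slope_rpow_add_one_le (hγ : 0 ≤ γ) (hp₁ : 0 ≤ p₁) (h : p₁ < p₂) :
    slope (· ^ (γ + 1)) p₁ p₂ ≤ (γ + 1) * p₂ ^ γ :=
  (convexOn_rpow (by linarith)).slope_le_of_hasDerivAt (mem_Ici.2 hp₁)
    (mem_Ici.2 (hp₁.trans h.le)) h
    (by simpa using Real.hasDerivAt_rpow_const (x := p₂) (p := γ + 1) (Or.inr (by linarith)))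

theorem logForce_log_eq_zero (k : ℝ) (hp₁ : 0 < p₁) (hp₂ : 0 < p₂) (hne : p₁ ≠ p₂) :
    logForce γ k (p₁ * p₂ * slope (· ^ γ) p₁ p₂) (slope (· ^ (γ + 1)) p₁ p₂) (log p₁) = 0 ∧
      logForce γ k (p₁ * p₂ * slope (· ^ γ) p₁ p₂) (slope (· ^ (γ + 1)) p₁ p₂) (log p₂) = 0 := by
  obtain ⟨z₁, z₂⟩ := rpow_add_one_add_sub_slope_mul_eq_zero (γ := γ) hp₁ hp₂ hne
  rw [logForce_eq, logForce_eq, exp_log hp₁, exp_log hp₂, z₁, z₂]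
  simp

theorem logForce_neg (hγ : 0 < γ) {k : ℝ} (hk : k ≠ 0) (hp₁ : 0 < p₁) (hp₂ : 0 < p₂) {u : ℝ}
    (hu : u ∈ Ioo (log p₁) (log p₂)) :
    logForce γ k (p₁ * p₂ * slope (· ^ γ) p₁ p₂) (slope (· ^ (γ + 1)) p₁ p₂) u < 0 := by
  rw [logForce_eq]
  refine div_neg_of_neg_of_pos (mul_neg_of_pos_of_neg (by positivity)
    (rpow_add_one_add_sub_slope_mul_neg hγ hp₁ ((log_lt_iff_lt_exp hp₁).1 hu.1)
      ((lt_log_iff_exp_lt hp₂).1 hu.2))) (by positivity)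

end Chord

theorem log_add_sub_log_le {p ε : ℝ} (hp : 0 < p) (hε : 0 ≤ ε) : log (p + ε) - log p ≤ ε / p := by
  rw [← log_div (by linarith) hp.ne']
  calc log ((p + ε) / p) ≤ (p + ε) / p - 1 := log_le_sub_one_of_pos (by positivity)
    _ = ε / p := by field_simp; ring

theorem abs_logForceDeriv_deriv_le {γ k c₁ c₂ Pm C₂ v : ℝ} (hγ : 1 ≤ γ) (hPm : 0 < Pm)
    (hc₁ : 0 ≤ c₁) (hc₁₂ : c₁ ≤ c₂ * Pm) (hc₂ : c₂ ≤ C₂) (hv : v ∈ Icc (log Pm) (log (Pm + 1))) :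
    |2 / k ^ 2 * ((γ - 1) ^ 2 * exp ((γ - 1) * v) + 4 * c₁ * exp (-2 * v) - c₂ * exp (-v))| ≤
      2 / k ^ 2 * ((γ - 1) ^ 2 * (Pm + 1) ^ (γ - 1) + 5 * (C₂ / Pm)) := by
  have hc₂₀ : 0 ≤ c₂ := nonneg_of_mul_nonneg_left (hc₁.trans hc₁₂) hPm
  have e₁ : exp ((γ - 1) * v) ≤ (Pm + 1) ^ (γ - 1) := by
    rw [mul_comm, Real.exp_mul]
    exact rpow_le_rpow (exp_pos v).le ((exp_le_exp.2 hv.2).trans (exp_log (by linarith)).le)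
      (by linarith)
  have e₂ : exp (-v) ≤ Pm⁻¹ := by
    rw [← exp_log hPm, ← exp_neg]
    exact exp_le_exp.2 (neg_le_neg hv.1)
  have hA : (γ - 1) ^ 2 * exp ((γ - 1) * v) ≤ (γ - 1) ^ 2 * (Pm + 1) ^ (γ - 1) :=
    mul_le_mul_of_nonneg_left e₁ (sq_nonneg _)
  have hB : 4 * c₁ * exp (-2 * v) ≤ 4 * (c₂ / Pm) :=
    calc 4 * c₁ * exp (-2 * v) = 4 * c₁ * exp (-v) ^ 2 := by rw [sq, ← exp_add]; ring_nf
      _ ≤ 4 * (c₂ * Pm) * Pm⁻¹ ^ 2 := by gcongr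
      _ = 4 * (c₂ / Pm) := by field_simp
  have hC : c₂ * exp (-v) ≤ c₂ / Pm := mul_le_mul_of_nonneg_left e₂ hc₂₀
  have hC₂ : c₂ / Pm ≤ C₂ / Pm := div_le_div_of_nonneg_right hc₂ hPm.le
  rw [abs_mul, abs_of_nonneg (by positivity : (0 : ℝ) ≤ 2 / k ^ 2)]
  refine mul_le_mul_of_nonneg_left (abs_le.2 ⟨?_, ?_⟩) (by positivity) <;>
    nlinarith [exp_pos ((γ - 1) * v), exp_pos (-2 * v), exp_pos (-v), sq_nonneg (γ - 1)]

theorem exists_abs_logForceDeriv_le {γ k Pm : ℝ} (hγ : 1 ≤ γ) (hk : 0 < k) (hPm : 0 < Pm) :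
    ∃ M > 0, ∀ ε ∈ Ioc 0 1, ∀ u ∈ Icc (log Pm) (log (Pm + ε)),
      |logForceDeriv γ k (Pm * (Pm + ε) * slope (· ^ γ) Pm (Pm + ε))
        (slope (· ^ (γ + 1)) Pm (Pm + ε)) u| ≤ M * ε := by
  set M₀ := 2 / k ^ 2 * ((γ - 1) ^ 2 * (Pm + 1) ^ (γ - 1) + 5 * ((γ + 1) * (Pm + 1) ^ γ / Pm))
  have hM₀ : 0 < M₀ := by positivity
  refine ⟨M₀ / Pm, by positivity, fun ε ⟨hε, hε₁⟩ u hu => ?_⟩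
  have hlt : Pm < Pm + ε := by linarith
  have hc₁ : (0 : ℝ) ≤ Pm * (Pm + ε) * slope (· ^ γ) Pm (Pm + ε) :=
    mul_nonneg (by positivity) (slope_rpow_nonneg (by linarith) hPm.le hlt)
  have hc₂ : slope (· ^ (γ + 1)) Pm (Pm + ε) ≤ (γ + 1) * (Pm + 1) ^ γ :=
    (slope_rpow_add_one_le (by linarith) hPm.le hlt).trans (mul_le_mul_of_nonneg_left
      (rpow_le_rpow (by linarith) (by linarith) (by linarith)) (by linarith))
  have hc₁₂ : Pm * (Pm + ε) * slope (· ^ γ) Pm (Pm + ε) ≤ slope (· ^ (γ + 1)) Pm (Pm + ε) * Pm := by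
    linarith [rpow_pos_of_pos hPm (γ + 1), (rpow_add_one_add_sub_slope_mul_eq_zero (γ := γ) hPm
      (by linarith) hlt.ne).1]
  have hzero := logForce_log_eq_zero (γ := γ) k hPm (by linarith) hlt.ne
  have hlogr : log (Pm + ε) ≤ log (Pm + 1) := log_le_log (by linarith) (by linarith)
  calc _ ≤ M₀ * (log (Pm + ε) - log Pm) :=
        abs_deriv_le_of_eq_zero_of_eq_zero ((log_lt_log_iff hPm (by linarith)).2 hlt)
          hasDerivAt_logForce hasDerivAt_logForceDeriv hzero.1 hzero.2
          (fun v hv => abs_logForceDeriv_deriv_le hγ hPm hc₁ hc₁₂ hc₂ ⟨hv.1, hv.2.trans hlogr⟩) hu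
    _ ≤ M₀ * (ε / Pm) := mul_le_mul_of_nonneg_left (log_add_sub_log_le hPm hε.le) hM₀.le
    _ = M₀ / Pm * ε := by ring

theorem exp_comp_of_log_profile {u v g F : ℝ → ℝ} {a : ℝ} (hu : ∀ y, HasDerivAt u (v y) y)
    (hv : ∀ y, HasDerivAt v (a * v y + g (u y)) y) (hg : Continuous g)
    (hF : ∀ x, exp x * g x = F (exp x)) :
    ContDiff ℝ 2 (fun y => exp (u y)) ∧ (∀ y, deriv (fun y => exp (u y)) y = exp (u y) * v y) ∧
      (∀ y, deriv (deriv fun y => exp (u y)) y = exp (u y) * (a * v y + g (u y) + v y ^ 2)) ∧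
      ∀ y, deriv (deriv fun y => exp (u y)) y = F (exp (u y)) +
        a * deriv (fun y => exp (u y)) y + deriv (fun y => exp (u y)) y ^ 2 / exp (u y) := by
  have hP : ∀ y, HasDerivAt (fun y => exp (u y)) (exp (u y) * v y) y := fun y => (hu y).exp
  have hP' : ∀ y, HasDerivAt (fun y => exp (u y) * v y)
      (exp (u y) * (a * v y + g (u y) + v y ^ 2)) y :=
    fun y => ((hP y).mul (hv y)).congr_deriv (by ring)
  have hucont : Continuous u := continuous_iff_continuousAt.2 fun y => (hu y).continuousAt
  have hvcont : Continuous v := continuous_iff_continuousAt.2 fun y => (hv y).continuousAt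
  have hd : deriv (fun y => exp (u y)) = fun y => exp (u y) * v y := funext fun y => (hP y).deriv
  have hdd : deriv (deriv fun y => exp (u y)) =
      fun y => exp (u y) * (a * v y + g (u y) + v y ^ 2) := by
    rw [hd]; exact funext fun y => (hP' y).deriv
  refine ⟨?_, fun y => by rw [hd], fun y => by rw [hdd], fun y => ?_⟩
  · rw [show (2 : WithTop ℕ∞) = 1 + 1 from rfl, contDiff_succ_iff_deriv, hd, contDiff_one_iff_deriv,
      funext fun y => (hP' y).deriv]
    exact ⟨fun y => (hP y).differentiableAt, by simp, fun y => (hP' y).differentiableAt,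
      by fun_prop⟩
  · rw [hdd, hd, ← hF]
    field_simp
    ring

theorem profile_derivative_bounds {E E₁ v G a B C₀ ε : ℝ} (hE : 0 < E) (hE₁ : E ≤ E₁) (hv : 0 < v)
    (hvle : v ≤ C₀ * ε ^ 2) (hband : |a * v + G| ≤ B * ε * v) (hB : 0 ≤ B) (hε : 0 ≤ ε)
    (hε₁ : ε ≤ 1) :
    |E * v| ≤ (E₁ * C₀ + B + C₀) * ε ^ 2 ∧
      |E * (a * v + G + v ^ 2)| ≤ (E₁ * C₀ + B + C₀) * ε * |E * v| := by
  have hC₀ : 0 ≤ C₀ * ε ^ 2 := hv.le.trans hvle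
  have hε₂ : C₀ * ε ^ 2 ≤ C₀ * ε := by
    rcases hε.eq_or_lt with rfl | hε₀
    · simp
    · exact mul_le_mul_of_nonneg_left (by nlinarith) (nonneg_of_mul_nonneg_left hC₀ (by positivity))
  have hEv : 0 < E * v := mul_pos hE hv
  have hsq : |v ^ 2| ≤ C₀ * ε * v := by
    rw [abs_of_nonneg (sq_nonneg v), sq]
    exact mul_le_mul_of_nonneg_right (hvle.trans hε₂) hv.le
  rw [abs_of_pos hEv, abs_mul, abs_of_pos hE]
  constructor
  · calc E * v ≤ E₁ * (C₀ * ε ^ 2) := mul_le_mul hE₁ hvle hv.le (hE.le.trans hE₁)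
      _ ≤ E₁ * (C₀ * ε ^ 2) + B * ε ^ 2 + C₀ * ε ^ 2 := by nlinarith [sq_nonneg ε]
      _ = _ := by ring
  · calc E * |a * v + G + v ^ 2| ≤ E * (B * ε * v + C₀ * ε * v) :=
          mul_le_mul_of_nonneg_left ((abs_add_le _ _).trans (add_le_add hband hsq)) hE.le
      _ ≤ (E₁ * C₀ * ε + B * ε + C₀ * ε) * (E * v) := by
          nlinarith [mul_nonneg (mul_nonneg (hE.le.trans hE₁) (hC₀.trans hε₂)) hEv.le]
      _ = _ := by ring

theorem exists_log_profile {γ k Pm a M ε : ℝ} (hγ : 0 < γ) (hk : k ≠ 0) (hPm : 0 < Pm) (ha : 0 < a)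
    (hε : 0 < ε)
    (hdg : ∀ u ∈ Icc (log Pm) (log (Pm + ε)), |logForceDeriv γ k
      (Pm * (Pm + ε) * slope (· ^ γ) Pm (Pm + ε)) (slope (· ^ (γ + 1)) Pm (Pm + ε)) u| ≤ M * ε)
    (hsmall : 10 * (M * ε) ≤ a ^ 2) :
    ∃ u v : ℝ → ℝ, (∀ y, exp (u y) ∈ Ioo Pm (Pm + ε)) ∧
      Tendsto (fun y => exp (u y)) atBot (𝓝 Pm) ∧ Tendsto (fun y => exp (u y)) atTop (𝓝 (Pm + ε)) ∧
      (∀ y, HasDerivAt u (v y) y) ∧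
      (∀ y, HasDerivAt v (a * v y + logForce γ k (Pm * (Pm + ε) * slope (· ^ γ) Pm (Pm + ε))
        (slope (· ^ (γ + 1)) Pm (Pm + ε)) (u y)) y) ∧
      (∀ y, 0 < v y ∧ v y ≤ 6 * M / (5 * a * Pm) * ε ^ 2) ∧
      ∀ y, |a * v y + logForce γ k (Pm * (Pm + ε) * slope (· ^ γ) Pm (Pm + ε))
        (slope (· ^ (γ + 1)) Pm (Pm + ε)) (u y)| ≤ 5 * M / (2 * a) * ε * v y := by
  have hlt : Pm < Pm + ε := by linarith
  obtain ⟨hl, hr⟩ := logForce_log_eq_zero (γ := γ) k hPm (by linarith) hlt.ne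
  obtain ⟨u, v, humem, hul, hur, hu, hv, hvpos, hband⟩ :=
    exists_heteroclinic ha ((log_lt_log_iff hPm (by linarith)).2 hlt) hasDerivAt_logForce
      (continuous_iff_continuousAt.2 fun x => (hasDerivAt_logForceDeriv x).continuousAt) hl hr
      (fun x hx => logForce_neg hγ hk hPm (by linarith) hx) hdg hsmall
  have hM : 0 ≤ M * ε := (abs_nonneg _).trans (hdg _ (left_mem_Icc.2 (log_le_log hPm hlt.le)))
  refine ⟨u, v, fun y => ⟨(log_lt_iff_lt_exp hPm).1 (humem y).1,
    (lt_log_iff_exp_lt (by linarith)).1 (humem y).2⟩, ?_, ?_, hu, hv, fun y => ⟨(hvpos y).1, ?_⟩,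
    fun y => (hband y).trans_eq (by ring)⟩
  · simpa [Function.comp_def, exp_log hPm] using (continuous_exp.tendsto _).comp hul
  · simpa [Function.comp_def, exp_log (by linarith : 0 < Pm + ε)] using
      (continuous_exp.tendsto _).comp hur
  · calc v y ≤ 6 * (M * ε) / (5 * a) * (log (Pm + ε) - log Pm) := (hvpos y).2
      _ ≤ 6 * (M * ε) / (5 * a) * (ε / Pm) :=
          mul_le_mul_of_nonneg_left (log_add_sub_log_le hPm hε.le) (by positivity)
      _ = 6 * M / (5 * a * Pm) * ε ^ 2 := by field_simp

/-- existence of a monotone increasing small-amplitude dispersive shock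
profile for `s < 0` (with `P⁺ = P⁻ + ε`), with `|P'| ≤ Cε²` and `|P''| ≤ Cε|P'|`. -/
theorem statement_4 (γ μ k s Pm : ℝ) (hγ : 1 ≤ γ) (hμ : 0 < μ) (hk : 0 < k)
    (hs : s < 0) (hPm : 0 < Pm) :
    ∃ ε₀ > (0:ℝ), ∃ C > (0:ℝ), ∀ ε : ℝ, 0 < ε → ε < ε₀ →
      ∃ P : ℝ → ℝ, ContDiff ℝ 2 P ∧
        (∀ y : ℝ, P y ∈ Set.Icc Pm (Pm + ε)) ∧
        (∀ y : ℝ, deriv (deriv P) y =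
          (2 / k ^ 2) *
            ((P y) ^ γ + (Pm * (Pm + ε) / P y) * (((Pm + ε) ^ γ - Pm ^ γ) / ((Pm + ε) - Pm))
              - ((Pm + ε) ^ (γ + 1) - Pm ^ (γ + 1)) / ((Pm + ε) - Pm))
          - (2 * s * μ / k ^ 2) * deriv P y + (deriv P y) ^ 2 / P y) ∧
        Filter.Tendsto P Filter.atBot (nhds Pm) ∧
        Filter.Tendsto P Filter.atTop (nhds (Pm + ε)) ∧
        (∀ y : ℝ, 0 < deriv P y) ∧
        (∀ y : ℝ, |deriv P y| ≤ C * ε ^ 2) ∧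
        (∀ y : ℝ, |deriv (deriv P) y| ≤ C * ε * |deriv P y|) := by
  set a := -(2 * s * μ / k ^ 2)
  have ha : 0 < a := by
    have : 0 < 2 * -s * μ / k ^ 2 := by have := neg_pos.2 hs; positivity
    linarith [show -(2 * s * μ / k ^ 2) = 2 * -s * μ / k ^ 2 by ring]
  obtain ⟨M, hM, hdg⟩ := exists_abs_logForceDeriv_le hγ hk hPm
  refine ⟨min 1 (a ^ 2 / (10 * M)), by positivity,
    (Pm + 1) * (6 * M / (5 * a * Pm)) + 5 * M / (2 * a) + 6 * M / (5 * a * Pm), by positivity,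
    fun ε hε hεε₀ => ?_⟩
  have hε₁ : ε ≤ 1 := hεε₀.le.trans (min_le_left _ _)
  have hsmall : 10 * (M * ε) ≤ a ^ 2 := by
    have := hεε₀.le.trans (min_le_right _ _)
    rw [le_div_iff₀ (by positivity)] at this
    linarith
  obtain ⟨u, v, hE, hul, hur, hu, hv, hvpos, hband⟩ :=
    exists_log_profile (by linarith) hk.ne' hPm ha hε (hdg ε ⟨hε, hε₁⟩) hsmall
  obtain ⟨hP, hP', hP'', hODE⟩ := exp_comp_of_log_profile hu hv
    (continuous_iff_continuousAt.2 fun x => (hasDerivAt_logForce x).continuousAt)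
    (F := fun p => 2 / k ^ 2 * (p ^ γ + Pm * (Pm + ε) * slope (· ^ γ) Pm (Pm + ε) / p
      - slope (· ^ (γ + 1)) Pm (Pm + ε))) exp_mul_logForce
  have hbounds := fun y => profile_derivative_bounds (exp_pos (u y)) (by linarith [(hE y).2] :
    exp (u y) ≤ Pm + 1) (hvpos y).1 (hvpos y).2 (hband y) (by positivity) hε.le hε₁
  refine ⟨fun y => exp (u y), hP, fun y => Ioo_subset_Icc_self (hE y), fun y => ?_, hul, hur,
    fun y => ?_, fun y => ?_, fun y => ?_⟩
  · rw [hODE, slope_def_field, slope_def_field]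
    simp only [a]
    ring
  · rw [hP']; exact mul_pos (exp_pos _) (hvpos y).1
  · rw [hP']; exact (hbounds y).1
  · rw [hP'', hP']; exact (hbounds y).2
end

section
/- Let γ ≥ 1 and P⁻ > 0. For ε ∈ (0, P⁻) define A(ε) = √(P⁻(P⁻ − ε))·√(((P⁻)^γ − (P⁻ − ε)^γ)/ε) and let c_s(P⁻) = √(γ(P⁻)^{γ−1}) be the sound speed at P⁻. Then there exist ε₀ > 0 and C > 0 such that for all ε ∈ (0, ε₀): |A(ε) − P⁻c_s(P⁻) + ((γ+1)/4)c_s(P⁻)ε| ≤ Cε². -/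
/-!
With `c = c_s(P⁻)`, `q(ε) = ((P⁻)^γ - (P⁻ - ε)^γ) / ε` and `T(ε) = P⁻c - ((γ+1)/4) c ε`, we have
`A(ε)² = P⁻(P⁻ - ε) q(ε)`. A second-order Taylor expansion of `t ↦ (P⁻ - t)^γ`, whose cubic
remainder comes from applying the comparison principle for derivatives three times, gives
`q(ε) = c² - (γ(γ-1)/2) (P⁻)^(γ-2) ε + O(ε²)`. Then `A² - T² = O(ε²)`, because the coefficient
`(γ+1)/4` is exactly the one that cancels the first-order terms. As `A + T ≥ P⁻c/2` for small `ε`,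
`|A - T| = |A² - T²| / (A + T) = O(ε²)`.
-/

open Set

lemma abs_le_of_abs_deriv_le_mul_pow {h h' : ℝ → ℝ} {δ C : ℝ} {k : ℕ} (h0 : h 0 = 0)
    (hder : ∀ t ∈ Icc 0 δ, HasDerivAt h (h' t) t)
    (hbound : ∀ t ∈ Icc 0 δ, |h' t| ≤ C * t ^ k) :
    ∀ t ∈ Icc 0 δ, |h t| ≤ C / (k + 1) * t ^ (k + 1) := by
  have hB (x : ℝ) : HasDerivAt (fun s => C / (k + 1) * s ^ (k + 1)) (C * x ^ k) x := by
    refine ((hasDerivAt_pow (k + 1) x).const_mul (C / (k + 1))).congr_deriv ?_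
    push_cast
    field_simp
  intro t ht
  exact image_norm_le_of_norm_deriv_right_le_deriv_boundary
    (fun x hx => (hder x hx).continuousAt.continuousWithinAt)
    (fun x hx => (hder x (Ico_subset_Icc_self hx)).hasDerivWithinAt)
    (by simp [h0]) hB (fun x hx => hbound x (Ico_subset_Icc_self hx)) ht

lemma abs_sub_taylor_two_le {f f₁ f₂ f₃ : ℝ → ℝ} {δ M : ℝ}
    (hf : ∀ t ∈ Icc 0 δ, HasDerivAt f (f₁ t) t)
    (hf₁ : ∀ t ∈ Icc 0 δ, HasDerivAt f₁ (f₂ t) t)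
    (hf₂ : ∀ t ∈ Icc 0 δ, HasDerivAt f₂ (f₃ t) t)
    (hM : ∀ t ∈ Icc 0 δ, |f₃ t| ≤ M) :
    ∀ t ∈ Icc 0 δ, |f t - f 0 - f₁ 0 * t - f₂ 0 / 2 * t ^ 2| ≤ M / 6 * t ^ 3 := by
  have hlin (a t : ℝ) : HasDerivAt (fun s => a * s) a t := by
    simpa using (hasDerivAt_id t).const_mul a
  have hquad (a t : ℝ) : HasDerivAt (fun s => a / 2 * s ^ 2) (a * t) t := by
    refine ((hasDerivAt_pow 2 t).const_mul (a / 2)).congr_deriv ?_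
    ring
  have h₂ := abs_le_of_abs_deriv_le_mul_pow (h := fun t => f₂ t - f₂ 0) (k := 0) (by simp)
    (fun t ht => (hf₂ t ht).sub_const _) (by simpa using hM)
  have h₁ := abs_le_of_abs_deriv_le_mul_pow (h := fun t => f₁ t - f₁ 0 - f₂ 0 * t) (by simp)
    (fun t ht => ((hf₁ t ht).sub_const _).sub (hlin _ t)) h₂
  have h₀ := abs_le_of_abs_deriv_le_mul_pow
    (h := fun t => f t - f 0 - f₁ 0 * t - f₂ 0 / 2 * t ^ 2) (by simp)
    (fun t ht => (((hf t ht).sub_const _).sub (hlin _ t)).sub (hquad _ t)) h₁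
  norm_num at h₀
  intro t ht
  convert h₀ t ht.1 ht.2 using 2
  ring

lemma hasDerivAt_mul_rpow_sub {a c p t : ℝ} (ht : t < a) :
    HasDerivAt (fun s => c * (a - s) ^ p) (-(c * p) * (a - t) ^ (p - 1)) t := by
  have hsub : HasDerivAt (fun s => a - s) (-1) t := (hasDerivAt_id t).const_sub a
  have hpow : HasDerivAt (fun x => x ^ p) (p * (a - t) ^ (p - 1)) (a - t) :=
    Real.hasDerivAt_rpow_const (Or.inl (sub_pos.2 ht).ne')
  exact ((hpow.comp t hsub).const_mul c).congr_deriv (by ring)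

lemma exists_abs_rpow_sub_taylor_le {a : ℝ} (ha : 0 < a) (p : ℝ) :
    ∃ K, ∀ t ∈ Icc 0 (a / 2),
      |(a - t) ^ p - a ^ p + p * a ^ (p - 1) * t - p * (p - 1) / 2 * a ^ (p - 2) * t ^ 2|
        ≤ K * t ^ 3 := by
  set D : ℝ → ℝ → ℝ → ℝ := fun c q s => c * (a - s) ^ q
  have hD {c q c' q' : ℝ} (hc : c' = -(c * q)) (hq : q' = q - 1) :
      ∀ t ∈ Icc 0 (a / 2), HasDerivAt (D c q) (D c' q' t) t := fun t ht => by
    subst hc hq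
    exact hasDerivAt_mul_rpow_sub (by linarith [ht.2])
  have hcont : ContinuousOn (D (-(p * (p - 1) * (p - 2))) (p - 3)) (Icc 0 (a / 2)) :=
    fun t ht => (hD rfl rfl t ht).continuousAt.continuousWithinAt
  obtain ⟨M, hM⟩ := isCompact_Icc.exists_bound_of_continuousOn hcont
  refine ⟨M / 6, fun t ht => ?_⟩
  have := abs_sub_taylor_two_le (hD (c := 1) (q := p) (c' := -p) (q' := p - 1) (by ring) rfl)
    (hD (c' := p * (p - 1)) (q' := p - 2) (by ring) (by ring)) (hD (by ring) (by ring)) hM t ht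
  simp only [D, sub_zero, one_mul] at this
  convert this using 2
  ring

lemma abs_sub_le_of_abs_sq_sub_sq_le {x y m K : ℝ} (hx : 0 ≤ x) (hm : 0 < m) (hy : m ≤ y)
    (h : |x ^ 2 - y ^ 2| ≤ K) : |x - y| ≤ K / m := by
  rw [le_div_iff₀ hm]
  calc |x - y| * m ≤ |x - y| * (x + y) := by gcongr; linarith
    _ = |x ^ 2 - y ^ 2| := by
      rw [show x ^ 2 - y ^ 2 = (x - y) * (x + y) by ring, abs_mul,
        abs_of_nonneg (show 0 ≤ x + y by linarith)]
    _ ≤ K := h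

lemma exists_abs_momentum_sq_sub_le {γ P c : ℝ} (hP : 0 < P) (hc : c ^ 2 = γ * P ^ (γ - 1)) :
    ∃ K, ∀ ε ∈ Ioc 0 (P / 2),
      |P * (P - ε) * ((P ^ γ - (P - ε) ^ γ) / ε) - (P * c - (γ + 1) / 4 * c * ε) ^ 2|
        ≤ K * ε ^ 2 := by
  obtain ⟨K, hK⟩ := exists_abs_rpow_sub_taylor_le hP γ
  set b := γ * (γ - 1) / 2 * P ^ (γ - 2)
  set d := (γ + 1) / 4 * c
  refine ⟨|P * b - d ^ 2| + P ^ 2 * K, fun ε ⟨hε, hε_half⟩ => ?_⟩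
  set R := (P - ε) ^ γ - P ^ γ + γ * P ^ (γ - 1) * ε - b * ε ^ 2
  set r := (P ^ γ - (P - ε) ^ γ) / ε - (c ^ 2 - b * ε)
  have hr : |r| ≤ K * ε ^ 2 := by
    have hrR : r = -R / ε := by
      simp only [r, R, hc]
      field_simp
      ring
    rw [hrR, abs_div, abs_neg, abs_of_pos hε, div_le_iff₀ hε]
    linarith [hK ε ⟨hε.le, hε_half⟩]
  have hc' : c ^ 2 = γ * (P ^ (γ - 2) * P) := by
    rw [hc, ← Real.rpow_add_one hP.ne']
    ring_nf
  -- `P²b = ((γ-1)/2) P c²` and `2Pcd = ((γ+1)/2) P c²`, so the terms linear in `ε` cancel.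
  have hexp : P * (P - ε) * ((P ^ γ - (P - ε) ^ γ) / ε) - (P * c - d * ε) ^ 2
      = (P * b - d ^ 2) * ε ^ 2 + P * (P - ε) * r := by
    simp only [r, b, d]
    linear_combination ε * (γ - 1) / 2 * P * hc'
  rw [hexp]
  calc _ ≤ |(P * b - d ^ 2) * ε ^ 2| + |P * (P - ε) * r| := abs_add_le _ _
    _ ≤ |P * b - d ^ 2| * ε ^ 2 + P ^ 2 * (K * ε ^ 2) := by
      rw [abs_mul, abs_mul, abs_of_nonneg (sq_nonneg ε),
        abs_of_nonneg (by nlinarith : 0 ≤ P * (P - ε))]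
      gcongr
      nlinarith
    _ = _ := by ring

/-- expansion of the momentum integration constant:
`A(ε) = P⁻c_s(P⁻) − ((γ+1)/4)c_s(P⁻)ε + O(ε²)` where
`A(ε) = √(P⁻(P⁻−ε))·√(((P⁻)^γ − (P⁻−ε)^γ)/ε)` and `c_s(P⁻) = √(γ(P⁻)^{γ−1})`. -/
theorem statement_6 (γ Pm : ℝ) (hγ : 1 ≤ γ) (hPm : 0 < Pm) :
    ∃ ε₀ > (0:ℝ), ∃ C > (0:ℝ), ∀ ε : ℝ, 0 < ε → ε < ε₀ → ε < Pm →
      |Real.sqrt (Pm * (Pm - ε)) * Real.sqrt ((Pm ^ γ - (Pm - ε) ^ γ) / ε)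
        - Pm * Real.sqrt (γ * Pm ^ (γ - 1))
        + ((γ + 1) / 4) * Real.sqrt (γ * Pm ^ (γ - 1)) * ε| ≤ C * ε ^ 2 := by
  have hγ_pos : 0 < γ := by linarith
  set c := √(γ * Pm ^ (γ - 1))
  have hc : 0 < c := Real.sqrt_pos.2 (by positivity)
  obtain ⟨K, hK⟩ := exists_abs_momentum_sq_sub_le hPm (Real.sq_sqrt (by positivity) : c ^ 2 = _)
  set d := (γ + 1) / 4 * c
  refine ⟨min (Pm / 2) (Pm * c / (2 * d)), by positivity, max (2 * K / (Pm * c)) 1, by positivity,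
    fun ε hε hε₀ _ => ?_⟩
  have hε_half : ε ≤ Pm / 2 := (hε₀.trans_le (min_le_left _ _)).le
  have hT : Pm * c / 2 ≤ Pm * c - d * ε := by
    have := hε₀.trans_le (min_le_right _ _)
    rw [lt_div_iff₀ (by positivity)] at this
    linarith
  have hG : 0 ≤ (Pm ^ γ - (Pm - ε) ^ γ) / ε :=
    div_nonneg (sub_nonneg.2 (Real.rpow_le_rpow (by linarith) (by linarith) hγ_pos.le)) hε.le
  have hA_sq : (√(Pm * (Pm - ε)) * √((Pm ^ γ - (Pm - ε) ^ γ) / ε)) ^ 2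
      = Pm * (Pm - ε) * ((Pm ^ γ - (Pm - ε) ^ γ) / ε) := by
    rw [mul_pow, Real.sq_sqrt (by nlinarith), Real.sq_sqrt hG]
  have hA := abs_sub_le_of_abs_sq_sub_sq_le (by positivity) (by positivity) hT
    (hA_sq ▸ hK ε ⟨hε, hε_half⟩)
  calc _ = |√(Pm * (Pm - ε)) * √((Pm ^ γ - (Pm - ε) ^ γ) / ε) - (Pm * c - d * ε)| := by ring_nf
    _ ≤ K * ε ^ 2 / (Pm * c / 2) := hA
    _ = 2 * K / (Pm * c) * ε ^ 2 := by field_simp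
    _ ≤ _ := by gcongr; exact le_max_left _ _
end

section
/- Let γ ≥ 1, μ > 0, k > 0, P⁻ > 0, C > 0 and s ∈ (0, s̄) with s̄ = min{2c_s(P⁻), ((γ+1)/2)c_s(P⁻)}. Then there exist ε₁ > 0 and constants c₁ ∈ (0,1), c₂ > 1, c₃ > 0, c₄ > 0 such that for every ε ∈ (0, ε₁), setting P⁺ = P⁻ − ε and A = √(P⁻P⁺)·√(((P⁻)^γ − (P⁺)^γ)/ε), and for every twice continuously differentiable profile P : ℝ → [P⁺, P⁻] solving P'' = (2/k²)f(P) − (2sμ/k²)P' + (P')²/P with P(−∞) = P⁻, P(+∞) = P⁺, P' < 0, |P'| ≤ Cε² and |P''| ≤ Cε|P'| on ℝ, the functions f₁(y) = (s − A/P(y))² − γP(y)^{γ−1} and f₂(y) = −s + 2A/P(y) satisfy for all y ∈ ℝ: −c₁⁻¹ ≤ f₁(y) ≤ −c₁ < 0; 0 < c₂⁻¹ ≤ f₂(y) ≤ c₂; c₃⁻¹|P'(y)| ≤ f₁'(y) ≤ c₃|P'(y)|; c₃⁻¹|P'(y)| ≤ f₂'(y) ≤ c₃|P'(y)|; |f₁''(y)|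 ≤ c₄ε|P'(y)|; and |f₂''(y)| ≤ c₄ε|P'(y)|. -/
/-!
Write `f₁ = F₁(A, P)` and `f₂ = F₂(A, P)` with `F₁(a, p) = (s - a/p)² - γ p^(γ-1)` and
`F₂(a, p) = -s + 2a/p`. As `ε → 0` the amplitude `A` tends to `P⁻ c`, `c = c_s(P⁻)`, and the
profile is squeezed into `[P⁻ - ε, P⁻]`, so `(A, P(y))` lies in any prescribed neighbourhood of
`(P⁻ c, P⁻)`, uniformly in `y`. At that point `F₁ = s(s - 2c) < 0`, `F₂ = 2c - s > 0`,
`∂ₚF₁ = c(2s - (γ+1)c)/P⁻ < 0` and `∂ₚF₂ = -2c/P⁻ < 0`, which is where `0 < s < s̄` enters;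
by continuity these signs persist nearby, with uniform bounds. The chain rule
`fᵢ' = ∂ₚFᵢ · P'` with `P' < 0` gives the two-sided bounds on `fᵢ'`, and
`fᵢ'' = ∂ₚ²Fᵢ · P'² + ∂ₚFᵢ · P''` together with `|P'| ≤ Cε²`, `|P''| ≤ Cε|P'|` gives
`|fᵢ''| ≤ c₄ ε |P'|`.
-/

open Filter Topology Set

theorem HasDerivAt.tendsto_sub_div_nhdsGT {f : ℝ → ℝ} {f' x : ℝ} (h : HasDerivAt f f' x) :
    Tendsto (fun ε => (f x - f (x - ε)) / ε) (𝓝[>] 0) (𝓝 f') := by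
  have h' := h.tendsto_slope_zero_left.comp (neg_zero (G := ℝ) ▸ tendsto_neg_nhdsGT_neg)
  refine h'.congr fun ε => ?_
  simp only [Function.comp_apply, smul_eq_mul, ← sub_eq_add_neg, inv_neg]
  ring

theorem tendsto_amplitude (γ : ℝ) {p : ℝ} (hp : 0 < p) :
    Tendsto (fun ε => √(p * (p - ε)) * √((p ^ γ - (p - ε) ^ γ) / ε)) (𝓝[>] 0)
      (𝓝 (p * √(γ * p ^ (γ - 1)))) := by
  have h₁ : Tendsto (fun ε => √(p * (p - ε))) (𝓝[>] 0) (𝓝 p) := by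
    have h : Continuous fun ε => √(p * (p - ε)) := by fun_prop
    simpa [Real.sqrt_mul_self hp.le] using h.tendsto 0 |>.mono_left nhdsWithin_le_nhds
  have h₂ := (Real.hasDerivAt_rpow_const (p := γ) (Or.inl hp.ne')).tendsto_sub_div_nhdsGT
  exact h₁.mul (Real.continuous_sqrt.tendsto _ |>.comp h₂)

theorem eventually_forall_Icc_mem {Q : ℝ × ℝ → Prop} {A : ℝ → ℝ} {a₀ p₀ : ℝ}
    (hQ : ∀ᶠ z in 𝓝 (a₀, p₀), Q z) (hA : Tendsto A (𝓝[>] 0) (𝓝 a₀)) :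
    ∀ᶠ ε in 𝓝[>] 0, ∀ p ∈ Icc (p₀ - ε) p₀, Q (A ε, p) := by
  obtain ⟨δ, hδ, hQδ⟩ := Metric.eventually_nhds_iff.1 hQ
  filter_upwards [Metric.tendsto_nhds.1 hA δ hδ,
    eventually_nhdsWithin_of_eventually_nhds (eventually_lt_nhds hδ)] with ε hAε hε p hp
  refine hQδ (max_lt hAε ?_)
  rw [Real.dist_eq, abs_sub_comm, abs_of_nonneg (by linarith [hp.2])]
  linarith [hp.1]

section ContinuousAt

variable {X : Type*} [TopologicalSpace X] {g : X → ℝ} {x : X}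

theorem ContinuousAt.exists_eventually_mem_Icc_inv (hg : ContinuousAt g x) (hx : 0 < g x) :
    ∃ c > 1, ∀ᶠ z in 𝓝 x, g z ∈ Icc c⁻¹ c := by
  refine ⟨max 2 (max (2 / g x) (2 * g x)), lt_max_of_lt_left one_lt_two, ?_⟩
  filter_upwards [hg.eventually_const_lt (half_lt_self hx),
    hg.eventually_lt_const (lt_two_mul_self hx)] with z hz₁ hz₂
  constructor
  · calc (max 2 (max (2 / g x) (2 * g x)))⁻¹ ≤ (2 / g x)⁻¹ :=
          inv_anti₀ (by positivity) ((le_max_left _ _).trans (le_max_right _ _))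
      _ ≤ g z := by rw [inv_div]; exact hz₁.le
  · exact hz₂.le.trans ((le_max_right _ _).trans (le_max_right _ _))

theorem ContinuousAt.exists_eventually_abs_le (hg : ContinuousAt g x) :
    ∃ M > 0, ∀ᶠ z in 𝓝 x, |g z| ≤ M :=
  ⟨|g x| + 1, by positivity, (hg.abs.eventually_lt_const (lt_add_one _)).mono fun _ h => h.le⟩

end ContinuousAt

section Composition

variable {F F' F'' P : ℝ → ℝ}

theorem deriv_comp_eq_of_hasDerivAt (hP : Differentiable ℝ P)
    (hF : ∀ y, HasDerivAt F (F' (P y)) (P y)) :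
    deriv (F ∘ P) = fun y => F' (P y) * deriv P y :=
  funext fun y => ((hF y).comp y (hP y).hasDerivAt).deriv

theorem deriv_deriv_comp_eq_of_hasDerivAt (hP : ContDiff ℝ 2 P)
    (hF : ∀ y, HasDerivAt F (F' (P y)) (P y)) (hF' : ∀ y, HasDerivAt F' (F'' (P y)) (P y))
    (y : ℝ) :
    deriv (deriv (F ∘ P)) y = F'' (P y) * deriv P y ^ 2 + F' (P y) * deriv (deriv P) y := by
  have hP₁ : Differentiable ℝ P := hP.differentiable two_ne_zero
  have h : HasDerivAt (fun y => F' (P y) * deriv P y)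
      (F'' (P y) * deriv P y * deriv P y + F' (P y) * deriv (deriv P) y) y :=
    ((hF' y).comp y (hP₁ y).hasDerivAt).mul (hP.differentiable_deriv_two y).hasDerivAt
  rw [deriv_comp_eq_of_hasDerivAt hP₁ hF, h.deriv]
  ring

theorem mul_mem_Icc_of_neg {g d c : ℝ} (hg : -g ∈ Icc c⁻¹ c) (hd : d < 0) :
    g * d ∈ Icc (c⁻¹ * |d|) (c * |d|) := by
  rw [abs_of_neg hd, show g * d = -g * -d by ring]
  exact ⟨mul_le_mul_of_nonneg_right hg.1 (by linarith),
    mul_le_mul_of_nonneg_right hg.2 (by linarith)⟩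

theorem abs_add_mul_sq_le {h g d d' M K C ε : ℝ} (hh : |h| ≤ M) (hg : |g| ≤ K) (hC : 0 ≤ C)
    (hε₀ : 0 ≤ ε) (hε₁ : ε ≤ 1) (hd : |d| ≤ C * ε ^ 2) (hd' : |d'| ≤ C * ε * |d|) :
    |h * d ^ 2 + g * d'| ≤ C * (M + K) * ε * |d| := by
  have hM : 0 ≤ M := (abs_nonneg h).trans hh
  calc |h * d ^ 2 + g * d'| ≤ |h| * |d| * |d| + |g| * |d'| :=
        (abs_add_le _ _).trans_eq (by rw [abs_mul, abs_mul, abs_pow, sq, mul_assoc])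
    _ ≤ M * (C * ε ^ 2) * |d| + K * (C * ε * |d|) := by
        gcongr; exact (abs_nonneg g).trans hg
    _ ≤ C * (M + K) * ε * |d| := by
        have : C * ε ^ 2 ≤ C * ε := by gcongr; nlinarith
        nlinarith [mul_le_mul_of_nonneg_left this hM, abs_nonneg d]

theorem deriv_comp_bounds {c M C ε y : ℝ} (hP : ContDiff ℝ 2 P)
    (hF : ∀ x, HasDerivAt F (F' (P x)) (P x)) (hF' : ∀ x, HasDerivAt F' (F'' (P x)) (P x))
    (hc : 0 < c) (hF'y : -F' (P y) ∈ Icc c⁻¹ c) (hF''y : |F'' (P y)| ≤ M)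
    (hC : 0 ≤ C) (hε₀ : 0 ≤ ε) (hε₁ : ε ≤ 1) (hPy : deriv P y < 0)
    (hP'y : |deriv P y| ≤ C * ε ^ 2) (hP''y : |deriv (deriv P) y| ≤ C * ε * |deriv P y|) :
    deriv (F ∘ P) y ∈ Icc (c⁻¹ * |deriv P y|) (c * |deriv P y|) ∧
      |deriv (deriv (F ∘ P)) y| ≤ C * (M + c) * ε * |deriv P y| := by
  have hF'c : |F' (P y)| ≤ c := by
    rw [abs_le]; constructor <;> linarith [hF'y.2, inv_pos.2 hc, hF'y.1]
  rw [deriv_deriv_comp_eq_of_hasDerivAt hP hF hF',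
    deriv_comp_eq_of_hasDerivAt (hP.differentiable two_ne_zero) hF]
  exact ⟨mul_mem_Icc_of_neg hF'y hPy, abs_add_mul_sq_le hF''y hF'c hC hε₀ hε₁ hP'y hP''y⟩

end Composition

noncomputable section Coefficients

variable (γ s a : ℝ) {p : ℝ}

/- `coeff₁ γ s a` and `coeff₂ s a` are `f₁` and `f₂` as functions of the value `p = P(y)`, with
`A = a`; the primes are derivatives in `p`. -/

def coeff₁ (p : ℝ) : ℝ := (s - a / p) ^ 2 - γ * p ^ (γ - 1)

def coeff₁' (p : ℝ) : ℝ := 2 * (s - a / p) * (a / p ^ 2) - γ * (γ - 1) * p ^ (γ - 2)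

def coeff₁'' (p : ℝ) : ℝ :=
  2 * (a / p ^ 2) ^ 2 - 4 * (s - a / p) * (a / p ^ 3) - γ * (γ - 1) * (γ - 2) * p ^ (γ - 3)

def coeff₂ (p : ℝ) : ℝ := -s + 2 * a / p

def coeff₂' (p : ℝ) : ℝ := -(2 * a / p ^ 2)

def coeff₂'' (p : ℝ) : ℝ := 4 * a / p ^ 3

theorem hasDerivAt_coeff₁ (hp : p ≠ 0) : HasDerivAt (coeff₁ γ s a) (coeff₁' γ s a p) p := by
  refine ((((hasDerivAt_const p a).fun_div (hasDerivAt_id' p) hp).const_sub s).pow 2 |>.sub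
    ((Real.hasDerivAt_rpow_const (p := γ - 1) (Or.inl hp)).const_mul γ)).congr_deriv ?_
  rw [coeff₁', show γ - 1 - 1 = γ - 2 by ring]
  norm_num
  field_simp

theorem hasDerivAt_coeff₁' (hp : p ≠ 0) : HasDerivAt (coeff₁' γ s a) (coeff₁'' γ s a p) p := by
  refine (((((hasDerivAt_const p a).fun_div (hasDerivAt_id' p) hp).const_sub s).const_mul 2).mul
    ((hasDerivAt_const p a).fun_div (hasDerivAt_pow 2 p) (pow_ne_zero 2 hp)) |>.sub
    ((Real.hasDerivAt_rpow_const (p := γ - 2) (Or.inl hp)).const_mul (γ * (γ - 1)))).congr_deriv ?_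
  rw [coeff₁'', show γ - 2 - 1 = γ - 3 by ring]
  norm_num
  field_simp
  ring

theorem hasDerivAt_coeff₂ (hp : p ≠ 0) : HasDerivAt (coeff₂ s a) (coeff₂' a p) p := by
  refine (((hasDerivAt_const p (2 * a)).fun_div (hasDerivAt_id' p) hp).const_add
    (-s)).congr_deriv ?_
  rw [coeff₂']
  ring

theorem hasDerivAt_coeff₂' (hp : p ≠ 0) : HasDerivAt (coeff₂' a) (coeff₂'' a p) p := by
  refine ((hasDerivAt_const p (2 * a)).fun_div (hasDerivAt_pow 2 p)
    (pow_ne_zero 2 hp)).neg.congr_deriv ?_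
  rw [coeff₂'']
  field_simp
  ring

variable {γ s c : ℝ}

theorem coeff₁_mul_eq (hp : p ≠ 0) (hc : c ^ 2 = γ * p ^ (γ - 1)) :
    coeff₁ γ s (p * c) p = s * (s - 2 * c) := by
  rw [coeff₁, mul_div_cancel_left₀ c hp, ← hc]
  ring

theorem coeff₂_mul_eq (hp : p ≠ 0) : coeff₂ s (p * c) p = 2 * c - s := by
  rw [coeff₂, mul_div_assoc, mul_div_cancel_left₀ c hp]
  ring

theorem coeff₁'_mul_eq (hp : p ≠ 0) (hc : c ^ 2 = γ * p ^ (γ - 1)) :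
    coeff₁' γ s (p * c) p = c * (2 * s - (γ + 1) * c) / p := by
  have hpow : γ * p ^ (γ - 2) = c ^ 2 / p := by
    rw [hc, show γ - 2 = γ - 1 - 1 by ring, Real.rpow_sub_one hp, mul_div_assoc]
  rw [coeff₁', show γ * (γ - 1) * p ^ (γ - 2) = (γ - 1) * (γ * p ^ (γ - 2)) by ring, hpow]
  field_simp
  ring

theorem coeff₂'_mul_eq (hp : p ≠ 0) : coeff₂' (p * c) p = -(2 * c / p) := by
  rw [coeff₂']
  field_simp

theorem eventually_coeff_bounds (hp : 0 < p) (hc : 0 < c) (hcsq : c ^ 2 = γ * p ^ (γ - 1))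
    (hs : 0 < s) (hs₁ : s < 2 * c) (hs₂ : s < (γ + 1) / 2 * c) :
    ∃ c₁ ∈ Ioo (0 : ℝ) 1, ∃ c₂ > (1 : ℝ), ∃ c₃ > (0 : ℝ), ∃ M > (0 : ℝ),
      ∀ᶠ z : ℝ × ℝ in 𝓝 (p * c, p), 0 < z.2 ∧
        coeff₁ γ s z.1 z.2 ∈ Icc (-c₁⁻¹) (-c₁) ∧ coeff₂ s z.1 z.2 ∈ Icc c₂⁻¹ c₂ ∧
        -coeff₁' γ s z.1 z.2 ∈ Icc c₃⁻¹ c₃ ∧ -coeff₂' z.1 z.2 ∈ Icc c₃⁻¹ c₃ ∧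
        |coeff₁'' γ s z.1 z.2| ≤ M ∧ |coeff₂'' z.1 z.2| ≤ M := by
  have hp₀ : p ≠ 0 := hp.ne'
  obtain ⟨d₁, hd₁, h₁⟩ := ContinuousAt.exists_eventually_mem_Icc_inv
    (g := fun z : ℝ × ℝ => -coeff₁ γ s z.1 z.2) (x := (p * c, p))
    (by unfold coeff₁; fun_prop (disch := simp [hp₀]))
    (by dsimp only; rw [coeff₁_mul_eq hp₀ hcsq]; nlinarith)
  obtain ⟨c₂, hc₂, h₂⟩ := ContinuousAt.exists_eventually_mem_Icc_inv
    (g := fun z : ℝ × ℝ => coeff₂ s z.1 z.2) (x := (p * c, p))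
    (by unfold coeff₂; fun_prop (disch := simp [hp₀]))
    (by dsimp only; rw [coeff₂_mul_eq hp₀]; linarith)
  obtain ⟨e₁, he₁, h₁'⟩ := ContinuousAt.exists_eventually_mem_Icc_inv
    (g := fun z : ℝ × ℝ => -coeff₁' γ s z.1 z.2) (x := (p * c, p))
    (by unfold coeff₁'; fun_prop (disch := simp [hp₀]))
    (by dsimp only; rw [coeff₁'_mul_eq hp₀ hcsq, ← neg_div]; exact div_pos (by nlinarith) hp)
  obtain ⟨e₂, he₂, h₂'⟩ := ContinuousAt.exists_eventually_mem_Icc_inv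
    (g := fun z : ℝ × ℝ => -coeff₂' z.1 z.2) (x := (p * c, p))
    (by unfold coeff₂'; fun_prop (disch := simp [hp₀]))
    (by dsimp only; rw [coeff₂'_mul_eq hp₀, neg_neg]; positivity)
  obtain ⟨M₁, hM₁, h₁''⟩ := ContinuousAt.exists_eventually_abs_le
    (g := fun z : ℝ × ℝ => coeff₁'' γ s z.1 z.2) (x := (p * c, p))
    (by unfold coeff₁''; fun_prop (disch := simp [hp₀]))
  obtain ⟨M₂, hM₂, h₂''⟩ := ContinuousAt.exists_eventually_abs_le
    (g := fun z : ℝ × ℝ => coeff₂'' z.1 z.2) (x := (p * c, p))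
    (by unfold coeff₂''; fun_prop (disch := simp [hp₀]))
  have hpos : ∀ᶠ z : ℝ × ℝ in 𝓝 (p * c, p), 0 < z.2 :=
    continuousAt_snd.eventually_const_lt hp
  refine ⟨d₁⁻¹, ⟨by positivity, inv_lt_one_of_one_lt₀ hd₁⟩, c₂, hc₂, max e₁ e₂, by positivity,
    max M₁ M₂, by positivity, ?_⟩
  filter_upwards [hpos, h₁, h₂, h₁', h₂', h₁'', h₂''] with z hz hz₁ hz₂ hz₁' hz₂' hz₁'' hz₂''
  refine ⟨hz, ?_, hz₂,
    Icc_subset_Icc (inv_anti₀ (by positivity) (le_max_left _ _)) (le_max_left _ _) hz₁',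
    Icc_subset_Icc (inv_anti₀ (by positivity) (le_max_right _ _)) (le_max_right _ _) hz₂',
    hz₁''.trans (le_max_left _ _), hz₂''.trans (le_max_right _ _)⟩
  rw [inv_inv]
  exact ⟨by linarith [hz₁.2], by linarith [hz₁.1]⟩

end Coefficients

theorem statement_7_general (γ μ k Pm C s : ℝ) (hγ : 1 ≤ γ)
    (hPm : 0 < Pm) (hC : 0 < C) (hs : 0 < s)
    (hs' : s < min (2 * Real.sqrt (γ * Pm ^ (γ - 1)))
      (((γ + 1) / 2) * Real.sqrt (γ * Pm ^ (γ - 1)))) :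
    ∃ ε₁ > (0:ℝ), ∃ c₁ ∈ Set.Ioo (0:ℝ) 1, ∃ c₂ > (1:ℝ), ∃ c₃ > (0:ℝ), ∃ c₄ > (0:ℝ),
      ∀ ε : ℝ, 0 < ε → ε < ε₁ →
      ∀ A : ℝ, A = Real.sqrt (Pm * (Pm - ε)) * Real.sqrt ((Pm ^ γ - (Pm - ε) ^ γ) / ε) →
      ∀ P : ℝ → ℝ, ContDiff ℝ 2 P →
        (∀ y : ℝ, P y ∈ Set.Icc (Pm - ε) Pm) →
        (∀ y : ℝ, deriv (deriv P) y =
          (2 / k ^ 2) *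
            ((P y) ^ γ + (Pm * (Pm - ε) / P y) * (((Pm - ε) ^ γ - Pm ^ γ) / ((Pm - ε) - Pm))
              - ((Pm - ε) ^ (γ + 1) - Pm ^ (γ + 1)) / ((Pm - ε) - Pm))
          - (2 * s * μ / k ^ 2) * deriv P y + (deriv P y) ^ 2 / P y) →
        Filter.Tendsto P Filter.atBot (nhds Pm) →
        Filter.Tendsto P Filter.atTop (nhds (Pm - ε)) →
        (∀ y : ℝ, deriv P y < 0) →
        (∀ y : ℝ, |deriv P y| ≤ C * ε ^ 2) →
        (∀ y : ℝ, |deriv (deriv P) y| ≤ C * ε * |deriv P y|) →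
      ∀ f₁ f₂ : ℝ → ℝ,
        (∀ y : ℝ, f₁ y = (s - A / P y) ^ 2 - γ * (P y) ^ (γ - 1)) →
        (∀ y : ℝ, f₂ y = -s + 2 * A / P y) →
      ∀ y : ℝ,
        (-c₁⁻¹ ≤ f₁ y ∧ f₁ y ≤ -c₁) ∧
        (c₂⁻¹ ≤ f₂ y ∧ f₂ y ≤ c₂) ∧
        (c₃⁻¹ * |deriv P y| ≤ deriv f₁ y ∧ deriv f₁ y ≤ c₃ * |deriv P y|) ∧
        (c₃⁻¹ * |deriv P y| ≤ deriv f₂ y ∧ deriv f₂ y ≤ c₃ * |deriv P y|) ∧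
        |deriv (deriv f₁) y| ≤ c₄ * ε * |deriv P y| ∧
        |deriv (deriv f₂) y| ≤ c₄ * ε * |deriv P y| := by
  have hcs : 0 < γ * Pm ^ (γ - 1) := by positivity
  obtain ⟨c₁, hc₁, c₂, hc₂, c₃, hc₃, M, hM, hbounds⟩ :=
    eventually_coeff_bounds hPm (Real.sqrt_pos.2 hcs) (Real.sq_sqrt hcs.le) hs
      (hs'.trans_le (min_le_left _ _)) (hs'.trans_le (min_le_right _ _))
  obtain ⟨ε₁, hε₁, hsmall⟩ := mem_nhdsGT_iff_exists_Ioo_subset.1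
    ((eventually_forall_Icc_mem hbounds (tendsto_amplitude γ hPm)).and
      (eventually_nhdsWithin_of_eventually_nhds (eventually_le_nhds one_pos)))
  refine ⟨ε₁, hε₁, c₁, hc₁, c₂, hc₂, c₃, hc₃, C * (M + c₃), by positivity, ?_⟩
  rintro ε hε hεε₁ A rfl P hP hPε - - - hP' hP'ε hP''ε f₁ f₂ hf₁ hf₂ y
  obtain ⟨hprofile, hε1⟩ := hsmall ⟨hε, hεε₁⟩
  have hP₀ (x : ℝ) : P x ≠ 0 := (hprofile _ (hPε x)).1.ne'
  obtain ⟨-, hb₁, hb₂, hb₁', hb₂', hb₁'', hb₂''⟩ := hprofile _ (hPε y)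
  obtain rfl : f₁ = coeff₁ γ s _ ∘ P := funext hf₁
  obtain rfl : f₂ = coeff₂ s _ ∘ P := funext hf₂
  have h₁ := deriv_comp_bounds hP (fun x => hasDerivAt_coeff₁ γ s _ (hP₀ x))
    (fun x => hasDerivAt_coeff₁' γ s _ (hP₀ x)) hc₃ hb₁' hb₁'' hC.le hε.le hε1 (hP' y)
    (hP'ε y) (hP''ε y)
  have h₂ := deriv_comp_bounds hP (fun x => hasDerivAt_coeff₂ s _ (hP₀ x))
    (fun x => hasDerivAt_coeff₂' _ (hP₀ x)) hc₃ hb₂' hb₂'' hC.le hε.le hε1 (hP' y)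
    (hP'ε y) (hP''ε y)
  exact ⟨hb₁, hb₂, h₁.1, h₂.1, h₁.2, h₂.2⟩

/-- uniform bounds on the coefficient functions
`f₁(y) = (s − A/P(y))² − γP(y)^{γ−1}` and `f₂(y) = −s + 2A/P(y)` along a
small-amplitude monotone decreasing dispersive shock profile, for subsonic speeds
`s ∈ (0, s̄)`, `s̄ = min{2c_s(P⁻), ((γ+1)/2)c_s(P⁻)}`. -/
theorem statement_7 (γ μ k Pm C s : ℝ) (hγ : 1 ≤ γ) (hμ : 0 < μ) (hk : 0 < k)
    (hPm : 0 < Pm) (hC : 0 < C) (hs : 0 < s)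
    (hs' : s < min (2 * Real.sqrt (γ * Pm ^ (γ - 1)))
      (((γ + 1) / 2) * Real.sqrt (γ * Pm ^ (γ - 1)))) :
    ∃ ε₁ > (0:ℝ), ∃ c₁ ∈ Set.Ioo (0:ℝ) 1, ∃ c₂ > (1:ℝ), ∃ c₃ > (0:ℝ), ∃ c₄ > (0:ℝ),
      ∀ ε : ℝ, 0 < ε → ε < ε₁ →
      ∀ A : ℝ, A = Real.sqrt (Pm * (Pm - ε)) * Real.sqrt ((Pm ^ γ - (Pm - ε) ^ γ) / ε) →
      ∀ P : ℝ → ℝ, ContDiff ℝ 2 P →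
        (∀ y : ℝ, P y ∈ Set.Icc (Pm - ε) Pm) →
        (∀ y : ℝ, deriv (deriv P) y =
          (2 / k ^ 2) *
            ((P y) ^ γ + (Pm * (Pm - ε) / P y) * (((Pm - ε) ^ γ - Pm ^ γ) / ((Pm - ε) - Pm))
              - ((Pm - ε) ^ (γ + 1) - Pm ^ (γ + 1)) / ((Pm - ε) - Pm))
          - (2 * s * μ / k ^ 2) * deriv P y + (deriv P y) ^ 2 / P y) →
        Filter.Tendsto P Filter.atBot (nhds Pm) →
        Filter.Tendsto P Filter.atTop (nhds (Pm - ε)) →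
        (∀ y : ℝ, deriv P y < 0) →
        (∀ y : ℝ, |deriv P y| ≤ C * ε ^ 2) →
        (∀ y : ℝ, |deriv (deriv P) y| ≤ C * ε * |deriv P y|) →
      ∀ f₁ f₂ : ℝ → ℝ,
        (∀ y : ℝ, f₁ y = (s - A / P y) ^ 2 - γ * (P y) ^ (γ - 1)) →
        (∀ y : ℝ, f₂ y = -s + 2 * A / P y) →
      ∀ y : ℝ,
        (-c₁⁻¹ ≤ f₁ y ∧ f₁ y ≤ -c₁) ∧
        (c₂⁻¹ ≤ f₂ y ∧ f₂ y ≤ c₂) ∧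
        (c₃⁻¹ * |deriv P y| ≤ deriv f₁ y ∧ deriv f₁ y ≤ c₃ * |deriv P y|) ∧
        (c₃⁻¹ * |deriv P y| ≤ deriv f₂ y ∧ deriv f₂ y ≤ c₃ * |deriv P y|) ∧
        |deriv (deriv f₁) y| ≤ c₄ * ε * |deriv P y| ∧
        |deriv (deriv f₂) y| ≤ c₄ * ε * |deriv P y| :=
  statement_7_general γ μ k Pm C s hγ hPm hC hs hs'
end

section
/- Let γ ≥ 1, μ > 0, k > 0, P⁻ > 0, C > 0 and s ∈ (0, s̄) with s̄ = min{2c_s(P⁻), ((γ+1)/2)c_s(P⁻)}. There exist ε₀ > 0 and a constant C̄ > 0 such that for every ε ∈ (0, ε₀), setting P⁺ = P⁻ − ε and A = √(P⁻P⁺)·√(((P⁻)^γ − (P⁺)^γ)/ε), and for every monotone decreasing dispersive shock profile P : ℝ → [P⁺, P⁻] (a C³ solution of P'' = (2/k²)f(P) − (2sμ/k²)P' + (P')²/P with P(−∞) = P⁻, P(+∞) = P⁺, P' < 0, |P'| ≤ Cε², |P''| ≤ Cε|P'|), the function g(y) = −(1/2)·d/dy[f₂(y)/f₁(y) − μ·d/dy(1/f₁(y))]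 satisfies g(y) ≥ C̄|P'(y)| > 0 for all y ∈ ℝ, where f₁(y) = (s − A/P(y))² − γP(y)^{γ−1} and f₂(y) = −s + 2A/P(y). -/
/-!
Write `f₁ = φ₁(A, P)`, `f₂ = φ₂(A, P)`. By the chain rule
`g = |P'| · W(A, P) / (2 f₁²) − (μ/2) · R`, where `W = ∂ₚφ₂ · φ₁ − φ₂ · ∂ₚφ₁` and `R` is a sum of
terms carrying `P'²` or `P''`, so that `|R| ≤ Cε |P'| · (bounded)` by the assumed bounds on the
profile. As `ε → 0` we have `A → P⁻ c` with `c = c_s(P⁻)`, and `P → P⁻` uniformly, while at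
`(P⁻ c, P⁻)` one computes `φ₁ = s (s − 2c) < 0` and `W = (γ + 1) c² (2c − s) / P⁻ > 0` because
`0 < s < 2c`. Continuity in `(Cε, A, P)` then gives `g ≥ (W/(4φ₁²))(P⁻ c, P⁻) · |P'|` for small `ε`.
-/

open Real Filter Topology Set

namespace DispersiveShock

noncomputable def soundSpeed (γ ρ : ℝ) : ℝ := √(γ * ρ ^ (γ - 1))

noncomputable def φ₁ (γ s a p : ℝ) : ℝ := (s - a / p) ^ 2 - γ * p ^ (γ - 1)

noncomputable def dφ₁ (γ s a p : ℝ) : ℝ :=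
  2 * (s - a / p) * (a / p ^ 2) - γ * (γ - 1) * p ^ (γ - 2)

noncomputable def d2φ₁ (γ s a p : ℝ) : ℝ :=
  2 * (a / p ^ 2) ^ 2 - 2 * (s - a / p) * (2 * a / p ^ 3) - γ * (γ - 1) * (γ - 2) * p ^ (γ - 3)

noncomputable def φ₂ (s a p : ℝ) : ℝ := -s + 2 * a / p

noncomputable def dφ₂ (a p : ℝ) : ℝ := -(2 * a) / p ^ 2

noncomputable def wronskian (γ s a p : ℝ) : ℝ := dφ₂ a p * φ₁ γ s a p - φ₂ s a p * dφ₁ γ s a p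

/-- `|P'|` times this is a lower bound for `g` as soon as `|P'| ≤ κ` and `|P''| ≤ κ |P'|`. -/
noncomputable def weightCoeff (γ s μ κ a p : ℝ) : ℝ :=
  wronskian γ s a p / (2 * φ₁ γ s a p ^ 2)
    - κ * (μ / 2 * ((|d2φ₁ γ s a p| + |dφ₁ γ s a p|) / φ₁ γ s a p ^ 2
      + 2 * dφ₁ γ s a p ^ 2 / |φ₁ γ s a p| ^ 3))

section Derivatives

variable {γ s a p : ℝ}

theorem hasDerivAt_const_div (hp : p ≠ 0) : HasDerivAt (fun q : ℝ => a / q) (-(a / p ^ 2)) p := by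
  refine ((hasDerivAt_const p a).div (hasDerivAt_id p) hp).congr_deriv ?_
  simp only [id]
  ring

theorem hasDerivAt_φ₁ (hp : p ≠ 0) : HasDerivAt (φ₁ γ s a) (dφ₁ γ s a p) p := by
  have h := (((hasDerivAt_const p s).sub (hasDerivAt_const_div (a := a) hp)).pow 2).sub
    ((Real.hasDerivAt_rpow_const (p := γ - 1) (Or.inl hp)).const_mul γ)
  refine h.congr_deriv ?_
  simp only [Pi.sub_apply]
  rw [show γ - 1 - 1 = γ - 2 by ring, dφ₁]
  ring

theorem hasDerivAt_dφ₁ (hp : p ≠ 0) : HasDerivAt (dφ₁ γ s a) (d2φ₁ γ s a p) p := by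
  have hsq : HasDerivAt (fun q : ℝ => a / q ^ 2) (-(2 * a / p ^ 3)) p := by
    refine ((hasDerivAt_const p a).div ((hasDerivAt_id p).pow 2) (pow_ne_zero 2 hp)).congr_deriv ?_
    simp only [id, Pi.pow_apply]
    field_simp
    ring
  have h :=
    ((((hasDerivAt_const p s).sub (hasDerivAt_const_div (a := a) hp)).const_mul 2).mul hsq).sub
    ((Real.hasDerivAt_rpow_const (p := γ - 2) (Or.inl hp)).const_mul (γ * (γ - 1)))
  refine h.congr_deriv ?_
  simp only [Pi.sub_apply]
  rw [show γ - 2 - 1 = γ - 3 by ring, d2φ₁]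
  ring

theorem hasDerivAt_φ₂ (hp : p ≠ 0) : HasDerivAt (φ₂ s a) (dφ₂ a p) p := by
  have h := (hasDerivAt_const p (-s)).add ((hasDerivAt_const_div (a := a) hp).const_mul 2)
  have e : φ₂ s a = fun q => -s + 2 * (a / q) := by
    funext q
    rw [φ₂, mul_div_assoc]
  rw [e]
  refine h.congr_deriv ?_
  rw [dφ₂]
  ring

end Derivatives

theorem deriv_one_div_comp {Φ Φ' P : ℝ → ℝ} (hP : Differentiable ℝ P)
    (hΦ : ∀ t, HasDerivAt Φ (Φ' (P t)) (P t)) (hne : ∀ t, Φ (P t) ≠ 0) :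
    deriv (fun t => 1 / Φ (P t)) = fun t => -(Φ' (P t) * deriv P t) / Φ (P t) ^ 2 := by
  funext t
  have h := (((hΦ t).comp t (hP t).hasDerivAt).inv (hne t)).deriv
  simp only [one_div]
  exact h

theorem hasDerivAt_div_sub_deriv_one_div {Φ₁ Φ₂ Φ₁' Φ₁'' Φ₂' P : ℝ → ℝ} (μ : ℝ)
    (hP : ContDiff ℝ 2 P) (hΦ₁ : ∀ t, HasDerivAt Φ₁ (Φ₁' (P t)) (P t))
    (hne : ∀ t, Φ₁ (P t) ≠ 0) {y : ℝ} (hΦ₁' : HasDerivAt Φ₁' (Φ₁'' (P y)) (P y))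
    (hΦ₂ : HasDerivAt Φ₂ (Φ₂' (P y)) (P y)) :
    HasDerivAt (fun x => Φ₂ (P x) / Φ₁ (P x) - μ * deriv (fun t => 1 / Φ₁ (P t)) x)
      ((Φ₂' (P y) * Φ₁ (P y) - Φ₂ (P y) * Φ₁' (P y)) * deriv P y / Φ₁ (P y) ^ 2
        + μ * ((Φ₁'' (P y) * deriv P y ^ 2 + Φ₁' (P y) * deriv (deriv P) y) / Φ₁ (P y) ^ 2
          - 2 * Φ₁' (P y) ^ 2 * deriv P y ^ 2 / Φ₁ (P y) ^ 3)) y := by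
  have hP₁ : HasDerivAt P (deriv P y) y := (hP.differentiable (by norm_num) y).hasDerivAt
  have hP₂ : HasDerivAt (deriv P) (deriv (deriv P) y) y :=
    (hP.differentiable_deriv_two y).hasDerivAt
  have hf₁ := (hΦ₁ y).comp y hP₁
  have hquot := (hΦ₂.comp y hP₁).div hf₁ (hne y)
  have hcorr := (((hΦ₁'.comp y hP₁).mul hP₂).neg).div (hf₁.pow 2) (pow_ne_zero 2 (hne y))
  rw [deriv_one_div_comp (hP.differentiable (by norm_num)) hΦ₁ hne]
  refine (hquot.sub (hcorr.const_mul μ)).congr_deriv ?_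
  simp only [Function.comp_apply, Pi.mul_apply, Pi.pow_apply, Pi.neg_apply]
  field_simp [hne y]
  ring

theorem abs_correction_le {F ψ ψ' q q' κ : ℝ} (hqκ : |q| ≤ κ)
    (hq' : |q'| ≤ κ * |q|) :
    |(ψ' * q ^ 2 + ψ * q') / F ^ 2 - 2 * ψ ^ 2 * q ^ 2 / F ^ 3|
      ≤ κ * |q| * ((|ψ'| + |ψ|) / F ^ 2 + 2 * ψ ^ 2 / |F| ^ 3) := by
  have hq2 : q ^ 2 ≤ κ * |q| := by
    rw [← sq_abs, sq]
    exact mul_le_mul_of_nonneg_right hqκ (abs_nonneg q)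
  have hnum : |ψ' * q ^ 2 + ψ * q'| ≤ κ * |q| * (|ψ'| + |ψ|) := calc
    |ψ' * q ^ 2 + ψ * q'| ≤ |ψ'| * q ^ 2 + |ψ| * |q'| := by
      refine (abs_add_le _ _).trans_eq ?_
      rw [abs_mul, abs_mul, abs_of_nonneg (sq_nonneg q)]
    _ ≤ |ψ'| * (κ * |q|) + |ψ| * (κ * |q|) := by gcongr
    _ = κ * |q| * (|ψ'| + |ψ|) := by ring
  calc |(ψ' * q ^ 2 + ψ * q') / F ^ 2 - 2 * ψ ^ 2 * q ^ 2 / F ^ 3|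
      ≤ |ψ' * q ^ 2 + ψ * q'| / F ^ 2 + 2 * ψ ^ 2 * q ^ 2 / |F| ^ 3 := by
        refine (abs_sub _ _).trans_eq ?_
        rw [abs_div, abs_div, abs_of_nonneg (sq_nonneg F), abs_pow,
          abs_of_nonneg (by positivity : 0 ≤ 2 * ψ ^ 2 * q ^ 2)]
    _ ≤ κ * |q| * (|ψ'| + |ψ|) / F ^ 2 + 2 * ψ ^ 2 * (κ * |q|) / |F| ^ 3 := by gcongr
    _ = κ * |q| * ((|ψ'| + |ψ|) / F ^ 2 + 2 * ψ ^ 2 / |F| ^ 3) := by ring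

theorem mul_lower_le_neg_half {W F ψ ψ' q q' μ κ : ℝ} (hμ : 0 ≤ μ) (hq : q ≤ 0)
    (hqκ : |q| ≤ κ) (hq' : |q'| ≤ κ * |q|) :
    |q| * (W / (2 * F ^ 2) - κ * (μ / 2 * ((|ψ'| + |ψ|) / F ^ 2 + 2 * ψ ^ 2 / |F| ^ 3)))
      ≤ -(1 / 2) * (W * q / F ^ 2
        + μ * ((ψ' * q ^ 2 + ψ * q') / F ^ 2 - 2 * ψ ^ 2 * q ^ 2 / F ^ 3)) := by
  have hR := le_abs_self ((ψ' * q ^ 2 + ψ * q') / F ^ 2 - 2 * ψ ^ 2 * q ^ 2 / F ^ 3)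
  have hbound := mul_le_mul_of_nonneg_left
    (abs_correction_le (F := F) (ψ := ψ) (ψ' := ψ') hqκ hq') (by positivity : 0 ≤ μ / 2)
  rw [abs_of_nonpos hq] at hbound ⊢
  have hR' := mul_le_mul_of_nonneg_left hR (by positivity : 0 ≤ μ / 2)
  linear_combination hR' + hbound

section Limits

variable {γ ρ : ℝ}

theorem sq_soundSpeed (hγ : 0 ≤ γ) (hρ : 0 ≤ ρ) : soundSpeed γ ρ ^ 2 = γ * ρ ^ (γ - 1) :=
  Real.sq_sqrt (by positivity)

theorem φ₁_soundSpeed (s : ℝ) (hγ : 0 ≤ γ) (hρ : 0 < ρ) :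
    φ₁ γ s (ρ * soundSpeed γ ρ) ρ = s * (s - 2 * soundSpeed γ ρ) := by
  rw [φ₁, ← sq_soundSpeed hγ hρ.le, mul_div_cancel_left₀ _ hρ.ne']
  ring

theorem wronskian_soundSpeed (s : ℝ) (hγ : 0 ≤ γ) (hρ : 0 < ρ) :
    wronskian γ s (ρ * soundSpeed γ ρ) ρ
      = (γ + 1) * soundSpeed γ ρ ^ 2 * (2 * soundSpeed γ ρ - s) / ρ := by
  have hpow : γ * ρ ^ (γ - 2) = soundSpeed γ ρ ^ 2 / ρ := by
    rw [sq_soundSpeed hγ hρ.le, show γ - 2 = γ - 1 - 1 by ring, Real.rpow_sub_one hρ.ne']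
    ring
  have hc : ρ * soundSpeed γ ρ / ρ = soundSpeed γ ρ := mul_div_cancel_left₀ _ hρ.ne'
  rw [wronskian, dφ₁, mul_assoc γ, mul_comm (γ - 1), ← mul_assoc γ, hpow, φ₁_soundSpeed s hγ hρ,
    φ₂, dφ₂, hc]
  field_simp
  ring

theorem tendsto_sqrt_mul_sqrt_slope (hρ : 0 < ρ) :
    Tendsto (fun ε => √(ρ * (ρ - ε)) * √((ρ ^ γ - (ρ - ε) ^ γ) / ε)) (𝓝[>] 0)
      (𝓝 (ρ * soundSpeed γ ρ)) := by
  have hsub : Tendsto (fun ε : ℝ => ρ - ε) (𝓝[>] 0) (𝓝[≠] ρ) := by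
    refine tendsto_nhdsWithin_of_tendsto_nhds_of_eventually_within _ ?_ ?_
    · exact ((continuous_sub_left ρ).tendsto' 0 ρ (sub_zero ρ)).mono_left nhdsWithin_le_nhds
    · filter_upwards [self_mem_nhdsWithin] with ε (hε : 0 < ε)
      simpa using hε.ne'
  have hslope := (hasDerivAt_iff_tendsto_slope.mp
    (Real.hasDerivAt_rpow_const (p := γ) (Or.inl hρ.ne'))).comp hsub
  have hquot : Tendsto (fun ε => (ρ ^ γ - (ρ - ε) ^ γ) / ε) (𝓝[>] 0) (𝓝 (γ * ρ ^ (γ - 1))) := by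
    refine hslope.congr fun ε => ?_
    simp only [Function.comp_apply, slope_def_field]
    rw [show ρ - ε - ρ = -ε by ring, div_neg, ← neg_div, neg_sub]
  have hsqrt : Tendsto (fun ε => √(ρ * (ρ - ε))) (𝓝[>] 0) (𝓝 ρ) := by
    have : Continuous fun ε : ℝ => √(ρ * (ρ - ε)) := by fun_prop
    simpa [Real.sqrt_mul_self hρ.le] using (this.tendsto 0).mono_left nhdsWithin_le_nhds
  exact hsqrt.mul hquot.sqrt

end Limits

theorem continuousAt_φ₁ {γ s κ a p : ℝ} (hp : p ≠ 0) :
    ContinuousAt (fun x : (ℝ × ℝ) × ℝ => φ₁ γ s x.1.2 x.2) ((κ, a), p) := by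
  unfold φ₁
  fun_prop (disch := first | assumption | simp [hp])

theorem continuousAt_weightCoeff {γ s μ κ a p : ℝ} (hp : p ≠ 0) (hφ : φ₁ γ s a p ≠ 0) :
    ContinuousAt (fun x : (ℝ × ℝ) × ℝ => weightCoeff γ s μ x.1.1 x.1.2 x.2) ((κ, a), p) := by
  unfold weightCoeff wronskian φ₁ dφ₁ d2φ₁ φ₂ dφ₂
  unfold φ₁ at hφ
  fun_prop (disch := first | assumption | simp [hp, hφ])

theorem eventually_nhdsGT_forall_Icc {X : Type*} [TopologicalSpace X] {Q : X × ℝ → Prop}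
    {x₀ : X} {p₀ : ℝ} (hQ : ∀ᶠ x in 𝓝 (x₀, p₀), Q x) {f : ℝ → X}
    (hf : Tendsto f (𝓝[>] 0) (𝓝 x₀)) :
    ∀ᶠ ε in 𝓝[>] 0, ∀ p ∈ Icc (p₀ - ε) p₀, Q (f ε, p) := by
  rw [nhds_prod_eq] at hQ
  obtain ⟨U, hU, V, hV, hUV⟩ := eventually_prod_iff.mp hQ
  obtain ⟨η, hη, hball⟩ := Metric.eventually_nhds_iff.mp hV
  filter_upwards [hf.eventually hU, Ioo_mem_nhdsGT hη] with ε hε hεη p hp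
  refine hUV hε (hball ?_)
  rw [Real.dist_eq, abs_sub_comm, abs_of_nonneg (by linarith [hp.2])]
  linarith [hp.1, hεη.2]

theorem exists_pos_eventually_lt_weightCoeff {γ s ρ : ℝ} (μ C : ℝ) (hγ : 0 ≤ γ) (hρ : 0 < ρ)
    (hs : 0 < s) (hsc : s < 2 * soundSpeed γ ρ) :
    ∃ m > 0, ∀ᶠ ε in 𝓝[>] 0, ∀ p ∈ Icc (ρ - ε) ρ, 0 < p ∧
      φ₁ γ s (√(ρ * (ρ - ε)) * √((ρ ^ γ - (ρ - ε) ^ γ) / ε)) p ≠ 0 ∧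
      m < weightCoeff γ s μ (C * ε) (√(ρ * (ρ - ε)) * √((ρ ^ γ - (ρ - ε) ^ γ) / ε)) p := by
  set c := soundSpeed γ ρ
  have hφ₀ : φ₁ γ s (ρ * c) ρ ≠ 0 := by
    rw [φ₁_soundSpeed s hγ hρ]
    exact (mul_neg_of_pos_of_neg hs (by linarith)).ne
  have hm₀ : 0 < weightCoeff γ s μ 0 (ρ * c) ρ := by
    rw [weightCoeff, zero_mul, sub_zero, wronskian_soundSpeed s hγ hρ]
    have hc : 0 < c := by linarith
    have hW : 0 < (γ + 1) * c ^ 2 * (2 * c - s) := mul_pos (by positivity) (by linarith)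
    exact div_pos (div_pos hW hρ) (mul_pos two_pos (pow_two_pos_of_ne_zero hφ₀))
  refine ⟨_, half_pos hm₀, ?_⟩
  have hnear : ∀ᶠ x in 𝓝 (((0 : ℝ), ρ * c), ρ), 0 < x.2 ∧ φ₁ γ s x.1.2 x.2 ≠ 0 ∧
      weightCoeff γ s μ 0 (ρ * c) ρ / 2 < weightCoeff γ s μ x.1.1 x.1.2 x.2 :=
    (continuousAt_snd.eventually (lt_mem_nhds hρ)).and
      (((continuousAt_φ₁ hρ.ne').eventually_ne hφ₀).and
        ((continuousAt_weightCoeff hρ.ne' hφ₀).eventually (lt_mem_nhds (half_lt_self hm₀))))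
  have hparams : Tendsto (fun ε => (C * ε, √(ρ * (ρ - ε)) * √((ρ ^ γ - (ρ - ε) ^ γ) / ε)))
      (𝓝[>] 0) (𝓝 (0, ρ * c)) := by
    refine Tendsto.prodMk_nhds ?_ (tendsto_sqrt_mul_sqrt_slope hρ)
    simpa using ((continuous_const_mul C).tendsto' 0 0 (mul_zero C)).mono_left nhdsWithin_le_nhds
  filter_upwards [eventually_nhdsGT_forall_Icc hnear hparams] with ε hε p hp using hε p hp

end DispersiveShock

open DispersiveShock in
theorem statement_9_general (γ μ k Pm C s : ℝ) (hγ : 1 ≤ γ) (hμ : 0 < μ)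
    (hPm : 0 < Pm) (hC : 0 < C) (hs : 0 < s)
    (hs' : s < min (2 * Real.sqrt (γ * Pm ^ (γ - 1)))
      (((γ + 1) / 2) * Real.sqrt (γ * Pm ^ (γ - 1)))) :
    ∃ ε₀ > (0:ℝ), ∃ Cbar > (0:ℝ), ∀ ε : ℝ, 0 < ε → ε < ε₀ →
      ∀ A : ℝ, A = Real.sqrt (Pm * (Pm - ε)) * Real.sqrt ((Pm ^ γ - (Pm - ε) ^ γ) / ε) →
      ∀ P : ℝ → ℝ, ContDiff ℝ 3 P →
        (∀ y : ℝ, P y ∈ Set.Icc (Pm - ε) Pm) →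
        (∀ y : ℝ, deriv (deriv P) y =
          (2 / k ^ 2) *
            ((P y) ^ γ + (Pm * (Pm - ε) / P y) * (((Pm - ε) ^ γ - Pm ^ γ) / ((Pm - ε) - Pm))
              - ((Pm - ε) ^ (γ + 1) - Pm ^ (γ + 1)) / ((Pm - ε) - Pm))
          - (2 * s * μ / k ^ 2) * deriv P y + (deriv P y) ^ 2 / P y) →
        Filter.Tendsto P Filter.atBot (nhds Pm) →
        Filter.Tendsto P Filter.atTop (nhds (Pm - ε)) →
        (∀ y : ℝ, deriv P y < 0) →
        (∀ y : ℝ, |deriv P y| ≤ C * ε ^ 2) →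
        (∀ y : ℝ, |deriv (deriv P) y| ≤ C * ε * |deriv P y|) →
      ∀ f₁ f₂ : ℝ → ℝ,
        (∀ y : ℝ, f₁ y = (s - A / P y) ^ 2 - γ * (P y) ^ (γ - 1)) →
        (∀ y : ℝ, f₂ y = -s + 2 * A / P y) →
      ∀ g : ℝ → ℝ,
        (∀ y : ℝ, g y =
          -(1 / 2) * deriv (fun x => f₂ x / f₁ x - μ * deriv (fun t => 1 / f₁ t) x) y) →
      ∀ y : ℝ, Cbar * |deriv P y| ≤ g y ∧ 0 < Cbar * |deriv P y| := by
  obtain ⟨m, hm, hev⟩ :=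
    exists_pos_eventually_lt_weightCoeff μ C (by linarith) hPm hs (lt_min_iff.mp hs').1
  obtain ⟨ε₀, hε₀, hsmall⟩ := mem_nhdsGT_iff_exists_Ioo_subset.mp (hev.and (Ioo_mem_nhdsGT one_pos))
  refine ⟨ε₀, hε₀, m, hm, ?_⟩
  intro ε hε hεε₀ A hA P hP hPrange _ _ _ hP' hP'bd hP''bd f₁ f₂ hf₁ hf₂ g hg y
  obtain ⟨hgood, -, hε₁⟩ := hsmall ⟨hε, hεε₀⟩
  rw [← hA] at hgood
  obtain rfl : f₁ = fun t => φ₁ γ s A (P t) := funext hf₁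
  obtain rfl : f₂ = fun t => φ₂ s A (P t) := funext hf₂
  have hPne (t : ℝ) : P t ≠ 0 := (hgood _ (hPrange t)).1.ne'
  have hderiv := hasDerivAt_div_sub_deriv_one_div (Φ₁ := φ₁ γ s A) (Φ₂ := φ₂ s A)
    (Φ₁' := dφ₁ γ s A) (Φ₁'' := d2φ₁ γ s A) (Φ₂' := dφ₂ A) μ (hP.of_le (by norm_num))
    (fun t => hasDerivAt_φ₁ (hPne t)) (fun t => (hgood _ (hPrange t)).2.1)
    (hasDerivAt_dφ₁ (hPne y)) (hasDerivAt_φ₂ (hPne y))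
  have hslope : |deriv P y| ≤ C * ε := (hP'bd y).trans (by gcongr; nlinarith)
  refine ⟨?_, mul_pos hm (abs_pos.mpr (hP' y).ne)⟩
  rw [hg y, hderiv.deriv]
  calc m * |deriv P y| ≤ |deriv P y| * weightCoeff γ s μ (C * ε) A (P y) := by
        rw [mul_comm]
        exact mul_le_mul_of_nonneg_left (hgood _ (hPrange y)).2.2.le (abs_nonneg _)
    _ ≤ _ := mul_lower_le_neg_half hμ.le (hP' y).le hslope
        (hP''bd y)

/-- the weight function
`g(y) = −(1/2)·d/dy[f₂/f₁ − μ·d/dy(1/f₁)]` satisfies `g(y) ≥ C̄|P'(y)| > 0` along a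
small-amplitude monotone decreasing dispersive shock profile. -/
theorem statement_9 (γ μ k Pm C s : ℝ) (hγ : 1 ≤ γ) (hμ : 0 < μ) (hk : 0 < k)
    (hPm : 0 < Pm) (hC : 0 < C) (hs : 0 < s)
    (hs' : s < min (2 * Real.sqrt (γ * Pm ^ (γ - 1)))
      (((γ + 1) / 2) * Real.sqrt (γ * Pm ^ (γ - 1)))) :
    ∃ ε₀ > (0:ℝ), ∃ Cbar > (0:ℝ), ∀ ε : ℝ, 0 < ε → ε < ε₀ →
      ∀ A : ℝ, A = Real.sqrt (Pm * (Pm - ε)) * Real.sqrt ((Pm ^ γ - (Pm - ε) ^ γ) / ε) →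
      ∀ P : ℝ → ℝ, ContDiff ℝ 3 P →
        (∀ y : ℝ, P y ∈ Set.Icc (Pm - ε) Pm) →
        (∀ y : ℝ, deriv (deriv P) y =
          (2 / k ^ 2) *
            ((P y) ^ γ + (Pm * (Pm - ε) / P y) * (((Pm - ε) ^ γ - Pm ^ γ) / ((Pm - ε) - Pm))
              - ((Pm - ε) ^ (γ + 1) - Pm ^ (γ + 1)) / ((Pm - ε) - Pm))
          - (2 * s * μ / k ^ 2) * deriv P y + (deriv P y) ^ 2 / P y) →
        Filter.Tendsto P Filter.atBot (nhds Pm) →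
        Filter.Tendsto P Filter.atTop (nhds (Pm - ε)) →
        (∀ y : ℝ, deriv P y < 0) →
        (∀ y : ℝ, |deriv P y| ≤ C * ε ^ 2) →
        (∀ y : ℝ, |deriv (deriv P) y| ≤ C * ε * |deriv P y|) →
      ∀ f₁ f₂ : ℝ → ℝ,
        (∀ y : ℝ, f₁ y = (s - A / P y) ^ 2 - γ * (P y) ^ (γ - 1)) →
        (∀ y : ℝ, f₂ y = -s + 2 * A / P y) →
      ∀ g : ℝ → ℝ,
        (∀ y : ℝ, g y =
          -(1 / 2) * deriv (fun x => f₂ x / f₁ x - μ * deriv (fun t => 1 / f₁ t) x) y) →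
      ∀ y : ℝ, Cbar * |deriv P y| ≤ g y ∧ 0 < Cbar * |deriv P y| :=
  statement_9_general γ μ k Pm C s hγ hμ hPm hC hs hs'
end

section
/- Let γ > 1, P⁻ > 0 and s > 0. For ε ∈ (0, P⁻) set P⁺ = P⁻ − ε, A(ε) = √(P⁻P⁺)·√(((P⁻)^γ − (P⁺)^γ)/ε), J⁻ = sP⁻ − A(ε) and u⁻ = J⁻/P⁻. Then there exists ε₂ > 0 such that for every ε ∈ (0, ε₂): if |u⁻| < ((γ−1)/2)c_s(P⁻) then s < ((γ+1)/2)c_s(P⁻). -/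
lemma rpow_diff_le (a b γ : ℝ) (ha : 0 < a) (hb : 0 ≤ b) (hba : b ≤ a) (hγ : 1 ≤ γ) :
    a ^ γ - b ^ γ ≤ γ * a ^ (γ - 1) * (a - b) := by
  have hs : (-1 : ℝ) ≤ b / a - 1 := by
    have : 0 ≤ b / a := div_nonneg hb ha.le
    linarith
  have hB := one_add_mul_self_le_rpow_one_add hs hγ
  have h1 : (1 : ℝ) + (b / a - 1) = b / a := by ring
  rw [h1] at hB
  have hdiv : (b / a) ^ γ = b ^ γ / a ^ γ := Real.div_rpow hb ha.le γ
  rw [hdiv] at hB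
  have haγ : (0:ℝ) < a ^ γ := Real.rpow_pos_of_pos ha γ
  have hB' : (1 + γ * (b / a - 1)) * a ^ γ ≤ b ^ γ := by
    calc (1 + γ * (b / a - 1)) * a ^ γ ≤ (b ^ γ / a ^ γ) * a ^ γ := by
          exact mul_le_mul_of_nonneg_right hB haγ.le
      _ = b ^ γ := by field_simp
  have hrw : a ^ γ / a = a ^ (γ - 1) := by
    rw [Real.rpow_sub ha, Real.rpow_one]
  have key : (1 + γ * (b / a - 1)) * a ^ γ = a ^ γ - γ * a ^ (γ - 1) * (a - b) := by
    rw [← hrw]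
    field_simp
    ring
  rw [key] at hB'
  linarith

/-- for `γ > 1` and small amplitude, if `|u⁻| < ((γ−1)/2)c_s(P⁻)` then
`s < ((γ+1)/2)c_s(P⁻)`. -/
theorem statement_11 (γ Pm s : ℝ) (hγ : 1 < γ) (hPm : 0 < Pm) (hs : 0 < s) :
    ∃ ε₂ > (0:ℝ), ∀ ε : ℝ, 0 < ε → ε < ε₂ → ε < Pm →
      |(s * Pm - Real.sqrt (Pm * (Pm - ε)) * Real.sqrt ((Pm ^ γ - (Pm - ε) ^ γ) / ε)) / Pm|
          < ((γ - 1) / 2) * Real.sqrt (γ * Pm ^ (γ - 1)) →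
        s < ((γ + 1) / 2) * Real.sqrt (γ * Pm ^ (γ - 1)) := by
  refine ⟨Pm, hPm, fun ε hε _ hεPm habs => ?_⟩
  set c := Real.sqrt (γ * Pm ^ (γ - 1)) with hc
  have hcpos : 0 < c := Real.sqrt_pos.mpr
    (mul_pos (by linarith) (Real.rpow_pos_of_pos hPm _))
  have hb : 0 < Pm - ε := by linarith
  have hdiff : Pm ^ γ - (Pm - ε) ^ γ ≤ γ * Pm ^ (γ - 1) * ε := by
    have := rpow_diff_le Pm (Pm - ε) γ hPm hb.le (by linarith) hγ.le
    simpa using this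
  have hD0 : 0 ≤ (Pm ^ γ - (Pm - ε) ^ γ) / ε := by
    apply div_nonneg _ hε.le
    have := Real.rpow_le_rpow hb.le (by linarith : Pm - ε ≤ Pm) (by linarith : 0 ≤ γ)
    linarith
  set A := Real.sqrt (Pm * (Pm - ε)) * Real.sqrt ((Pm ^ γ - (Pm - ε) ^ γ) / ε) with hA
  have hAle : A ≤ Pm * c := by
    have hPc : Pm * c = Real.sqrt (Pm ^ 2 * (γ * Pm ^ (γ - 1))) := by
      rw [Real.sqrt_mul (sq_nonneg Pm), Real.sqrt_sq hPm.le, hc]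
    rw [hA, ← Real.sqrt_mul (by positivity), hPc]
    apply Real.sqrt_le_sqrt
    have hDle : (Pm ^ γ - (Pm - ε) ^ γ) / ε ≤ γ * Pm ^ (γ - 1) := by
      rw [div_le_iff₀ hε]
      linarith
    calc Pm * (Pm - ε) * ((Pm ^ γ - (Pm - ε) ^ γ) / ε)
        ≤ Pm * Pm * ((Pm ^ γ - (Pm - ε) ^ γ) / ε) := by
          apply mul_le_mul_of_nonneg_right _ hD0
          nlinarith
      _ ≤ Pm * Pm * (γ * Pm ^ (γ - 1)) := by
          apply mul_le_mul_of_nonneg_left hDle (by positivity)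
      _ = Pm ^ 2 * (γ * Pm ^ (γ - 1)) := by ring
  have h1 : (s * Pm - A) / Pm < ((γ - 1) / 2) * c := (abs_lt.mp habs).2
  have h2 : s * Pm - A < ((γ - 1) / 2) * c * Pm := by
    rwa [div_lt_iff₀ hPm] at h1
  nlinarith [mul_pos hcpos hPm]
end

section
/- Let γ ≥ 1, μ > 0, k > 0, s ∈ ℝ, A ∈ ℝ, and let P : ℝ → (0, ∞) be three times continuously differentiable with P(y) → P⁻ > 0, P'(y) → 0 and P''(y) → 0 as y → −∞. Set J = sP − A, J⁻ = sP⁻ − A and B = −sJ⁻ + (J⁻)²/P⁻ + (P⁻)^γ. If the pair (P, J) satisfies −sJ'(y) + d/dy[J(y)²/P(y) + P(y)^γ] = μJ''(y) + (k²/2)·d/dy[P(y)(log P(y))''] for all y ∈ ℝ, then P satisfies the second-order profile equation P''(y) = (2/k²)(P(y)^γ − (As + B) + A²/P(y)) − (2sμ/k²)P'(y) + P'(y)²/P(y) for all y ∈ ℝ. -/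
/-!
Substituting `J = sP − A`, the profile equation says that the inviscid flux `−sJ + J²/P + P^γ`
and the viscous–dispersive flux `μJ' + (k²/2) P (log P)''` have the same derivative. Their
difference is therefore constant, and letting `y → −∞` identifies the constant as `B`. Since
`P (log P)'' = P'' − P'²/P`, this first integral is the second-order profile equation solved
for `P''`.
-/

open Filter Topology

theorem mul_deriv_deriv_log_comp {P : ℝ → ℝ} (hP : Differentiable ℝ P)
    (hP' : Differentiable ℝ (deriv P)) (hne : ∀ y, P y ≠ 0) (t : ℝ) :
    P t * deriv (deriv (fun u => Real.log (P u))) t = deriv (deriv P) t - deriv P t ^ 2 / P t := by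
  have hlog : deriv (fun u => Real.log (P u)) = fun u => deriv P u / P u :=
    funext fun u => ((hP u).hasDerivAt.log (hne u)).deriv
  have hquot : HasDerivAt (fun u => deriv P u / P u)
      ((deriv (deriv P) t * P t - deriv P t * deriv P t) / P t ^ 2) t :=
    (hP' t).hasDerivAt.div (hP t).hasDerivAt (hne t)
  rw [hlog, hquot.deriv]
  field_simp [hne t]

theorem sub_eq_of_deriv_eq_of_tendsto_atBot {F H : ℝ → ℝ} {a b : ℝ}
    (hF : Differentiable ℝ F) (hH : Differentiable ℝ H) (hFH : ∀ y, deriv F y = deriv H y)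
    (hFa : Tendsto F atBot (𝓝 a)) (hHb : Tendsto H atBot (𝓝 b)) (y : ℝ) :
    F y - H y = a - b := by
  have hconst : ∀ z, (F - H) z = (F - H) y :=
    fun z => is_const_of_deriv_eq_zero (hF.sub hH)
      (fun x => by rw [deriv_sub (hF x) (hH x), hFH x, sub_self]) z y
  have hlim : Tendsto (F - H) atBot (𝓝 ((F - H) y)) :=
    tendsto_const_nhds.congr fun z => (hconst z).symm
  exact tendsto_nhds_unique hlim (hFa.sub hHb)

noncomputable section Flux

variable (s A γ μ k : ℝ) (P : ℝ → ℝ)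

def inviscidFlux (t : ℝ) : ℝ :=
  -s * (s * P t - A) + ((s * P t - A) ^ 2 / P t + P t ^ γ)

def viscousDispersiveFlux (t : ℝ) : ℝ :=
  μ * (s * deriv P t) + k ^ 2 / 2 * (deriv (deriv P) t - deriv P t ^ 2 / P t)

variable {s A γ μ k P}

theorem differentiable_inviscidFlux (hP : Differentiable ℝ P) (hne : ∀ y, P y ≠ 0) :
    Differentiable ℝ (inviscidFlux s A γ P) := fun y => by
  unfold inviscidFlux
  fun_prop (disch := exact hne y)

theorem differentiable_viscousDispersiveFlux (hP : Differentiable ℝ P)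
    (hP' : Differentiable ℝ (deriv P)) (hP'' : Differentiable ℝ (deriv (deriv P)))
    (hne : ∀ y, P y ≠ 0) :
    Differentiable ℝ (viscousDispersiveFlux s μ k P) := fun y => by
  unfold viscousDispersiveFlux
  fun_prop (disch := exact hne y)

theorem deriv_inviscidFlux (hP : Differentiable ℝ P) (hne : ∀ y, P y ≠ 0) (y : ℝ) :
    deriv (inviscidFlux s A γ P) y
      = -s * (s * deriv P y) + deriv (fun t => (s * P t - A) ^ 2 / P t + P t ^ γ) y := by
  unfold inviscidFlux
  rw [deriv_fun_add (by fun_prop) (by fun_prop (disch := exact hne y)), deriv_const_mul_field,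
    deriv_sub_const, deriv_const_mul_field]

theorem deriv_viscousDispersiveFlux (hP : Differentiable ℝ P)
    (hP' : Differentiable ℝ (deriv P)) (hP'' : Differentiable ℝ (deriv (deriv P)))
    (hne : ∀ y, P y ≠ 0) (y : ℝ) :
    deriv (viscousDispersiveFlux s μ k P) y = μ * (s * deriv (deriv P) y)
      + k ^ 2 / 2 * deriv (fun t => deriv (deriv P) t - deriv P t ^ 2 / P t) y := by
  unfold viscousDispersiveFlux
  rw [deriv_fun_add (by fun_prop) (by fun_prop (disch := exact hne y)), deriv_const_mul_field,
    deriv_const_mul_field, deriv_const_mul_field]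

theorem tendsto_inviscidFlux_atBot {Pm : ℝ} (hPm : Pm ≠ 0) (hlim : Tendsto P atBot (𝓝 Pm)) :
    Tendsto (inviscidFlux s A γ P) atBot
      (𝓝 (-s * (s * Pm - A) + (s * Pm - A) ^ 2 / Pm + Pm ^ γ)) := by
  have hJ := (hlim.const_mul s).sub_const A
  rw [add_assoc]
  exact (hJ.const_mul (-s)).add (((hJ.pow 2).div hlim hPm).add (hlim.rpow_const (Or.inl hPm)))

theorem tendsto_viscousDispersiveFlux_atBot {Pm : ℝ} (hPm : Pm ≠ 0)
    (hlim : Tendsto P atBot (𝓝 Pm)) (hlim' : Tendsto (deriv P) atBot (𝓝 0))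
    (hlim'' : Tendsto (deriv (deriv P)) atBot (𝓝 0)) :
    Tendsto (viscousDispersiveFlux s μ k P) atBot (𝓝 0) := by
  have h := ((hlim'.const_mul s).const_mul μ).add
    ((hlim''.sub ((hlim'.pow 2).div hlim hPm)).const_mul (k ^ 2 / 2))
  unfold viscousDispersiveFlux
  simpa using h

end Flux

theorem statement_14_general (γ μ k s A Pm : ℝ) (hk : 0 < k)
    (hPm : 0 < Pm)
    (P : ℝ → ℝ) (hP : ContDiff ℝ 3 P) (hpos : ∀ y : ℝ, 0 < P y)
    (hlim : Filter.Tendsto P Filter.atBot (nhds Pm))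
    (hlim' : Filter.Tendsto (deriv P) Filter.atBot (nhds 0))
    (hlim'' : Filter.Tendsto (deriv (deriv P)) Filter.atBot (nhds 0))
    (J : ℝ → ℝ) (hJ : ∀ y : ℝ, J y = s * P y - A)
    (B : ℝ) (hB : B = -s * (s * Pm - A) + (s * Pm - A) ^ 2 / Pm + Pm ^ γ)
    (hODE : ∀ y : ℝ,
      -s * deriv J y + deriv (fun t => (J t) ^ 2 / P t + (P t) ^ γ) y
        = μ * deriv (deriv J) y
          + (k ^ 2 / 2) * deriv (fun t => P t * deriv (deriv (fun u => Real.log (P u))) t) y) :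
    ∀ y : ℝ, deriv (deriv P) y =
      (2 / k ^ 2) * ((P y) ^ γ - (A * s + B) + A ^ 2 / P y)
        - (2 * s * μ / k ^ 2) * deriv P y + (deriv P y) ^ 2 / P y := by
  obtain rfl : J = fun y => s * P y - A := funext hJ
  have hC2 : ContDiff ℝ 2 (deriv P) := hP.deriv' (n := 2)
  have hP1 : Differentiable ℝ P := hP.differentiable (by norm_num)
  have hP2 : Differentiable ℝ (deriv P) := hC2.differentiable (by norm_num)
  have hP3 : Differentiable ℝ (deriv (deriv P)) := hC2.differentiable_deriv_two
  have hne : ∀ y, P y ≠ 0 := fun y => (hpos y).ne'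
  have hJ' : deriv (fun y => s * P y - A) = fun y => s * deriv P y :=
    funext fun y => by rw [deriv_sub_const, deriv_const_mul_field]
  have hflux :
      ∀ y, deriv (inviscidFlux s A γ P) y = deriv (viscousDispersiveFlux s μ k P) y := by
    intro y
    rw [deriv_inviscidFlux hP1 hne, deriv_viscousDispersiveFlux hP1 hP2 hP3 hne]
    simpa only [hJ', deriv_const_mul_field, mul_deriv_deriv_log_comp hP1 hP2 hne] using hODE y
  intro y
  have h := sub_eq_of_deriv_eq_of_tendsto_atBot (differentiable_inviscidFlux hP1 hne)
    (differentiable_viscousDispersiveFlux hP1 hP2 hP3 hne) hflux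
    (hB ▸ tendsto_inviscidFlux_atBot hPm.ne' hlim)
    (tendsto_viscousDispersiveFlux_atBot hPm.ne' hlim hlim' hlim'') y
  simp only [inviscidFlux, viscousDispersiveFlux, sub_zero] at h
  field_simp [hne y] at h
  field_simp [hne y, hk.ne']
  linear_combination (-1) * h

/-- a traveling-wave pair `(P, J)`, `J = sP − A`, solving the third-order
momentum profile equation and satisfying `P → P⁻ > 0`, `P' → 0`, `P'' → 0` at `−∞`,
satisfies the second-order profile equation
`P'' = (2/k²)(P^γ − (As + B) + A²/P) − (2sμ/k²)P' + (P')²/P`,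
with `B = −sJ⁻ + (J⁻)²/P⁻ + (P⁻)^γ`, `J⁻ = sP⁻ − A`. -/
theorem statement_14 (γ μ k s A Pm : ℝ) (hγ : 1 ≤ γ) (hμ : 0 < μ) (hk : 0 < k)
    (hPm : 0 < Pm)
    (P : ℝ → ℝ) (hP : ContDiff ℝ 3 P) (hpos : ∀ y : ℝ, 0 < P y)
    (hlim : Filter.Tendsto P Filter.atBot (nhds Pm))
    (hlim' : Filter.Tendsto (deriv P) Filter.atBot (nhds 0))
    (hlim'' : Filter.Tendsto (deriv (deriv P)) Filter.atBot (nhds 0))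
    (J : ℝ → ℝ) (hJ : ∀ y : ℝ, J y = s * P y - A)
    (B : ℝ) (hB : B = -s * (s * Pm - A) + (s * Pm - A) ^ 2 / Pm + Pm ^ γ)
    (hODE : ∀ y : ℝ,
      -s * deriv J y + deriv (fun t => (J t) ^ 2 / P t + (P t) ^ γ) y
        = μ * deriv (deriv J) y
          + (k ^ 2 / 2) * deriv (fun t => P t * deriv (deriv (fun u => Real.log (P u))) t) y) :
    ∀ y : ℝ, deriv (deriv P) y =
      (2 / k ^ 2) * ((P y) ^ γ - (A * s + B) + A ^ 2 / P y)
        - (2 * s * μ / k ^ 2) * deriv P y + (deriv P y) ^ 2 / P y :=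
  statement_14_general γ μ k s A Pm hk hPm P hP hpos hlim hlim' hlim'' J hJ B hB hODE
end

section
/- Let γ ≥ 1, μ > 0, k > 0, s ∈ ℝ, A ∈ ℝ, and let P : ℝ → (0, ∞) be a bounded C³ function with bounded first and second derivatives and with inf P > 0; set J = sP − A, f₁ = J²/P² − γP^{γ−1} and f₂ = s − 2J/P. Let λ ∈ ℂ with λ ≠ 0, and let ρ̃ : ℝ → ℂ be C³ with ρ̃, ρ̃', ρ̃'', ρ̃''' ∈ L²(ℝ) and m̃ : ℝ → ℂ be C² with m̃, m̃', m̃'' ∈ L²(ℝ), satisfying for all y ∈ ℝ the linearized eigenvalue equations sρ̃' − m̃' = λρ̃ and sm̃' + ((J²/P²)ρ̃)' − ((2J/P)m̃)' − γ(P^{γ−1}ρ̃)' + μm̃'' + (k²/2)ρ̃''' − 2k²((√P)'(ρ̃/√P)')' = λm̃. Define ρ = (sρ̃ − m̃)/λ and m = (f₁ρ̃ + f₂m̃ + μm̃' + (k²/2)ρ̃'' − 2k²(√P)'(ρ̃/√P)')/λ. Then ρ and m belong to L²(ℝ), ρ' = ρ̃ and m' = m̃ on ℝ, and (ρ, m)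 satisfies the integrated eigenvalue system: λρ = sρ' − m' and λm = f₁ρ' + f₂m' + μm'' + (k²/2)ρ''' − 2k²(√P)'(ρ'/√P)' on ℝ. -/
/-!
Integrating the eigenvalue equations once is possible because both are in conservation form:
the first reads `λρ̃ = (sρ̃ − m̃)'` and the second `λm̃ = Φ'` for the momentum flux `Φ`, so
`ρ = (sρ̃ − m̃)/λ` and `m = Φ/λ` are antiderivatives of `ρ̃` and `m̃` as soon as `λ ≠ 0`.
They lie in `L²` because every coefficient of `Φ` is a bounded function of the profile: `P`
ranges over a compact subset of `(0, ∞)`, and the capillarity term `(√P)'(ρ̃/√P)'` equals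
`w (ρ̃' − w ρ̃)` with `w = P'/(2P)` bounded.
-/

open MeasureTheory Set
open scoped ENNReal

lemma memLp_top_comp_of_pos_of_bounded {α : Type*} [TopologicalSpace α] [MeasurableSpace α]
    [OpensMeasurableSpace α] {μ : Measure α} {P : α → ℝ} {g : ℝ → ℝ} {δ M : ℝ}
    (hP : Continuous P) (hδ : 0 < δ) (hδP : ∀ y, δ ≤ P y) (hPM : ∀ y, P y ≤ M)
    (hg : ∀ p, 0 < p → ContinuousAt g p) :
    MemLp (fun y => g (P y)) ∞ μ := by
  have hgK : ContinuousOn g (Icc δ M) :=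
    continuousOn_of_forall_continuousAt fun p hp => hg p (hδ.trans_le hp.1)
  have hPK : ∀ y, P y ∈ Icc δ M := fun y => ⟨hδP y, hPM y⟩
  obtain ⟨C, hC⟩ := isCompact_Icc.exists_bound_of_continuousOn hgK
  exact memLp_top_of_bound (hgK.comp_continuous hP hPK).aestronglyMeasurable C
    (ae_of_all _ fun y => hC _ (hPK y))

lemma memLp_top_deriv_div_two_mul {μ : Measure ℝ} {P : ℝ → ℝ} {δ M : ℝ}
    (hP : ContDiff ℝ 1 P) (hδ : 0 < δ) (hδP : ∀ y, δ ≤ P y) (hM : ∀ y, |deriv P y| ≤ M) :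
    MemLp (fun y => deriv P y / (2 * P y)) ∞ μ := by
  have hPpos : ∀ y, 0 < P y := fun y => hδ.trans_le (hδP y)
  have hcont : Continuous (fun y => deriv P y / (2 * P y)) :=
    (hP.continuous_deriv le_rfl).div (continuous_const.mul hP.continuous)
      fun y => (mul_pos two_pos (hPpos y)).ne'
  refine memLp_top_of_bound hcont.aestronglyMeasurable (M / (2 * δ)) (ae_of_all _ fun y => ?_)
  rw [Real.norm_eq_abs, abs_div, abs_of_pos (mul_pos two_pos (hPpos y))]
  exact div_le_div₀ ((abs_nonneg _).trans (hM y)) (hM y) (mul_pos two_pos hδ)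
    (mul_le_mul_of_nonneg_left (hδP y) zero_le_two)

lemma deriv_eq_of_eq_div {g h f : ℝ → ℂ} {c : ℂ} (hc : c ≠ 0) (hg : ∀ y, g y = h y / c)
    (hh : ∀ y, deriv h y = c * f y) (y : ℝ) : deriv g y = f y := by
  rw [show g = fun y => h y / c from funext hg, deriv_div_const, hh, mul_div_cancel_left₀ _ hc]

section Capillarity

variable {P : ℝ → ℝ} {f : ℝ → ℂ}

lemma deriv_sqrt_mul_deriv_div_sqrt {y : ℝ}
    (hP : DifferentiableAt ℝ P y) (hPy : 0 < P y) (hf : DifferentiableAt ℝ f y) :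
    ((deriv (fun u => √(P u)) y : ℝ) : ℂ) * deriv (fun u => f u / ((√(P u) : ℝ) : ℂ)) y
      = ((deriv P y / (2 * P y) : ℝ) : ℂ)
          * (deriv f y - ((deriv P y / (2 * P y) : ℝ) : ℂ) * f y) := by
  have hsqrt : HasDerivAt (fun u => ((√(P u) : ℝ) : ℂ))
      ((deriv P y / (2 * √(P y)) : ℝ) : ℂ) y :=
    (deriv_sqrt hP hPy.ne' ▸ (hP.sqrt hPy.ne').hasDerivAt).ofReal_comp
  have hsC : ((√(P y) : ℝ) : ℂ) ≠ 0 := by exact_mod_cast (Real.sqrt_pos.mpr hPy).ne'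
  have hsq : ((√(P y) : ℝ) : ℂ) ^ 2 = (P y : ℂ) := by exact_mod_cast Real.sq_sqrt hPy.le
  have hPC : (P y : ℂ) ≠ 0 := by exact_mod_cast hPy.ne'
  rw [deriv_sqrt hP hPy.ne', deriv_fun_div hf hsqrt.differentiableAt hsC, hsqrt.deriv, hsq]
  push_cast
  field_simp
  rw [← hsq]
  ring

lemma differentiable_deriv_sqrt_mul_deriv_div_sqrt (hP : ContDiff ℝ 2 P)
    (hPpos : ∀ y, 0 < P y) (hf : ContDiff ℝ 2 f) :
    Differentiable ℝ (fun y => ((deriv (fun u => √(P u)) y : ℝ) : ℂ)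
      * deriv (fun u => f u / ((√(P u) : ℝ) : ℂ)) y) := by
  have hPd : Differentiable ℝ P := hP.differentiable (by norm_num)
  have hPd' : Differentiable ℝ (deriv P) := hP.differentiable_deriv_two
  have hfd : Differentiable ℝ f := hf.differentiable (by norm_num)
  have hfd' : Differentiable ℝ (deriv f) := hf.differentiable_deriv_two
  rw [funext fun y => deriv_sqrt_mul_deriv_div_sqrt (hPd y) (hPpos y) (hfd y)]
  fun_prop (disch := exact fun y => mul_ne_zero two_ne_zero (hPpos y).ne')

lemma memLp_deriv_sqrt_mul_deriv_div_sqrt {μ : Measure ℝ} {p : ℝ≥0∞} {δ M : ℝ}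
    (hP : ContDiff ℝ 1 P) (hδ : 0 < δ) (hδP : ∀ y, δ ≤ P y) (hM : ∀ y, |deriv P y| ≤ M)
    (hfd : Differentiable ℝ f) (hf : MemLp f p μ) (hf' : MemLp (deriv f) p μ) :
    MemLp (fun y => ((deriv (fun u => √(P u)) y : ℝ) : ℂ)
      * deriv (fun u => f u / ((√(P u) : ℝ) : ℂ)) y) p μ := by
  have hPd : Differentiable ℝ P := hP.differentiable one_ne_zero
  rw [funext fun y => deriv_sqrt_mul_deriv_div_sqrt (hPd y) (hδ.trans_le (hδP y)) (hfd y)]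
  have hw := (memLp_top_deriv_div_two_mul (μ := μ) hP hδ hδP hM).ofReal (K := ℂ)
  exact (hf'.sub (hf.mul' hw)).mul' hw

end Capillarity

/-- The flux `Φ` of the second linearized equation, `λm̃ = Φ'`, written with its terms in the
order in which their derivatives appear in that equation. -/
noncomputable def momentumFlux (γ μ k s : ℝ) (P J : ℝ → ℝ) (ρt mt : ℝ → ℂ) (y : ℝ) : ℂ :=
  (s : ℂ) * mt y + (((J y) ^ 2 / (P y) ^ 2 : ℝ) : ℂ) * ρt y
    - ((2 * J y / P y : ℝ) : ℂ) * mt y - (γ : ℂ) * ((((P y) ^ (γ - 1) : ℝ) : ℂ) * ρt y)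
    + (μ : ℂ) * deriv mt y + ((k ^ 2 / 2 : ℝ) : ℂ) * deriv (deriv ρt) y
    - 2 * (k ^ 2 : ℂ) * (((deriv (fun u => √(P u)) y : ℝ) : ℂ)
        * deriv (fun u => ρt u / ((√(P u) : ℝ) : ℂ)) y)

section MomentumFlux

variable {γ μ k s : ℝ} {P J : ℝ → ℝ} {ρt mt : ℝ → ℂ}

lemma hasDerivAt_momentumFlux (hP : ContDiff ℝ 2 P) (hPpos : ∀ y, 0 < P y)
    (hJ : Differentiable ℝ J) (hρt : ContDiff ℝ 3 ρt) (hmt : ContDiff ℝ 2 mt) (y : ℝ) :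
    HasDerivAt (momentumFlux γ μ k s P J ρt mt)
      ((s : ℂ) * deriv mt y
        + deriv (fun t => (((J t) ^ 2 / (P t) ^ 2 : ℝ) : ℂ) * ρt t) y
        - deriv (fun t => ((2 * J t / P t : ℝ) : ℂ) * mt t) y
        - (γ : ℂ) * deriv (fun t => (((P t) ^ (γ - 1) : ℝ) : ℂ) * ρt t) y
        + (μ : ℂ) * deriv (deriv mt) y
        + ((k ^ 2 / 2 : ℝ) : ℂ) * deriv (deriv (deriv ρt)) y
        - 2 * (k ^ 2 : ℂ) * deriv (fun t =>
            ((deriv (fun u => √(P u)) t : ℝ) : ℂ)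
              * deriv (fun u => ρt u / ((√(P u) : ℝ) : ℂ)) t) y) y := by
  have hPd : Differentiable ℝ P := hP.differentiable (by norm_num)
  have hPne : ∀ y, P y ≠ 0 := fun y => (hPpos y).ne'
  have hρtd : Differentiable ℝ ρt := hρt.differentiable (by norm_num)
  have hρtd'' : Differentiable ℝ (deriv (deriv ρt)) :=
    (hρt.deriv' (n := 2)).differentiable_deriv_two
  have hmtd : Differentiable ℝ mt := hmt.differentiable (by norm_num)
  have hd₁ : Differentiable ℝ (fun t => (((J t) ^ 2 / (P t) ^ 2 : ℝ) : ℂ) * ρt t) := by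
    fun_prop (disch := exact fun y => pow_ne_zero 2 (hPne y))
  have hd₂ : Differentiable ℝ (fun t => ((2 * J t / P t : ℝ) : ℂ) * mt t) := by
    fun_prop (disch := exact hPne)
  have hd₃ : Differentiable ℝ (fun t => (((P t) ^ (γ - 1) : ℝ) : ℂ) * ρt t) := by
    fun_prop (disch := exact fun y => Or.inl (hPne y))
  have hcap := differentiable_deriv_sqrt_mul_deriv_div_sqrt hP hPpos (hρt.of_le (by norm_num))
  exact (((((((hmtd y).hasDerivAt.const_mul (s : ℂ)).add (hd₁ y).hasDerivAt).sub
    (hd₂ y).hasDerivAt).sub ((hd₃ y).hasDerivAt.const_mul (γ : ℂ))).add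
    ((hmt.differentiable_deriv_two y).hasDerivAt.const_mul (μ : ℂ))).add
    ((hρtd'' y).hasDerivAt.const_mul _)).sub ((hcap y).hasDerivAt.const_mul _)

lemma memLp_momentumFlux {A δ M M' : ℝ} (hP : ContDiff ℝ 1 P) (hδ : 0 < δ)
    (hδP : ∀ y, δ ≤ P y) (hPM : ∀ y, P y ≤ M) (hP' : ∀ y, |deriv P y| ≤ M')
    (hJ : ∀ y, J y = s * P y - A) (hρtd : Differentiable ℝ ρt)
    (hρt : MemLp ρt 2 volume) (hρt' : MemLp (deriv ρt) 2 volume)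
    (hρt'' : MemLp (deriv (deriv ρt)) 2 volume)
    (hmt : MemLp mt 2 volume) (hmt' : MemLp (deriv mt) 2 volume) :
    MemLp (momentumFlux γ μ k s P J ρt mt) 2 volume := by
  have hcoeff : ∀ g : ℝ → ℝ, (∀ p, 0 < p → ContinuousAt g p) →
      MemLp (fun y => ((g (P y) : ℝ) : ℂ)) ∞ volume := fun g hg =>
    (memLp_top_comp_of_pos_of_bounded hP.continuous hδ hδP hPM hg).ofReal
  have h₁ := hcoeff (fun p => (s * p - A) ^ 2 / p ^ 2) fun p hp => by
    fun_prop (disch := exact pow_ne_zero 2 hp.ne')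
  have h₂ := hcoeff (fun p => 2 * (s * p - A) / p) fun p hp => by
    fun_prop (disch := exact hp.ne')
  have h₃ := hcoeff (fun p => p ^ (γ - 1)) fun p hp => by
    fun_prop (disch := exact Or.inl hp.ne')
  simp only [← hJ] at h₁ h₂
  exact (((((((hmt.const_mul _).add (hρt.mul' h₁)).sub (hmt.mul' h₂)).sub
    ((hρt.mul' h₃).const_mul _)).add (hmt'.const_mul _)).add (hρt''.const_mul _)).sub
    ((memLp_deriv_sqrt_mul_deriv_div_sqrt hP hδ hδP hP' hρtd hρt hρt').const_mul _))

end MomentumFlux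

theorem statement_16_general (γ μ k s A : ℝ)
    (P : ℝ → ℝ) (hP : ContDiff ℝ 3 P)
    (hPb : ∃ M : ℝ, ∀ y : ℝ, |P y| ≤ M)
    (hPb1 : ∃ M : ℝ, ∀ y : ℝ, |deriv P y| ≤ M)
    (hPinf : ∃ δ > (0:ℝ), ∀ y : ℝ, δ ≤ P y)
    (J f₁ f₂ : ℝ → ℝ)
    (hJ : ∀ y : ℝ, J y = s * P y - A)
    (hf₁ : ∀ y : ℝ, f₁ y = (J y) ^ 2 / (P y) ^ 2 - γ * (P y) ^ (γ - 1))
    (hf₂ : ∀ y : ℝ, f₂ y = s - 2 * J y / P y)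
    (lam : ℂ) (hlam : lam ≠ 0)
    (ρt mt : ℝ → ℂ) (hρt : ContDiff ℝ 3 ρt) (hmt : ContDiff ℝ 2 mt)
    (hρtL2 : MemLp ρt 2 volume) (hρt1L2 : MemLp (deriv ρt) 2 volume)
    (hρt2L2 : MemLp (deriv (deriv ρt)) 2 volume)
    (hmtL2 : MemLp mt 2 volume) (hmt1L2 : MemLp (deriv mt) 2 volume)
    (heq1 : ∀ y : ℝ, (s : ℂ) * deriv ρt y - deriv mt y = lam * ρt y)
    (heq2 : ∀ y : ℝ,
      (s : ℂ) * deriv mt y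
        + deriv (fun t => (((J t) ^ 2 / (P t) ^ 2 : ℝ) : ℂ) * ρt t) y
        - deriv (fun t => ((2 * J t / P t : ℝ) : ℂ) * mt t) y
        - (γ : ℂ) * deriv (fun t => (((P t) ^ (γ - 1) : ℝ) : ℂ) * ρt t) y
        + (μ : ℂ) * deriv (deriv mt) y
        + ((k ^ 2 / 2 : ℝ) : ℂ) * deriv (deriv (deriv ρt)) y
        - 2 * (k ^ 2 : ℂ) * deriv (fun t =>
            ((deriv (fun u => Real.sqrt (P u)) t : ℝ) : ℂ)
              * deriv (fun u => ρt u / ((Real.sqrt (P u) : ℝ) : ℂ)) t) y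
      = lam * mt y)
    (ρ m : ℝ → ℂ)
    (hρ : ∀ y : ℝ, ρ y = ((s : ℂ) * ρt y - mt y) / lam)
    (hm : ∀ y : ℝ, m y =
      (((f₁ y : ℝ) : ℂ) * ρt y + ((f₂ y : ℝ) : ℂ) * mt y + (μ : ℂ) * deriv mt y
        + ((k ^ 2 / 2 : ℝ) : ℂ) * deriv (deriv ρt) y
        - 2 * (k ^ 2 : ℂ) * ((deriv (fun u => Real.sqrt (P u)) y : ℝ) : ℂ)
            * deriv (fun u => ρt u / ((Real.sqrt (P u) : ℝ) : ℂ)) y) / lam) :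
    MemLp ρ 2 volume ∧ MemLp m 2 volume ∧
    (∀ y : ℝ, deriv ρ y = ρt y) ∧ (∀ y : ℝ, deriv m y = mt y) ∧
    (∀ y : ℝ, lam * ρ y = (s : ℂ) * deriv ρ y - deriv m y) ∧
    (∀ y : ℝ, lam * m y =
      ((f₁ y : ℝ) : ℂ) * deriv ρ y + ((f₂ y : ℝ) : ℂ) * deriv m y
        + (μ : ℂ) * deriv (deriv m) y
        + ((k ^ 2 / 2 : ℝ) : ℂ) * deriv (deriv (deriv ρ)) y
        - 2 * (k ^ 2 : ℂ) * ((deriv (fun u => Real.sqrt (P u)) y : ℝ) : ℂ)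
            * deriv (fun u => deriv ρ u / ((Real.sqrt (P u) : ℝ) : ℂ)) y) := by
  obtain ⟨MP, hMP⟩ := hPb
  obtain ⟨M1, hM1⟩ := hPb1
  obtain ⟨δ, hδ, hδP⟩ := hPinf
  have hPpos : ∀ y, 0 < P y := fun y => hδ.trans_le (hδP y)
  have hρtd : Differentiable ℝ ρt := hρt.differentiable (by norm_num)
  have hmtd : Differentiable ℝ mt := hmt.differentiable (by norm_num)
  have hm_flux : ∀ y, m y = momentumFlux γ μ k s P J ρt mt y / lam := fun y => by
    rw [hm y, hf₁ y, hf₂ y, momentumFlux]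
    push_cast
    ring
  have hdρ : ∀ y, deriv ρ y = ρt y := deriv_eq_of_eq_div hlam hρ fun y => by
    rw [deriv_fun_sub ((hρtd y).const_mul _) (hmtd y), deriv_const_mul _ (hρtd y), heq1]
  have hdm : ∀ y, deriv m y = mt y := deriv_eq_of_eq_div hlam hm_flux fun y =>
    (hasDerivAt_momentumFlux (hP.of_le (by norm_num)) hPpos
      (by rw [funext hJ]; exact ((hP.differentiable (by norm_num)).const_mul s).sub_const A)
      hρt hmt y).deriv.trans (heq2 y)
  refine ⟨?_, ?_, hdρ, hdm, fun y => ?_, fun y => ?_⟩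
  · rw [funext fun y => (hρ y).trans (div_eq_inv_mul _ _)]
    exact ((hρtL2.const_mul _).sub hmtL2).const_mul _
  · rw [funext fun y => (hm_flux y).trans (div_eq_inv_mul _ _)]
    exact (memLp_momentumFlux (hP.of_le (by norm_num)) hδ hδP
      (fun y => (le_abs_self _).trans (hMP y)) hM1 hJ hρtd hρtL2 hρt1L2 hρt2L2
      hmtL2 hmt1L2).const_mul _
  · rw [hdρ y, hdm y, hρ y]
    field_simp
  · rw [funext hdρ, funext hdm, hm y, mul_div_cancel₀ _ hlam]

/-- passage to integrated variables. If `(ρ̃, m̃)` is an `L²` eigenfunction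
of the linearized operator with eigenvalue `λ ≠ 0`, then the integrated variables
`ρ = (sρ̃ − m̃)/λ` and `m = (f₁ρ̃ + f₂m̃ + μm̃' + (k²/2)ρ̃'' − 2k²(√P)'(ρ̃/√P)')/λ`
are in `L²`, satisfy `ρ' = ρ̃`, `m' = m̃`, and solve the integrated eigenvalue system. -/
theorem statement_16 (γ μ k s A : ℝ) (hγ : 1 ≤ γ) (hμ : 0 < μ) (hk : 0 < k)
    (P : ℝ → ℝ) (hP : ContDiff ℝ 3 P)
    (hPb : ∃ M : ℝ, ∀ y : ℝ, |P y| ≤ M)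
    (hPb1 : ∃ M : ℝ, ∀ y : ℝ, |deriv P y| ≤ M)
    (hPb2 : ∃ M : ℝ, ∀ y : ℝ, |deriv (deriv P) y| ≤ M)
    (hPinf : ∃ δ > (0:ℝ), ∀ y : ℝ, δ ≤ P y)
    (J f₁ f₂ : ℝ → ℝ)
    (hJ : ∀ y : ℝ, J y = s * P y - A)
    (hf₁ : ∀ y : ℝ, f₁ y = (J y) ^ 2 / (P y) ^ 2 - γ * (P y) ^ (γ - 1))
    (hf₂ : ∀ y : ℝ, f₂ y = s - 2 * J y / P y)
    (lam : ℂ) (hlam : lam ≠ 0)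
    (ρt mt : ℝ → ℂ) (hρt : ContDiff ℝ 3 ρt) (hmt : ContDiff ℝ 2 mt)
    (hρtL2 : MemLp ρt 2 volume) (hρt1L2 : MemLp (deriv ρt) 2 volume)
    (hρt2L2 : MemLp (deriv (deriv ρt)) 2 volume)
    (hρt3L2 : MemLp (deriv (deriv (deriv ρt))) 2 volume)
    (hmtL2 : MemLp mt 2 volume) (hmt1L2 : MemLp (deriv mt) 2 volume)
    (hmt2L2 : MemLp (deriv (deriv mt)) 2 volume)
    (heq1 : ∀ y : ℝ, (s : ℂ) * deriv ρt y - deriv mt y = lam * ρt y)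
    (heq2 : ∀ y : ℝ,
      (s : ℂ) * deriv mt y
        + deriv (fun t => (((J t) ^ 2 / (P t) ^ 2 : ℝ) : ℂ) * ρt t) y
        - deriv (fun t => ((2 * J t / P t : ℝ) : ℂ) * mt t) y
        - (γ : ℂ) * deriv (fun t => (((P t) ^ (γ - 1) : ℝ) : ℂ) * ρt t) y
        + (μ : ℂ) * deriv (deriv mt) y
        + ((k ^ 2 / 2 : ℝ) : ℂ) * deriv (deriv (deriv ρt)) y
        - 2 * (k ^ 2 : ℂ) * deriv (fun t =>
            ((deriv (fun u => Real.sqrt (P u)) t : ℝ) : ℂ)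
              * deriv (fun u => ρt u / ((Real.sqrt (P u) : ℝ) : ℂ)) t) y
      = lam * mt y)
    (ρ m : ℝ → ℂ)
    (hρ : ∀ y : ℝ, ρ y = ((s : ℂ) * ρt y - mt y) / lam)
    (hm : ∀ y : ℝ, m y =
      (((f₁ y : ℝ) : ℂ) * ρt y + ((f₂ y : ℝ) : ℂ) * mt y + (μ : ℂ) * deriv mt y
        + ((k ^ 2 / 2 : ℝ) : ℂ) * deriv (deriv ρt) y
        - 2 * (k ^ 2 : ℂ) * ((deriv (fun u => Real.sqrt (P u)) y : ℝ) : ℂ)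
            * deriv (fun u => ρt u / ((Real.sqrt (P u) : ℝ) : ℂ)) y) / lam) :
    MemLp ρ 2 volume ∧ MemLp m 2 volume ∧
    (∀ y : ℝ, deriv ρ y = ρt y) ∧ (∀ y : ℝ, deriv m y = mt y) ∧
    (∀ y : ℝ, lam * ρ y = (s : ℂ) * deriv ρ y - deriv m y) ∧
    (∀ y : ℝ, lam * m y =
      ((f₁ y : ℝ) : ℂ) * deriv ρ y + ((f₂ y : ℝ) : ℂ) * deriv m y
        + (μ : ℂ) * deriv (deriv m) y
        + ((k ^ 2 / 2 : ℝ) : ℂ) * deriv (deriv (deriv ρ)) y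
        - 2 * (k ^ 2 : ℂ) * ((deriv (fun u => Real.sqrt (P u)) y : ℝ) : ℂ)
            * deriv (fun u => deriv ρ u / ((Real.sqrt (P u) : ℝ) : ℂ)) y) :=
  statement_16_general γ μ k s A P hP hPb hPb1 hPinf J f₁ f₂ hJ hf₁ hf₂ lam hlam ρt mt hρt hmt hρtL2
    hρt1L2 hρt2L2 hmtL2 hmt1L2 heq1 heq2 ρ m hρ hm
end
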